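/- arXiv:2605.20572 — 10 statements merged into one kernel-verified Lean document; each statement's English description precedes it below -/
import Mathlib

section
/- Let p be a sampling design on subsets of {1,…,N} with first-order inclusion probabilities π_i > 0 for all i, and let δ be any design-unbiased estimator of the population total over the rectangle Θ = ∏_{i=1}^N [a_i,b_i] with r_i = (b_i−a_i)/2 > 0. Then the worst-case risk satisfies sup_{y∈Θ} E_p[(δ_S(y_S) − Σ_{i=1}^N y_i)²] ≥ Σ_{i=1}^N r_i² (1−π_i)/π_i. -/
namespace RiskAux

noncomputable def sg (x : Bool) : ℝ := if x then 1 else -1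

lemma sg_not (x : Bool) : sg (!x) = - sg x := by cases x <;> simp [sg]

lemma sg_mul_self (x : Bool) : sg x * sg x = 1 := by cases x <;> norm_num [sg]

lemma sum_flip {N : ℕ} (i : Fin N) (F : (Fin N → Bool) → ℝ)
    (hF : ∀ ε b, F (Function.update ε i b) = F ε) :
    ∑ ε : Fin N → Bool, sg (ε i) * F ε = 0 := by
  classical
  refine Finset.sum_involution (fun ε _ => Function.update ε i (!(ε i))) ?_ ?_
    (fun _ _ => Finset.mem_univ _) ?_
  · intro ε _
    simp only [hF, Function.update_self, sg_not]
    ring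
  · intro ε _ _ h
    have := congrFun h i
    simp only [Function.update_self] at this
    exact (Bool.not_ne_self _) this
  · intro ε _
    simp [Function.update_idem, Function.update_self, Bool.not_not, Function.update_eq_self]

lemma sum_const_eps {N : ℕ} (c : ℝ) : ∑ _ε : Fin N → Bool, c = 2 ^ N * c := by
  rw [Finset.sum_const, Finset.card_univ]
  simp [nsmul_eq_mul]

lemma sum_sg_mul {N : ℕ} (i j : Fin N) :
    ∑ ε : Fin N → Bool, sg (ε i) * sg (ε j) = if i = j then (2 : ℝ) ^ N else 0 := by
  by_cases h : i = j
  · subst h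
    rw [if_pos rfl]
    calc ∑ ε : Fin N → Bool, sg (ε i) * sg (ε i) = ∑ _ε : Fin N → Bool, (1 : ℝ) := by
          simp [sg_mul_self]
      _ = 2 ^ N * 1 := sum_const_eps 1
      _ = 2 ^ N := by ring
  · rw [if_neg h]
    exact sum_flip i (fun ε => sg (ε j))
      (fun ε b => by simp only [Function.update_of_ne (Ne.symm h)])

variable {N : ℕ}

noncomputable def Y (a b r : Fin N → ℝ) (ε : Fin N → Bool) : Fin N → ℝ :=
  fun i => (a i + b i) / 2 + r i * sg (ε i)

noncomputable def H (a b r : Fin N → ℝ) (δ : Finset (Fin N) → (Fin N → ℝ) → ℝ)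
    (s : Finset (Fin N)) (ε : Fin N → Bool) : ℝ :=
  δ s (Y a b r ε) - (∑ i ∈ s, Y a b r ε i) - ∑ i ∈ sᶜ, (a i + b i) / 2

noncomputable def G (r : Fin N → ℝ) (s : Finset (Fin N)) (ε : Fin N → Bool) : ℝ :=
  -∑ i ∈ sᶜ, r i * sg (ε i)

noncomputable def W (i : Fin N) (s : Finset (Fin N)) (ε : Fin N → Bool) : ℝ :=
  if i ∈ s then sg (ε i) else 0

lemma Ymem (a b r : Fin N → ℝ) (hab : ∀ i, a i ≤ b i) (hr : ∀ i, r i = (b i - a i) / 2)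
    (ε : Fin N → Bool) (i : Fin N) : Y a b r ε i ∈ Set.Icc (a i) (b i) := by
  have h1 := hab i
  have h2 := hr i
  rw [Set.mem_Icc]
  cases hb : ε i <;> simp [Y, sg, hb] <;> constructor <;> nlinarith

lemma Hflip (a b r : Fin N → ℝ) (δ : Finset (Fin N) → (Fin N → ℝ) → ℝ)
    (hloc : ∀ s (y y' : Fin N → ℝ), (∀ i ∈ s, y i = y' i) → δ s y = δ s y')
    (s : Finset (Fin N)) (i : Fin N) (his : i ∉ s) (ε : Fin N → Bool) (c : Bool) :
    H a b r δ s (Function.update ε i c) = H a b r δ s ε := by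
  have hYs : ∀ j ∈ s, Y a b r (Function.update ε i c) j = Y a b r ε j := by
    intro j hj
    have hji : j ≠ i := fun h => his (h ▸ hj)
    simp only [Y, Function.update_of_ne hji]
  unfold H
  rw [hloc s _ _ hYs, Finset.sum_congr rfl hYs]

lemma Usplit (a b r : Fin N → ℝ) (δ : Finset (Fin N) → (Fin N → ℝ) → ℝ)
    (s : Finset (Fin N)) (ε : Fin N → Bool) :
    δ s (Y a b r ε) - ∑ i, Y a b r ε i = H a b r δ s ε + G r s ε := by
  unfold H G
  rw [← Finset.sum_add_sum_compl s (Y a b r ε)]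
  have h : ∑ i ∈ sᶜ, Y a b r ε i
      = (∑ i ∈ sᶜ, (a i + b i) / 2) + ∑ i ∈ sᶜ, r i * sg (ε i) := by
    rw [← Finset.sum_add_distrib]
    rfl
  rw [h]; ring

lemma swap1 (p : Finset (Fin N) → ℝ) (π : Fin N → ℝ)
    (hπ : ∀ i, π i = ∑ s : Finset (Fin N), if i ∈ s then p s else 0)
    (f : Fin N → ℝ) :
    ∑ s : Finset (Fin N), p s * ∑ j ∈ s, f j = ∑ j, π j * f j := by
  classical
  have h1 : ∀ s : Finset (Fin N),
      p s * ∑ j ∈ s, f j = ∑ j : Fin N, (if j ∈ s then p s else 0) * f j := by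
    intro s
    calc p s * ∑ j ∈ s, f j = ∑ j ∈ s, p s * f j := Finset.mul_sum _ _ _
      _ = ∑ j ∈ Finset.univ ∩ s, p s * f j := by rw [Finset.univ_inter]
      _ = ∑ j : Fin N, if j ∈ s then p s * f j else 0 :=
          (Finset.sum_ite_mem _ _ _).symm
      _ = ∑ j : Fin N, (if j ∈ s then p s else 0) * f j := by
          refine Finset.sum_congr rfl fun j _ => ?_
          by_cases h : j ∈ s <;> simp [h]
  simp_rw [h1]
  rw [Finset.sum_comm]
  refine Finset.sum_congr rfl fun j _ => ?_
  rw [hπ j, Finset.sum_mul]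

lemma swap2 (p : Finset (Fin N) → ℝ) (π : Fin N → ℝ)
    (hπ : ∀ i, π i = ∑ s : Finset (Fin N), if i ∈ s then p s else 0)
    (hp1 : ∑ s : Finset (Fin N), p s = 1)
    (f : Fin N → ℝ) :
    ∑ s : Finset (Fin N), p s * ∑ j ∈ sᶜ, f j = ∑ j, (1 - π j) * f j := by
  classical
  have h1 : ∀ s : Finset (Fin N), ∑ j ∈ sᶜ, f j = (∑ j, f j) - ∑ j ∈ s, f j := by
    intro s
    rw [eq_sub_iff_add_eq, add_comm]
    exact Finset.sum_add_sum_compl s f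
  simp_rw [h1, mul_sub]
  rw [Finset.sum_sub_distrib, ← Finset.sum_mul, hp1, one_mul, swap1 p π hπ f,
    ← Finset.sum_sub_distrib]
  exact Finset.sum_congr rfl fun j _ => by ring

end RiskAux

/-- Theorem 1: risk lower bound for unbiased estimators.
For any sampling design `p` on subsets of `{1,…,N}` with first-order inclusion
probabilities `π i > 0` and any design-unbiased estimator `δ` of the total over
the rectangle `Θ = ∏ [a i, b i]` (with radii `r i = (b i - a i)/2 > 0`), every
upper bound `M` of the risk over `Θ` satisfies `∑ i, r i ^ 2 * (1 - π i) / π i ≤ M`;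
i.e. the worst-case risk is at least `∑ i, r i ^ 2 * (1 - π i) / π i`. -/
theorem risk_lower_bound
    (N : ℕ) (a b : Fin N → ℝ) (hab : ∀ i, a i ≤ b i)
    (r : Fin N → ℝ) (hr : ∀ i, r i = (b i - a i) / 2) (hrpos : ∀ i, 0 < r i)
    (p : Finset (Fin N) → ℝ) (hp0 : ∀ s, 0 ≤ p s)
    (hp1 : ∑ s : Finset (Fin N), p s = 1)
    (π : Fin N → ℝ)
    (hπ : ∀ i, π i = ∑ s : Finset (Fin N), if i ∈ s then p s else 0)
    (hπpos : ∀ i, 0 < π i)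
    (δ : Finset (Fin N) → (Fin N → ℝ) → ℝ)
    (hloc : ∀ s (y y' : Fin N → ℝ), (∀ i ∈ s, y i = y' i) → δ s y = δ s y')
    (hunb : ∀ y : Fin N → ℝ, (∀ i, y i ∈ Set.Icc (a i) (b i)) →
      ∑ s : Finset (Fin N), p s * δ s y = ∑ i, y i)
    (M : ℝ)
    (hM : ∀ y : Fin N → ℝ, (∀ i, y i ∈ Set.Icc (a i) (b i)) →
      ∑ s : Finset (Fin N), p s * (δ s y - ∑ i, y i) ^ 2 ≤ M) :
    ∑ i, r i ^ 2 * ((1 - π i) / π i) ≤ M := by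
  classical
  set Yf := RiskAux.Y a b r with hYf
  set Hf := RiskAux.H a b r δ with hHf
  set Gf := RiskAux.G r with hGf
  set Wf := @RiskAux.W N with hWf
  have hmem : ∀ ε : Fin N → Bool, ∀ i, Yf ε i ∈ Set.Icc (a i) (b i) := fun ε i => by
    rw [hYf]; exact RiskAux.Ymem a b r hab hr ε i
  have hflip : ∀ s : Finset (Fin N), ∀ i ∉ s, ∀ (ε : Fin N → Bool) (c : Bool),
      Hf s (Function.update ε i c) = Hf s ε := fun s i his ε c => by
    rw [hHf]; exact RiskAux.Hflip a b r δ hloc s i his ε c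
  -- the constraint coming from unbiasedness
  have hconstraint : ∀ ε : Fin N → Bool,
      ∑ s : Finset (Fin N), p s * Hf s ε
        = ∑ j, (1 - π j) * (r j * RiskAux.sg (ε j)) := by
    intro ε
    have h1 : ∑ s : Finset (Fin N), p s * δ s (Yf ε) = ∑ i, Yf ε i :=
      hunb (Yf ε) (hmem ε)
    have e : ∀ s : Finset (Fin N), p s * Hf s ε
        = p s * δ s (Yf ε) - p s * ∑ i ∈ s, Yf ε i
          - p s * ∑ i ∈ sᶜ, (a i + b i) / 2 := by
      intro s
      rw [hHf]; simp only [RiskAux.H]; rw [← hYf]; ring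
    simp_rw [e]
    rw [Finset.sum_sub_distrib, Finset.sum_sub_distrib, h1,
      RiskAux.swap1 p π hπ (Yf ε),
      RiskAux.swap2 p π hπ hp1 (fun i => (a i + b i) / 2),
      ← Finset.sum_sub_distrib, ← Finset.sum_sub_distrib]
    refine Finset.sum_congr rfl fun j _ => ?_
    rw [hYf]; simp only [RiskAux.Y]; ring
  -- ⟨H, W i⟩
  have hHW : ∀ i, ∑ s : Finset (Fin N), ∑ ε : Fin N → Bool,
      p s * (Hf s ε * Wf i s ε) = 2 ^ N * ((1 - π i) * r i) := by
    intro i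
    have hA : ∀ s : Finset (Fin N), ∑ ε : Fin N → Bool, p s * (Hf s ε * Wf i s ε)
        = p s * ∑ ε : Fin N → Bool, RiskAux.sg (ε i) * Hf s ε := by
      intro s
      by_cases h : i ∈ s
      · rw [Finset.mul_sum]
        refine Finset.sum_congr rfl fun ε _ => ?_
        rw [hWf]; simp only [RiskAux.W]; rw [if_pos h]; ring
      · rw [RiskAux.sum_flip i (Hf s) (hflip s i h), mul_zero]
        refine Finset.sum_eq_zero fun ε _ => ?_
        rw [hWf]; simp only [RiskAux.W]; rw [if_neg h, mul_zero, mul_zero]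
    calc ∑ s : Finset (Fin N), ∑ ε : Fin N → Bool, p s * (Hf s ε * Wf i s ε)
        = ∑ s : Finset (Fin N), p s * ∑ ε : Fin N → Bool, RiskAux.sg (ε i) * Hf s ε :=
          Finset.sum_congr rfl fun s _ => hA s
      _ = ∑ s : Finset (Fin N), ∑ ε : Fin N → Bool, RiskAux.sg (ε i) * (p s * Hf s ε) := by
          refine Finset.sum_congr rfl fun s _ => ?_
          rw [Finset.mul_sum]
          exact Finset.sum_congr rfl fun ε _ => by ring
      _ = ∑ ε : Fin N → Bool, RiskAux.sg (ε i) * ∑ s : Finset (Fin N), p s * Hf s ε := by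
          rw [Finset.sum_comm]
          exact Finset.sum_congr rfl fun ε _ => (Finset.mul_sum _ _ _).symm
      _ = ∑ ε : Fin N → Bool, ∑ j, (1 - π j) * r j * (RiskAux.sg (ε i) * RiskAux.sg (ε j)) := by
          refine Finset.sum_congr rfl fun ε _ => ?_
          rw [hconstraint ε, Finset.mul_sum]
          exact Finset.sum_congr rfl fun j _ => by ring
      _ = ∑ j, (1 - π j) * r j * ∑ ε : Fin N → Bool, RiskAux.sg (ε i) * RiskAux.sg (ε j) := by
          rw [Finset.sum_comm]
          exact Finset.sum_congr rfl fun j _ => (Finset.mul_sum _ _ _).symm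
      _ = 2 ^ N * ((1 - π i) * r i) := by
          simp_rw [RiskAux.sum_sg_mul]
          have e2 : ∀ j, (1 - π j) * r j * (if i = j then (2:ℝ) ^ N else 0)
              = if i = j then 2 ^ N * ((1 - π j) * r j) else 0 := fun j => by
            split <;> ring
          simp_rw [e2]
          rw [Finset.sum_ite_eq, if_pos (Finset.mem_univ i)]
  -- ⟨W i, W j⟩
  have hWW : ∀ i j, ∑ s : Finset (Fin N), ∑ ε : Fin N → Bool,
      p s * (Wf i s ε * Wf j s ε) = if i = j then 2 ^ N * π i else 0 := by
    intro i j
    by_cases hij : i = j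
    · subst hij
      rw [if_pos rfl]
      have hA : ∀ s : Finset (Fin N), ∑ ε : Fin N → Bool, p s * (Wf i s ε * Wf i s ε)
          = 2 ^ N * (if i ∈ s then p s else 0) := by
        intro s
        by_cases h : i ∈ s
        · calc ∑ ε : Fin N → Bool, p s * (Wf i s ε * Wf i s ε)
              = ∑ _ε : Fin N → Bool, p s := by
                refine Finset.sum_congr rfl fun ε _ => ?_
                rw [hWf]; simp only [RiskAux.W]
                rw [if_pos h, RiskAux.sg_mul_self, mul_one]
            _ = 2 ^ N * p s := RiskAux.sum_const_eps _
            _ = 2 ^ N * (if i ∈ s then p s else 0) := by rw [if_pos h]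
        · rw [if_neg h, mul_zero]
          refine Finset.sum_eq_zero fun ε _ => ?_
          rw [hWf]; simp only [RiskAux.W]; rw [if_neg h, mul_zero, mul_zero]
      calc ∑ s : Finset (Fin N), ∑ ε : Fin N → Bool, p s * (Wf i s ε * Wf i s ε)
          = ∑ s : Finset (Fin N), 2 ^ N * (if i ∈ s then p s else 0) :=
            Finset.sum_congr rfl fun s _ => hA s
        _ = 2 ^ N * π i := by rw [← Finset.mul_sum, ← hπ i]
    · rw [if_neg hij]
      refine Finset.sum_eq_zero fun s _ => ?_
      by_cases h1 : i ∈ s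
      · by_cases h2 : j ∈ s
        · have e : ∑ ε : Fin N → Bool, p s * (Wf i s ε * Wf j s ε)
              = p s * ∑ ε : Fin N → Bool, RiskAux.sg (ε i) * RiskAux.sg (ε j) := by
            rw [Finset.mul_sum]
            refine Finset.sum_congr rfl fun ε _ => ?_
            rw [hWf]; simp only [RiskAux.W]; rw [if_pos h1, if_pos h2]
          rw [e, RiskAux.sum_sg_mul, if_neg hij, mul_zero]
        · refine Finset.sum_eq_zero fun ε _ => ?_
          rw [hWf]; simp only [RiskAux.W]; rw [if_neg h2, mul_zero, mul_zero]
      · refine Finset.sum_eq_zero fun ε _ => ?_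
        rw [hWf]; simp only [RiskAux.W]; rw [if_neg h1, zero_mul, mul_zero]
  -- cross term H·G vanishes
  have hcross : ∀ s : Finset (Fin N), ∑ ε : Fin N → Bool, Hf s ε * Gf s ε = 0 := by
    intro s
    have e1 : ∀ ε : Fin N → Bool, Hf s ε * Gf s ε
        = ∑ i ∈ sᶜ, -(r i) * (RiskAux.sg (ε i) * Hf s ε) := by
      intro ε
      rw [hGf]; simp only [RiskAux.G]
      rw [mul_neg, Finset.mul_sum, ← Finset.sum_neg_distrib]
      exact Finset.sum_congr rfl fun i _ => by ring
    simp_rw [e1]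
    rw [Finset.sum_comm]
    refine Finset.sum_eq_zero fun i hi => ?_
    have his : i ∉ s := Finset.mem_compl.mp hi
    rw [← Finset.mul_sum, RiskAux.sum_flip i (Hf s) (hflip s i his), mul_zero]
  -- second moment of G
  have hGG : ∑ s : Finset (Fin N), ∑ ε : Fin N → Bool, p s * Gf s ε ^ 2
      = 2 ^ N * ∑ i, (1 - π i) * r i ^ 2 := by
    have hGsq : ∀ s : Finset (Fin N),
        ∑ ε : Fin N → Bool, Gf s ε ^ 2 = 2 ^ N * ∑ i ∈ sᶜ, r i ^ 2 := by
      intro s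
      have e1 : ∀ ε : Fin N → Bool, Gf s ε ^ 2
          = ∑ i ∈ sᶜ, ∑ j ∈ sᶜ, (r i * r j) * (RiskAux.sg (ε i) * RiskAux.sg (ε j)) := by
        intro ε
        rw [hGf]; simp only [RiskAux.G]
        rw [neg_sq, sq, Finset.sum_mul_sum]
        exact Finset.sum_congr rfl fun i _ => Finset.sum_congr rfl fun j _ => by ring
      simp_rw [e1]
      rw [Finset.sum_comm]
      calc ∑ i ∈ sᶜ, ∑ ε : Fin N → Bool, ∑ j ∈ sᶜ,
            (r i * r j) * (RiskAux.sg (ε i) * RiskAux.sg (ε j))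
          = ∑ i ∈ sᶜ, ∑ j ∈ sᶜ, (r i * r j)
              * ∑ ε : Fin N → Bool, RiskAux.sg (ε i) * RiskAux.sg (ε j) := by
            refine Finset.sum_congr rfl fun i _ => ?_
            rw [Finset.sum_comm]
            exact Finset.sum_congr rfl fun j _ => (Finset.mul_sum _ _ _).symm
        _ = ∑ i ∈ sᶜ, 2 ^ N * r i ^ 2 := by
            refine Finset.sum_congr rfl fun i hi => ?_
            simp_rw [RiskAux.sum_sg_mul]
            have e2 : ∀ j, (r i * r j) * (if i = j then (2:ℝ) ^ N else 0)
                = if i = j then (r i * r j) * 2 ^ N else 0 := fun j => by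
              split <;> simp
            simp_rw [e2]
            rw [Finset.sum_ite_eq, if_pos hi]; ring
        _ = 2 ^ N * ∑ i ∈ sᶜ, r i ^ 2 := (Finset.mul_sum _ _ _).symm
    calc ∑ s : Finset (Fin N), ∑ ε : Fin N → Bool, p s * Gf s ε ^ 2
        = ∑ s : Finset (Fin N), p s * (2 ^ N * ∑ i ∈ sᶜ, r i ^ 2) := by
          refine Finset.sum_congr rfl fun s _ => ?_
          rw [← Finset.mul_sum, hGsq s]
      _ = 2 ^ N * ∑ s : Finset (Fin N), p s * ∑ i ∈ sᶜ, r i ^ 2 := by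
          rw [Finset.mul_sum]
          exact Finset.sum_congr rfl fun s _ => by ring
      _ = 2 ^ N * ∑ i, (1 - π i) * r i ^ 2 := by
          rw [RiskAux.swap2 p π hπ hp1]
  -- Bessel inequality for H
  have hBessel : 2 ^ N * ∑ i, ((1 - π i) * r i) ^ 2 / π i
      ≤ ∑ s : Finset (Fin N), ∑ ε : Fin N → Bool, p s * Hf s ε ^ 2 := by
    set t : Fin N → ℝ := fun i => (1 - π i) * r i / π i with ht
    have h0 : 0 ≤ ∑ s : Finset (Fin N), ∑ ε : Fin N → Bool,
        p s * (Hf s ε - ∑ i, t i * Wf i s ε) ^ 2 :=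
      Finset.sum_nonneg fun s _ => Finset.sum_nonneg fun ε _ =>
        mul_nonneg (hp0 s) (sq_nonneg _)
    have point : ∀ (s : Finset (Fin N)) (ε : Fin N → Bool),
        p s * (Hf s ε - ∑ i, t i * Wf i s ε) ^ 2
          = p s * Hf s ε ^ 2
            - 2 * (∑ i, t i * (p s * (Hf s ε * Wf i s ε)))
            + ∑ i, ∑ j, (t i * t j) * (p s * (Wf i s ε * Wf j s ε)) := by
      intro s ε
      have e1 : (∑ i, t i * Wf i s ε) * (∑ j, t j * Wf j s ε)
          = ∑ i, ∑ j, (t i * t j) * (Wf i s ε * Wf j s ε) := by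
        rw [Finset.sum_mul_sum]
        exact Finset.sum_congr rfl fun i _ => Finset.sum_congr rfl fun j _ => by ring
      have e2 : p s * (Hf s ε * ∑ i, t i * Wf i s ε)
          = ∑ i, t i * (p s * (Hf s ε * Wf i s ε)) := by
        rw [Finset.mul_sum, Finset.mul_sum]
        exact Finset.sum_congr rfl fun i _ => by ring
      have e3 : p s * ∑ i, ∑ j, (t i * t j) * (Wf i s ε * Wf j s ε)
          = ∑ i, ∑ j, (t i * t j) * (p s * (Wf i s ε * Wf j s ε)) := by
        rw [Finset.mul_sum]
        refine Finset.sum_congr rfl fun i _ => ?_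
        rw [Finset.mul_sum]
        exact Finset.sum_congr rfl fun j _ => by ring
      calc p s * (Hf s ε - ∑ i, t i * Wf i s ε) ^ 2
          = p s * Hf s ε ^ 2 - 2 * (p s * (Hf s ε * ∑ i, t i * Wf i s ε))
            + p s * ((∑ i, t i * Wf i s ε) * (∑ j, t j * Wf j s ε)) := by ring
        _ = _ := by rw [e1, e2, e3]
    have hexp : ∑ s : Finset (Fin N), ∑ ε : Fin N → Bool,
        p s * (Hf s ε - ∑ i, t i * Wf i s ε) ^ 2
          = (∑ s : Finset (Fin N), ∑ ε : Fin N → Bool, p s * Hf s ε ^ 2)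
            - 2 * (∑ i, t i * (2 ^ N * ((1 - π i) * r i)))
            + ∑ i, t i ^ 2 * (2 ^ N * π i) := by
      have term2 : ∑ s : Finset (Fin N), ∑ ε : Fin N → Bool,
          ∑ i, t i * (p s * (Hf s ε * Wf i s ε))
            = ∑ i, t i * (2 ^ N * ((1 - π i) * r i)) := by
        calc ∑ s : Finset (Fin N), ∑ ε : Fin N → Bool,
              ∑ i, t i * (p s * (Hf s ε * Wf i s ε))
            = ∑ s : Finset (Fin N), ∑ i, ∑ ε : Fin N → Bool,
              t i * (p s * (Hf s ε * Wf i s ε)) :=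
              Finset.sum_congr rfl fun s _ => Finset.sum_comm
          _ = ∑ i, ∑ s : Finset (Fin N), ∑ ε : Fin N → Bool,
              t i * (p s * (Hf s ε * Wf i s ε)) := Finset.sum_comm
          _ = ∑ i, t i * ∑ s : Finset (Fin N), ∑ ε : Fin N → Bool,
              p s * (Hf s ε * Wf i s ε) := by
              refine Finset.sum_congr rfl fun i _ => ?_
              rw [Finset.mul_sum]
              exact Finset.sum_congr rfl fun s _ => (Finset.mul_sum _ _ _).symm
          _ = ∑ i, t i * (2 ^ N * ((1 - π i) * r i)) :=
              Finset.sum_congr rfl fun i _ => by rw [hHW i]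
      have term3 : ∑ s : Finset (Fin N), ∑ ε : Fin N → Bool,
          ∑ i, ∑ j, (t i * t j) * (p s * (Wf i s ε * Wf j s ε))
            = ∑ i, t i ^ 2 * (2 ^ N * π i) := by
        calc ∑ s : Finset (Fin N), ∑ ε : Fin N → Bool,
              ∑ i, ∑ j, (t i * t j) * (p s * (Wf i s ε * Wf j s ε))
            = ∑ s : Finset (Fin N), ∑ i, ∑ ε : Fin N → Bool,
              ∑ j, (t i * t j) * (p s * (Wf i s ε * Wf j s ε)) :=
              Finset.sum_congr rfl fun s _ => Finset.sum_comm
          _ = ∑ s : Finset (Fin N), ∑ i, ∑ j, ∑ ε : Fin N → Bool,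
              (t i * t j) * (p s * (Wf i s ε * Wf j s ε)) :=
              Finset.sum_congr rfl fun s _ =>
                Finset.sum_congr rfl fun i _ => Finset.sum_comm
          _ = ∑ i, ∑ s : Finset (Fin N), ∑ j, ∑ ε : Fin N → Bool,
              (t i * t j) * (p s * (Wf i s ε * Wf j s ε)) := Finset.sum_comm
          _ = ∑ i, ∑ j, ∑ s : Finset (Fin N), ∑ ε : Fin N → Bool,
              (t i * t j) * (p s * (Wf i s ε * Wf j s ε)) :=
              Finset.sum_congr rfl fun i _ => Finset.sum_comm
          _ = ∑ i, ∑ j, (t i * t j) * ∑ s : Finset (Fin N), ∑ ε : Fin N → Bool,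
              p s * (Wf i s ε * Wf j s ε) := by
              refine Finset.sum_congr rfl fun i _ => Finset.sum_congr rfl fun j _ => ?_
              rw [Finset.mul_sum]
              exact Finset.sum_congr rfl fun s _ => (Finset.mul_sum _ _ _).symm
          _ = ∑ i, ∑ j, (t i * t j) * (if i = j then 2 ^ N * π i else 0) := by
              refine Finset.sum_congr rfl fun i _ => Finset.sum_congr rfl fun j _ => ?_
              rw [hWW i j]
          _ = ∑ i, t i ^ 2 * (2 ^ N * π i) := by
              refine Finset.sum_congr rfl fun i _ => ?_
              have e4 : ∀ j, (t i * t j) * (if i = j then (2:ℝ) ^ N * π i else 0)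
                  = if i = j then (t i * t j) * (2 ^ N * π i) else 0 := fun j => by
                split <;> simp
              simp_rw [e4]
              rw [Finset.sum_ite_eq, if_pos (Finset.mem_univ i)]; ring
      calc ∑ s : Finset (Fin N), ∑ ε : Fin N → Bool,
            p s * (Hf s ε - ∑ i, t i * Wf i s ε) ^ 2
          = ∑ s : Finset (Fin N), ∑ ε : Fin N → Bool,
            (p s * Hf s ε ^ 2
              - 2 * (∑ i, t i * (p s * (Hf s ε * Wf i s ε)))
              + ∑ i, ∑ j, (t i * t j) * (p s * (Wf i s ε * Wf j s ε))) :=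
            Finset.sum_congr rfl fun s _ => Finset.sum_congr rfl fun ε _ => point s ε
        _ = (∑ s : Finset (Fin N), ∑ ε : Fin N → Bool, p s * Hf s ε ^ 2)
            - 2 * (∑ s : Finset (Fin N), ∑ ε : Fin N → Bool,
                ∑ i, t i * (p s * (Hf s ε * Wf i s ε)))
            + ∑ s : Finset (Fin N), ∑ ε : Fin N → Bool,
                ∑ i, ∑ j, (t i * t j) * (p s * (Wf i s ε * Wf j s ε)) := by
            simp_rw [Finset.sum_add_distrib, Finset.sum_sub_distrib, Finset.mul_sum]
        _ = _ := by rw [term2, term3]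
    have halg : 2 * (∑ i, t i * (2 ^ N * ((1 - π i) * r i)))
        - ∑ i, t i ^ 2 * (2 ^ N * π i)
          = 2 ^ N * ∑ i, ((1 - π i) * r i) ^ 2 / π i := by
      rw [Finset.mul_sum, Finset.mul_sum, ← Finset.sum_sub_distrib]
      refine Finset.sum_congr rfl fun i _ => ?_
      have hπi : π i ≠ 0 := (hπpos i).ne'
      rw [ht]
      field_simp
      ring
    rw [hexp] at h0
    linarith
  -- the averaged risk is at most 2^N * M
  have hQle : ∑ s : Finset (Fin N), ∑ ε : Fin N → Bool, p s * (Hf s ε + Gf s ε) ^ 2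
      ≤ 2 ^ N * M := by
    calc ∑ s : Finset (Fin N), ∑ ε : Fin N → Bool, p s * (Hf s ε + Gf s ε) ^ 2
        = ∑ ε : Fin N → Bool, ∑ s : Finset (Fin N), p s * (Hf s ε + Gf s ε) ^ 2 :=
          Finset.sum_comm
      _ = ∑ ε : Fin N → Bool, ∑ s : Finset (Fin N),
          p s * (δ s (Yf ε) - ∑ i, Yf ε i) ^ 2 := by
          refine Finset.sum_congr rfl fun ε _ => Finset.sum_congr rfl fun s _ => ?_
          rw [hHf, hGf, hYf, RiskAux.Usplit a b r δ s ε]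
      _ ≤ ∑ _ε : Fin N → Bool, M :=
          Finset.sum_le_sum fun ε _ => hM (Yf ε) (hmem ε)
      _ = 2 ^ N * M := RiskAux.sum_const_eps M
  -- decomposition of the averaged risk
  have hQeq : ∑ s : Finset (Fin N), ∑ ε : Fin N → Bool, p s * (Hf s ε + Gf s ε) ^ 2
      = (∑ s : Finset (Fin N), ∑ ε : Fin N → Bool, p s * Hf s ε ^ 2)
        + ∑ s : Finset (Fin N), ∑ ε : Fin N → Bool, p s * Gf s ε ^ 2 := by
    have e2 : ∀ s : Finset (Fin N), ∑ ε : Fin N → Bool, p s * (Hf s ε + Gf s ε) ^ 2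
        = (∑ ε : Fin N → Bool, p s * Hf s ε ^ 2)
          + ∑ ε : Fin N → Bool, p s * Gf s ε ^ 2 := by
      intro s
      have e : ∀ ε : Fin N → Bool, p s * (Hf s ε + Gf s ε) ^ 2
          = (p s * Hf s ε ^ 2 + p s * Gf s ε ^ 2)
            + (2 * p s) * (Hf s ε * Gf s ε) := fun ε => by ring
      simp_rw [e]
      rw [Finset.sum_add_distrib, Finset.sum_add_distrib]
      have hz : ∑ ε : Fin N → Bool, 2 * p s * (Hf s ε * Gf s ε) = 0 := by
        rw [← Finset.mul_sum, hcross s, mul_zero]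
      rw [hz, add_zero]
    calc ∑ s : Finset (Fin N), ∑ ε : Fin N → Bool, p s * (Hf s ε + Gf s ε) ^ 2
        = ∑ s : Finset (Fin N), ((∑ ε : Fin N → Bool, p s * Hf s ε ^ 2)
            + ∑ ε : Fin N → Bool, p s * Gf s ε ^ 2) :=
          Finset.sum_congr rfl fun s _ => e2 s
      _ = _ := Finset.sum_add_distrib
  -- final assembly
  have hsum : ∑ i, r i ^ 2 * ((1 - π i) / π i)
      = (∑ i, ((1 - π i) * r i) ^ 2 / π i) + ∑ i, (1 - π i) * r i ^ 2 := by
    rw [← Finset.sum_add_distrib]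
    refine Finset.sum_congr rfl fun i _ => ?_
    have hπi : π i ≠ 0 := (hπpos i).ne'
    field_simp
    ring
  have hfinal : 2 ^ N * (∑ i, r i ^ 2 * ((1 - π i) / π i)) ≤ 2 ^ N * M := by
    rw [hsum, mul_add]
    calc 2 ^ N * (∑ i, ((1 - π i) * r i) ^ 2 / π i) + 2 ^ N * ∑ i, (1 - π i) * r i ^ 2
        ≤ (∑ s : Finset (Fin N), ∑ ε : Fin N → Bool, p s * Hf s ε ^ 2)
          + ∑ s : Finset (Fin N), ∑ ε : Fin N → Bool, p s * Gf s ε ^ 2 :=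
          add_le_add hBessel (le_of_eq hGG.symm)
      _ = ∑ s : Finset (Fin N), ∑ ε : Fin N → Bool, p s * (Hf s ε + Gf s ε) ^ 2 := hQeq.symm
      _ ≤ 2 ^ N * M := hQle
  have h2 : (0:ℝ) < 2 ^ N := by positivity
  exact le_of_mul_le_mul_left hfinal h2
end

section
/- Fix a sampling design p on subsets of {1,…,N} with inclusion probabilities π_i > 0 and suppose r_i > 0 for all i. Set D_π = Σ_{i=1}^N r_i²(1−π_i)/π_i. The following are equivalent: (i) there exists an unbiased estimator δ with sup_{y∈Θ} R(δ,p;y) = D_π; (ii) the midpoint-differenced Horvitz–Thompson estimator T̂ satisfies sup_{y∈Θ} R(T̂,p;y) = D_π; (iii) Δ_{ij} = π_{ij} − π_i π_j = 0 for every pair i ≠ j. -/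
/-!
Average over the corners `m + r ε` of `Θ`, `ε ∈ {±1}ᴺ` uniform, so that the `ε k` are
orthonormal.  At `y = m + z` the risk of `T̂` is the quadratic form
`∑ k l, z k * z l * Δ k l / (π k * π l)`, whose diagonal at a corner is `D_π` and whose
off-diagonal part averages to `0`.  Hence `sup R(T̂) = D_π` forces the off-diagonal part to
vanish at every corner, and pairing it with `ε i * ε j` extracts `Δ i j = 0`.

For an arbitrary unbiased `δ`, the difference `δ_s - T̂_s` on corners depends only on the signs
indexed by `s` and has design mean `0`; this makes it orthogonal to the error of `T̂`, so the
corner average of `R(δ)` is that of `R(T̂)` plus `E ∑ (δ_S - T̂_S)²`.  If `sup R(δ) = D_π` the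
extra term vanishes, `δ = T̂` on the corners, and we are back in the previous case.
-/

open Finset Function

noncomputable section

namespace FinitePopulation

variable {ι : Type*}

def rademacher (σ : ι → Bool) (k : ι) : ℝ := if σ k then 1 else -1

lemma rademacher_mul_self (σ : ι → Bool) (k : ι) : rademacher σ k * rademacher σ k = 1 := by
  unfold rademacher; split_ifs <;> norm_num

lemma rademacher_update_of_ne [DecidableEq ι] (σ : ι → Bool) {k l : ι} (h : l ≠ k) (b : Bool) :
    rademacher (update σ k b) l = rademacher σ l := by
  rw [rademacher, update_of_ne h, rademacher]

def corner (m r : ι → ℝ) (σ : ι → Bool) (k : ι) : ℝ := m k + r k * rademacher σ k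

lemma corner_mem_Icc (m : ι → ℝ) {r : ι → ℝ} (σ : ι → Bool) {k : ι} (hr : 0 ≤ r k) :
    corner m r σ k ∈ Set.Icc (m k - r k) (m k + r k) := by
  unfold corner rademacher
  split_ifs <;> constructor <;> linarith

lemma corner_update_of_ne [DecidableEq ι] (m r : ι → ℝ) (σ : ι → Bool) {k l : ι} (h : l ≠ k)
    (b : Bool) :
    corner m r (update σ k b) l = corner m r σ l := by
  rw [corner, rademacher_update_of_ne σ h, corner]

variable [Fintype ι]

def htEstimator (m π : ι → ℝ) (s : Finset ι) (y : ι → ℝ) : ℝ :=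
  (∑ i, m i) + ∑ i ∈ s, (y i - m i) / π i

def risk (p : Finset ι → ℝ) (δ : Finset ι → (ι → ℝ) → ℝ) (y : ι → ℝ) : ℝ :=
  ∑ s, p s * (δ s y - ∑ i, y i) ^ 2

lemma htEstimator_congr (m π : ι → ℝ) {s : Finset ι} {y y' : ι → ℝ} (h : ∀ i ∈ s, y i = y' i) :
    htEstimator m π s y = htEstimator m π s y' := by
  simp only [htEstimator]
  congr 1
  exact sum_congr rfl fun i hi => by rw [h i hi]

lemma htEstimator_corner_sub (m π r : ι → ℝ) (s : Finset ι) (σ : ι → Bool) :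
    htEstimator m π s (corner m r σ) - ∑ k, corner m r σ k =
      ∑ k ∈ s, r k / π k * rademacher σ k - ∑ k, r k * rademacher σ k := by
  simp only [htEstimator, corner, add_sub_cancel_left, sum_add_distrib]
  rw [sum_congr rfl fun k _ => div_mul_eq_mul_div (r k) (π k) (rademacher σ k)]
  ring

variable [DecidableEq ι]

lemma sum_mul_rademacher_eq_zero {f : (ι → Bool) → ℝ} (k : ι)
    (hf : ∀ σ b, f (update σ k b) = f σ) : ∑ σ, f σ * rademacher σ k = 0 := by
  let flip : (ι → Bool) → (ι → Bool) := fun σ => update σ k (!σ k)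
  have hflip : Involutive flip := fun σ => by simp [flip]
  have hneg : ∀ σ, f (flip σ) * rademacher (flip σ) k = -(f σ * rademacher σ k) := fun σ => by
    cases h : σ k <;> simp [flip, hf, rademacher, h]
  have := Equiv.sum_comp hflip.toPerm fun σ => f σ * rademacher σ k
  simp only [Involutive.coe_toPerm, hneg, sum_neg_distrib] at this
  linarith

lemma sum_rademacher_mul_rademacher (k l : ι) :
    ∑ σ : ι → Bool, rademacher σ k * rademacher σ l =
      if k = l then (Fintype.card (ι → Bool) : ℝ) else 0 := by
  split_ifs with h
  · simp [h, rademacher_mul_self]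
  · exact sum_mul_rademacher_eq_zero l fun σ b => rademacher_update_of_ne σ h b

lemma sum_quadForm_rademacher (B : ι → ι → ℝ) :
    ∑ σ : ι → Bool, ∑ k, ∑ l, B k l * (rademacher σ k * rademacher σ l) =
      Fintype.card (ι → Bool) * ∑ k, B k k := by
  rw [sum_comm]
  simp_rw [sum_comm (s := (univ : Finset (ι → Bool))), ← mul_sum, sum_rademacher_mul_rademacher,
    mul_ite, mul_zero, sum_ite_eq, mem_univ, if_true, mul_sum, mul_comm]

lemma sum_rademacher_four_eq_zero {i j k : ι} (hij : i ≠ j) (hki : k ≠ i) (hkj : k ≠ j) (l : ι) :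
    ∑ σ : ι → Bool, rademacher σ i * rademacher σ j * (rademacher σ k * rademacher σ l) = 0 := by
  by_cases hlk : l = k
  · subst hlk
    simpa [rademacher_mul_self, hij] using sum_rademacher_mul_rademacher i j
  · simp_rw [show ∀ σ : ι → Bool,
        rademacher σ i * rademacher σ j * (rademacher σ k * rademacher σ l) =
          rademacher σ i * rademacher σ j * rademacher σ l * rademacher σ k from fun σ => by ring]
    exact sum_mul_rademacher_eq_zero k fun σ b => by
      rw [rademacher_update_of_ne σ hki.symm, rademacher_update_of_ne σ hkj.symm,
        rademacher_update_of_ne σ hlk]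

lemma sum_rademacher_mul_quadForm {i j : ι} (hij : i ≠ j) (B : ι → ι → ℝ) :
    ∑ σ : ι → Bool, rademacher σ i * rademacher σ j *
        ∑ k, ∑ l, B k l * (rademacher σ k * rademacher σ l) =
      Fintype.card (ι → Bool) * (B i j + B j i) := by
  simp_rw [mul_sum]
  rw [sum_comm]
  simp_rw [sum_comm (s := (univ : Finset (ι → Bool))), mul_left_comm _ (B _ _), ← mul_sum]
  rw [Fintype.sum_eq_add i j hij fun k hk => sum_eq_zero fun l _ => by
    rw [sum_rademacher_four_eq_zero hij hk.1 hk.2, mul_zero]]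
  have hi : ∀ σ l, rademacher σ i * rademacher σ j * (rademacher σ i * rademacher σ l) =
      rademacher σ j * rademacher σ l := fun σ l => by
    linear_combination (rademacher σ j * rademacher σ l) * rademacher_mul_self σ i
  have hj : ∀ σ l, rademacher σ i * rademacher σ j * (rademacher σ j * rademacher σ l) =
      rademacher σ i * rademacher σ l := fun σ l => by
    linear_combination (rademacher σ i * rademacher σ l) * rademacher_mul_self σ j
  simp_rw [hi, hj, sum_rademacher_mul_rademacher, mul_ite, mul_zero, sum_ite_eq, mem_univ, if_true]
  ring

theorem eq_zero_of_forall_quadForm_rademacher_le {B : ι → ι → ℝ} (hB : ∀ k l, B k l = B l k)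
    (hle : ∀ σ : ι → Bool, ∑ k, ∑ l, B k l * (rademacher σ k * rademacher σ l) ≤ ∑ k, B k k)
    {i j : ι} (hij : i ≠ j) : B i j = 0 := by
  have hq : ∀ σ : ι → Bool, ∑ k, ∑ l, B k l * (rademacher σ k * rademacher σ l) = ∑ k, B k k := by
    have hsum : ∑ σ : ι → Bool, (∑ k, ∑ l, B k l * (rademacher σ k * rademacher σ l) -
        ∑ k, B k k) = 0 := by
      simp [sum_sub_distrib, sum_quadForm_rademacher]
    intro σ
    have := (sum_eq_zero_iff_of_nonpos fun σ _ => sub_nonpos.2 (hle σ)).1 hsum σ (mem_univ σ)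
    linarith
  have hcard : (0 : ℝ) < Fintype.card (ι → Bool) := by exact_mod_cast Fintype.card_pos
  have := sum_rademacher_mul_quadForm hij B
  simp_rw [hq, ← sum_mul, sum_rademacher_mul_rademacher, if_neg hij, zero_mul, hB j i] at this
  nlinarith

lemma sum_mul_sum_mem_rademacher {s : Finset ι} {f : (ι → Bool) → ℝ}
    (hf : ∀ σ k b, k ∉ s → f (update σ k b) = f σ) (w : ι → ℝ) :
    ∑ σ, f σ * ∑ k ∈ s, w k * rademacher σ k = ∑ σ, f σ * ∑ k, w k * rademacher σ k := by
  simp_rw [mul_sum]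
  rw [sum_comm, sum_comm (s := univ)]
  refine sum_subset (subset_univ s) fun k _ hk => ?_
  simp_rw [mul_left_comm _ (w k), ← mul_sum]
  rw [sum_mul_rademacher_eq_zero k fun σ b => hf σ k b hk, mul_zero]

def inclusionProb (p : Finset ι → ℝ) (i : ι) : ℝ := ∑ s, if i ∈ s then p s else 0

def jointInclusionProb (p : Finset ι → ℝ) (i j : ι) : ℝ := ∑ s, if i ∈ s ∧ j ∈ s then p s else 0

def inclusionCov (p : Finset ι → ℝ) (i j : ι) : ℝ :=
  jointInclusionProb p i j - inclusionProb p i * inclusionProb p j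

lemma jointInclusionProb_self (p : Finset ι → ℝ) (i : ι) :
    jointInclusionProb p i i = inclusionProb p i := by
  simp [jointInclusionProb, inclusionProb]

lemma inclusionCov_comm (p : Finset ι → ℝ) (i j : ι) : inclusionCov p i j = inclusionCov p j i := by
  simp only [inclusionCov, jointInclusionProb, and_comm, mul_comm]

lemma sum_mul_sum_mem (p : Finset ι → ℝ) (w : ι → ℝ) :
    ∑ s, p s * ∑ i ∈ s, w i = ∑ i, w i * inclusionProb p i := by
  simp_rw [inclusionProb, mul_sum]
  rw [sum_comm]
  refine sum_congr rfl fun s _ => ?_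
  rw [← Fintype.sum_ite_mem]
  exact sum_congr rfl fun i _ => by split_ifs <;> ring

variable {p : Finset ι → ℝ}

lemma inclusionProb_le_one (hp0 : ∀ s, 0 ≤ p s) (hp1 : ∑ s, p s = 1) (i : ι) :
    inclusionProb p i ≤ 1 :=
  hp1 ▸ sum_le_sum fun s _ => by split_ifs <;> simp [hp0 s]

lemma inclusionCov_self_div {i : ι} (hi : inclusionProb p i ≠ 0) :
    inclusionCov p i i / (inclusionProb p i * inclusionProb p i) =
      (1 - inclusionProb p i) / inclusionProb p i := by
  rw [inclusionCov, jointInclusionProb_self]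
  field_simp

lemma sum_mul_htEstimator (hp1 : ∑ s, p s = 1) (hπ : ∀ i, inclusionProb p i ≠ 0) (m y : ι → ℝ) :
    ∑ s, p s * htEstimator m (inclusionProb p) s y = ∑ i, y i := by
  simp_rw [htEstimator, mul_add, sum_add_distrib, ← sum_mul, hp1, one_mul, sum_mul_sum_mem,
    div_mul_cancel₀ _ (hπ _), sum_sub_distrib]
  ring

lemma sum_mul_indicator_sub_one_mul (hp1 : ∑ s, p s = 1) (hπ : ∀ i, inclusionProb p i ≠ 0)
    (k l : ι) :
    ∑ s, p s * (((if k ∈ s then (inclusionProb p k)⁻¹ else 0) - 1) *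
        ((if l ∈ s then (inclusionProb p l)⁻¹ else 0) - 1)) =
      inclusionCov p k l / (inclusionProb p k * inclusionProb p l) := by
  have expand : ∀ s, p s * (((if k ∈ s then (inclusionProb p k)⁻¹ else 0) - 1) *
        ((if l ∈ s then (inclusionProb p l)⁻¹ else 0) - 1)) =
      (if k ∈ s ∧ l ∈ s then p s else 0) * (inclusionProb p k * inclusionProb p l)⁻¹ -
        (if k ∈ s then p s else 0) * (inclusionProb p k)⁻¹ -
        (if l ∈ s then p s else 0) * (inclusionProb p l)⁻¹ + p s := fun s => by
    by_cases hk : k ∈ s <;> by_cases hl : l ∈ s <;> simp [hk, hl] <;> ring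
  rw [sum_congr rfl fun s _ => expand s]
  simp_rw [sum_add_distrib, sum_sub_distrib, ← sum_mul, hp1]
  rw [← jointInclusionProb, ← inclusionProb, ← inclusionProb, inclusionCov]
  field_simp [hπ k, hπ l]
  ring

lemma risk_htEstimator (hp1 : ∑ s, p s = 1) (hπ : ∀ i, inclusionProb p i ≠ 0) (m y : ι → ℝ) :
    risk p (htEstimator m (inclusionProb p)) y =
      ∑ k, ∑ l, (y k - m k) * (y l - m l) *
        (inclusionCov p k l / (inclusionProb p k * inclusionProb p l)) := by
  have error : ∀ s, htEstimator m (inclusionProb p) s y - ∑ i, y i =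
      ∑ k, (y k - m k) * ((if k ∈ s then (inclusionProb p k)⁻¹ else 0) - 1) := fun s => by
    simp_rw [htEstimator, mul_sub, mul_one, sum_sub_distrib, mul_ite, mul_zero,
      Fintype.sum_ite_mem, div_eq_mul_inv]
    ring
  simp_rw [risk, error, sq, sum_mul_sum, mul_sum, ← sum_mul_indicator_sub_one_mul hp1 hπ, mul_sum]
  rw [sum_comm]
  refine sum_congr rfl fun k _ => ?_
  rw [sum_comm]
  exact sum_congr rfl fun l _ => sum_congr rfl fun s _ => by ring

lemma risk_htEstimator_corner (hp1 : ∑ s, p s = 1) (hπ : ∀ i, inclusionProb p i ≠ 0)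
    (m r : ι → ℝ) (σ : ι → Bool) :
    risk p (htEstimator m (inclusionProb p)) (corner m r σ) =
      ∑ k, ∑ l, r k * r l * (inclusionCov p k l / (inclusionProb p k * inclusionProb p l)) *
        (rademacher σ k * rademacher σ l) := by
  rw [risk_htEstimator hp1 hπ]
  exact sum_congr rfl fun k _ => sum_congr rfl fun l _ => by simp only [corner]; ring

lemma sum_risk_htEstimator_corner (hp1 : ∑ s, p s = 1) (hπ : ∀ i, inclusionProb p i ≠ 0)
    (m r : ι → ℝ) :
    ∑ σ, risk p (htEstimator m (inclusionProb p)) (corner m r σ) =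
      Fintype.card (ι → Bool) * ∑ k, r k ^ 2 * ((1 - inclusionProb p k) / inclusionProb p k) := by
  simp_rw [risk_htEstimator_corner hp1 hπ, sum_quadForm_rademacher, mul_assoc,
    inclusionCov_self_div (hπ _), ← mul_assoc, ← sq]

lemma sum_sum_mul_eq_zero_of_local {u : Finset ι → (ι → Bool) → ℝ}
    (hu : ∀ s σ k b, k ∉ s → u s (update σ k b) = u s σ) (hu0 : ∀ σ, ∑ s, p s * u s σ = 0)
    (w v : ι → ℝ) :
    ∑ σ, ∑ s, p s * u s σ *
      (∑ k ∈ s, w k * rademacher σ k - ∑ k, v k * rademacher σ k) = 0 := by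
  have hs : ∀ s, ∑ σ, u s σ * (∑ k ∈ s, w k * rademacher σ k - ∑ k, v k * rademacher σ k) =
      ∑ σ, u s σ * (∑ k, w k * rademacher σ k - ∑ k, v k * rademacher σ k) := fun s => by
    simp_rw [mul_sub, sum_sub_distrib, sum_mul_sum_mem_rademacher (hu s) w]
  rw [sum_comm]
  simp_rw [mul_assoc, ← mul_sum, hs, mul_sum, ← mul_assoc]
  rw [sum_comm]
  simp_rw [← sum_mul, hu0, zero_mul, sum_const_zero]

theorem sum_risk_corner_eq_add (hp1 : ∑ s, p s = 1) (hπ : ∀ i, inclusionProb p i ≠ 0)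
    (m r : ι → ℝ) {δ : Finset ι → (ι → ℝ) → ℝ}
    (hδ : ∀ s (y y' : ι → ℝ), (∀ i ∈ s, y i = y' i) → δ s y = δ s y')
    (hunb : ∀ σ, ∑ s, p s * δ s (corner m r σ) = ∑ i, corner m r σ i) :
    ∑ σ, risk p δ (corner m r σ) =
      ∑ σ, risk p (htEstimator m (inclusionProb p)) (corner m r σ) +
        ∑ σ, ∑ s, p s *
          (δ s (corner m r σ) - htEstimator m (inclusionProb p) s (corner m r σ)) ^ 2 := by
  set T := htEstimator m (inclusionProb p)
  set u : Finset ι → (ι → Bool) → ℝ := fun s σ => δ s (corner m r σ) - T s (corner m r σ)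
  have hu : ∀ s σ k b, k ∉ s → u s (update σ k b) = u s σ := fun s σ k b hk => by
    have hagree : ∀ i ∈ s, corner m r (update σ k b) i = corner m r σ i := fun i hi =>
      corner_update_of_ne m r σ (ne_of_mem_of_not_mem hi hk) b
    simp only [u, T, hδ s _ _ hagree, htEstimator_congr m _ hagree]
  have hu0 : ∀ σ, ∑ s, p s * u s σ = 0 := fun σ => by
    simp only [u, T, mul_sub, sum_sub_distrib, hunb, sum_mul_htEstimator hp1 hπ, sub_self]
  have hcross : ∑ σ, ∑ s, p s * u s σ * (T s (corner m r σ) - ∑ i, corner m r σ i) = 0 := by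
    simpa only [T, htEstimator_corner_sub] using
      sum_sum_mul_eq_zero_of_local hu hu0 (fun k => r k / inclusionProb p k) r
  have hexpand : ∀ σ s, p s * (δ s (corner m r σ) - ∑ i, corner m r σ i) ^ 2 =
      p s * (T s (corner m r σ) - ∑ i, corner m r σ i) ^ 2 + p s * u s σ ^ 2 +
        2 * (p s * u s σ * (T s (corner m r σ) - ∑ i, corner m r σ i)) := fun σ s => by
    simp only [u]; ring
  simp only [risk, hexpand, sum_add_distrib, ← mul_sum, hcross, mul_zero, add_zero]
  rfl

theorem risk_htEstimator_corner_le (hp0 : ∀ s, 0 ≤ p s) (hp1 : ∑ s, p s = 1)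
    (hπ : ∀ i, inclusionProb p i ≠ 0) (m : ι → ℝ) {r : ι → ℝ} (hr : ∀ k, 0 ≤ r k)
    {δ : Finset ι → (ι → ℝ) → ℝ}
    (hδ : ∀ s (y y' : ι → ℝ), (∀ i ∈ s, y i = y' i) → δ s y = δ s y')
    (hunb : ∀ y : ι → ℝ, (∀ i, y i ∈ Set.Icc (m i - r i) (m i + r i)) →
      ∑ s, p s * δ s y = ∑ i, y i)
    (hbound : ∀ y : ι → ℝ, (∀ i, y i ∈ Set.Icc (m i - r i) (m i + r i)) →
      risk p δ y ≤ ∑ k, r k ^ 2 * ((1 - inclusionProb p k) / inclusionProb p k))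
    (σ : ι → Bool) :
    risk p (htEstimator m (inclusionProb p)) (corner m r σ) ≤
      ∑ k, r k ^ 2 * ((1 - inclusionProb p k) / inclusionProb p k) := by
  set T := htEstimator m (inclusionProb p)
  have hmem : ∀ σ i, corner m r σ i ∈ Set.Icc (m i - r i) (m i + r i) := fun σ i =>
    corner_mem_Icc m σ (hr i)
  have hsum := sum_risk_corner_eq_add hp1 hπ m r hδ fun σ => hunb _ (hmem σ)
  have hle : ∑ σ, risk p δ (corner m r σ) ≤ ∑ σ, risk p T (corner m r σ) := by
    rw [sum_risk_htEstimator_corner hp1 hπ]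
    simpa using sum_le_sum fun σ (_ : σ ∈ univ) => hbound _ (hmem σ)
  have hnonneg : ∀ σ s, 0 ≤ p s * (δ s (corner m r σ) - T s (corner m r σ)) ^ 2 :=
    fun σ s => mul_nonneg (hp0 s) (sq_nonneg _)
  have hzero : ∀ σ s, p s * (δ s (corner m r σ) - T s (corner m r σ)) ^ 2 = 0 := by
    have htot : ∑ σ, ∑ s, p s * (δ s (corner m r σ) - T s (corner m r σ)) ^ 2 = 0 :=
      le_antisymm (by linarith) (sum_nonneg fun σ _ => sum_nonneg fun s _ => hnonneg σ s)
    intro σ s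
    exact (sum_eq_zero_iff_of_nonneg fun s _ => hnonneg σ s).1
      ((sum_eq_zero_iff_of_nonneg fun σ _ => sum_nonneg fun s _ => hnonneg σ s).1 htot σ
        (mem_univ σ)) s (mem_univ s)
  calc risk p T (corner m r σ) = risk p δ (corner m r σ) := by
        refine sum_congr rfl fun s _ => ?_
        rcases mul_eq_zero.1 (hzero σ s) with hs | hs
        · simp [hs]
        · rw [sub_eq_zero.1 (pow_eq_zero_iff two_ne_zero |>.1 hs)]
    _ ≤ _ := hbound _ (hmem σ)

theorem inclusionCov_eq_zero_of_forall_risk_corner_le (hp1 : ∑ s, p s = 1)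
    (hπ : ∀ i, inclusionProb p i ≠ 0) (m : ι → ℝ) {r : ι → ℝ} (hr : ∀ k, r k ≠ 0)
    (h : ∀ σ, risk p (htEstimator m (inclusionProb p)) (corner m r σ) ≤
      ∑ k, r k ^ 2 * ((1 - inclusionProb p k) / inclusionProb p k))
    {i j : ι} (hij : i ≠ j) : inclusionCov p i j = 0 := by
  have hB := eq_zero_of_forall_quadForm_rademacher_le
    (B := fun k l => r k * r l * (inclusionCov p k l / (inclusionProb p k * inclusionProb p l)))
    (fun k l => by simp only [inclusionCov_comm p k l, mul_comm]) (fun σ => by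
      convert h σ using 1
      · rw [risk_htEstimator_corner hp1 hπ]
      · refine sum_congr rfl fun k _ => ?_
        rw [inclusionCov_self_div (hπ k)]
        ring) hij
  simpa [hr i, hr j, hπ i, hπ j] using hB

theorem isLUB_risk_htEstimator_of_inclusionCov_eq_zero (hp0 : ∀ s, 0 ≤ p s) (hp1 : ∑ s, p s = 1)
    (hπ : ∀ i, 0 < inclusionProb p i) (m : ι → ℝ) {r : ι → ℝ} (hr : ∀ k, 0 ≤ r k)
    (h : ∀ i j, i ≠ j → inclusionCov p i j = 0) :
    IsLUB (risk p (htEstimator m (inclusionProb p)) ''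
        {y | ∀ i, y i ∈ Set.Icc (m i - r i) (m i + r i)})
      (∑ k, r k ^ 2 * ((1 - inclusionProb p k) / inclusionProb p k)) := by
  have hπ0 : ∀ i, inclusionProb p i ≠ 0 := fun i => (hπ i).ne'
  have hrisk : ∀ y, risk p (htEstimator m (inclusionProb p)) y =
      ∑ k, (y k - m k) ^ 2 * ((1 - inclusionProb p k) / inclusionProb p k) := fun y => by
    rw [risk_htEstimator hp1 hπ0]
    refine sum_congr rfl fun k _ => ?_
    rw [sum_eq_single k (fun l _ hlk => by rw [h k l hlk.symm]; simp) (by simp),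
      inclusionCov_self_div (hπ0 k), sq]
  refine IsGreatest.isLUB ⟨⟨fun k => m k + r k, fun k => ⟨by linarith [hr k], le_rfl⟩, ?_⟩, ?_⟩
  · simp [hrisk]
  · rintro _ ⟨y, hy, rfl⟩
    rw [hrisk]
    refine sum_le_sum fun k _ => mul_le_mul_of_nonneg_right ?_ ?_
    · exact sq_le_sq' (by linarith [(hy k).1]) (by linarith [(hy k).2])
    · exact div_nonneg (sub_nonneg.2 (inclusionProb_le_one hp0 hp1 k)) (hπ k).le

end FinitePopulation

end

open FinitePopulation

theorem sharpness_characterization_general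
    (N : ℕ) (a b : Fin N → ℝ)
    (m r : Fin N → ℝ)
    (hm : ∀ i, m i = (a i + b i) / 2)
    (hr : ∀ i, r i = (b i - a i) / 2) (hrpos : ∀ i, 0 < r i)
    (p : Finset (Fin N) → ℝ) (hp0 : ∀ s, 0 ≤ p s)
    (hp1 : ∑ s : Finset (Fin N), p s = 1)
    (π : Fin N → ℝ)
    (hπ : ∀ i, π i = ∑ s : Finset (Fin N), if i ∈ s then p s else 0)
    (hπpos : ∀ i, 0 < π i)
    (πij : Fin N → Fin N → ℝ)
    (hπij : ∀ i j, πij i j = ∑ s : Finset (Fin N), if i ∈ s ∧ j ∈ s then p s else 0)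
    (Dπ : ℝ) (hDπ : Dπ = ∑ i, r i ^ 2 * ((1 - π i) / π i)) :
    List.TFAE
      [ -- (i) some unbiased estimator attains worst-case risk Dπ
        (∃ δ : Finset (Fin N) → (Fin N → ℝ) → ℝ,
          (∀ s (y y' : Fin N → ℝ), (∀ i ∈ s, y i = y' i) → δ s y = δ s y') ∧
          (∀ y : Fin N → ℝ, (∀ i, y i ∈ Set.Icc (a i) (b i)) →
            ∑ s : Finset (Fin N), p s * δ s y = ∑ i, y i) ∧
          IsLUB ((fun y : Fin N → ℝ =>
              ∑ s : Finset (Fin N), p s * (δ s y - ∑ i, y i) ^ 2) ''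
            {y : Fin N → ℝ | ∀ i, y i ∈ Set.Icc (a i) (b i)}) Dπ),
        -- (ii) the midpoint-differenced HT estimator attains worst-case risk Dπ
        IsLUB ((fun y : Fin N → ℝ =>
            ∑ s : Finset (Fin N),
              p s * (((∑ i, m i) + ∑ i ∈ s, (y i - m i) / π i) - ∑ i, y i) ^ 2) ''
          {y : Fin N → ℝ | ∀ i, y i ∈ Set.Icc (a i) (b i)}) Dπ,
        -- (iii) pairwise independence of the inclusion indicators
        ∀ i j, i ≠ j → πij i j - π i * π j = 0 ] := by
  have ha : a = fun i => m i - r i := funext fun i => by rw [hm, hr]; ring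
  have hb : b = fun i => m i + r i := funext fun i => by rw [hm, hr]; ring
  obtain rfl : π = inclusionProb p := funext hπ
  obtain rfl : πij = jointInclusionProb p := funext fun i => funext (hπij i)
  subst ha hb hDπ
  have hπ0 : ∀ i, inclusionProb p i ≠ 0 := fun i => (hπpos i).ne'
  tfae_have 3 → 2 :=
    isLUB_risk_htEstimator_of_inclusionCov_eq_zero hp0 hp1 hπpos m fun i => (hrpos i).le
  tfae_have 2 → 1 := fun h => ⟨htEstimator m (inclusionProb p), fun _ _ _ => htEstimator_congr m _,
    fun y _ => sum_mul_htEstimator hp1 hπ0 m y, h⟩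
  tfae_have 1 → 3
  | ⟨δ, hδ, hunb, hlub⟩ => fun i j hij =>
    inclusionCov_eq_zero_of_forall_risk_corner_le hp1 hπ0 m (fun k => (hrpos k).ne')
      (risk_htEstimator_corner_le hp0 hp1 hπ0 m (fun k => (hrpos k).le) hδ hunb
        (fun y hy => hlub.1 ⟨y, hy, rfl⟩)) hij
  tfae_finish

/-- Theorem 2: sharpness characterization.
Fix a design `p` with inclusion probabilities `π i > 0` and radii `r i > 0`, and set
`Dπ = ∑ i, r i ^ 2 * (1 - π i)/π i`. The following are equivalent:
(i) some unbiased estimator `δ` has worst-case risk over `Θ` exactly `Dπ`;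
(ii) the midpoint-differenced Horvitz–Thompson estimator has worst-case risk `Dπ`;
(iii) `π_{ij} - π i * π j = 0` for all `i ≠ j` (pairwise independent inclusion
indicators). Worst-case risk being `Dπ` is formalized as `Dπ` being the least
upper bound of the risk over the rectangle `Θ`. -/
theorem sharpness_characterization
    (N : ℕ) (a b : Fin N → ℝ) (hab : ∀ i, a i ≤ b i)
    (m r : Fin N → ℝ)
    (hm : ∀ i, m i = (a i + b i) / 2)
    (hr : ∀ i, r i = (b i - a i) / 2) (hrpos : ∀ i, 0 < r i)
    (p : Finset (Fin N) → ℝ) (hp0 : ∀ s, 0 ≤ p s)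
    (hp1 : ∑ s : Finset (Fin N), p s = 1)
    (π : Fin N → ℝ)
    (hπ : ∀ i, π i = ∑ s : Finset (Fin N), if i ∈ s then p s else 0)
    (hπpos : ∀ i, 0 < π i)
    (πij : Fin N → Fin N → ℝ)
    (hπij : ∀ i j, πij i j = ∑ s : Finset (Fin N), if i ∈ s ∧ j ∈ s then p s else 0)
    (Dπ : ℝ) (hDπ : Dπ = ∑ i, r i ^ 2 * ((1 - π i) / π i)) :
    List.TFAE
      [ -- (i) some unbiased estimator attains worst-case risk Dπ
        (∃ δ : Finset (Fin N) → (Fin N → ℝ) → ℝ,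
          (∀ s (y y' : Fin N → ℝ), (∀ i ∈ s, y i = y' i) → δ s y = δ s y') ∧
          (∀ y : Fin N → ℝ, (∀ i, y i ∈ Set.Icc (a i) (b i)) →
            ∑ s : Finset (Fin N), p s * δ s y = ∑ i, y i) ∧
          IsLUB ((fun y : Fin N → ℝ =>
              ∑ s : Finset (Fin N), p s * (δ s y - ∑ i, y i) ^ 2) ''
            {y : Fin N → ℝ | ∀ i, y i ∈ Set.Icc (a i) (b i)}) Dπ),
        -- (ii) the midpoint-differenced HT estimator attains worst-case risk Dπ
        IsLUB ((fun y : Fin N → ℝ =>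
            ∑ s : Finset (Fin N),
              p s * (((∑ i, m i) + ∑ i ∈ s, (y i - m i) / π i) - ∑ i, y i) ^ 2) ''
          {y : Fin N → ℝ | ∀ i, y i ∈ Set.Icc (a i) (b i)}) Dπ,
        -- (iii) pairwise independence of the inclusion indicators
        ∀ i j, i ≠ j → πij i j - π i * π j = 0 ] :=
  sharpness_characterization_general N a b m r hm hr hrpos p hp0 hp1 π hπ hπpos πij hπij Dπ hDπ
end

section
/- Suppose the inclusion indicators of the sampling design p are pairwise independent, i.e. π_{ij} = π_i π_j for all i ≠ j, with π_i > 0. Then the minimax risk among all unbiased estimators equals Σ_{i=1}^N r_i² (1−π_i)/π_i; that is, inf_δ sup_{y∈Θ} R(δ,p;y) = Σ_{i=1}^N r_i²(1−π_i)/π_i, and the infimum is attained by the midpoint-differenced Horvitz–Thompson estimator T̂. -/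
/-!
The upper bound is a variance computation: the error of `T̂` at the sample `s` is
`∑ i, (y i - m i) * u s i` with `u s i = 1{i ∈ s} / π i - 1`, and under pairwise independence the
functions `u · i` are orthogonal in `L²(p)` with `∑ s, p s * u s i ^ 2 = (1 - π i) / π i`.

For the lower bound, average the risk of an unbiased `δ` over the `2 ^ N` vertices `m + r ε` of `Θ`,
`ε ∈ {±1}ᴺ`. As `δ s` ignores `y i` for `i ∉ s`, flipping `ε i` shows that for such `s` the
correlation of the error with `ε i` is that of `-∑ y`, namely `-r i`, while unbiasedness makes
its `p`-average vanish. Bessel's inequality for the orthogonal family `(s, ε) ↦ u s i * ε i` then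
bounds the averaged risk below by `∑ i, r i ^ 2 * (1 - π i) / π i`.
-/

open Finset

theorem sum_mul_sum_sq_of_orthogonal {κ ι : Type*} [Fintype κ] [Fintype ι] [DecidableEq ι]
    (w : κ → ℝ) (f : ι → κ → ℝ) (v : ι → ℝ)
    (hf : ∀ i j, ∑ x, w x * (f i x * f j x) = if i = j then v i else 0) (c : ι → ℝ) :
    ∑ x, w x * (∑ i, c i * f i x) ^ 2 = ∑ i, c i ^ 2 * v i := by
  have expand : ∀ x, w x * (∑ i, c i * f i x) ^ 2
      = ∑ i, ∑ j, c i * c j * (w x * (f i x * f j x)) := fun x => by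
    rw [sq, sum_mul_sum, mul_sum]
    exact sum_congr rfl fun i _ => by rw [mul_sum]; exact sum_congr rfl fun j _ => by ring
  simp_rw [expand]
  rw [sum_comm]
  refine sum_congr rfl fun i _ => ?_
  rw [sum_comm]
  simp_rw [← mul_sum, hf, mul_ite, mul_zero, sum_ite_eq, if_pos (mem_univ i)]
  ring

namespace SamplingDesign

variable {ι : Type*} [DecidableEq ι]

def vertexSign (t : Finset ι) (i : ι) : ℝ := if i ∈ t then 1 else -1

lemma vertexSign_symmDiff_self (t : Finset ι) (i : ι) :
    vertexSign (symmDiff t {i}) i = -vertexSign t i := by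
  by_cases h : i ∈ t <;> simp [vertexSign, mem_symmDiff, h]

lemma vertexSign_symmDiff_of_ne (t : Finset ι) {i j : ι} (h : j ≠ i) :
    vertexSign (symmDiff t {i}) j = vertexSign t j := by
  simp [vertexSign, mem_symmDiff, h]

def vertex (m r : ι → ℝ) (t : Finset ι) (i : ι) : ℝ := m i + r i * vertexSign t i

lemma vertex_mem_Icc {m r : ι → ℝ} {i : ι} (hr : 0 ≤ r i) (t : Finset ι) :
    vertex m r t i ∈ Set.Icc (m i - r i) (m i + r i) := by
  by_cases h : i ∈ t <;> simp [vertex, vertexSign, h] <;> linarith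

variable [Fintype ι]

theorem sum_vertexSign_mul_eq_zero {F : Finset ι → ℝ} (i : ι)
    (hF : ∀ t, F (symmDiff t {i}) = F t) :
    ∑ t, vertexSign t i * F t = 0 := by
  have hinv : Function.Involutive (fun t : Finset ι => symmDiff t {i}) :=
    fun t => symmDiff_symmDiff_cancel_right _ _
  have hflip := (Equiv.sum_comp hinv.toPerm (fun t => vertexSign t i * F t)).symm
  simp only [Function.Involutive.coe_toPerm, vertexSign_symmDiff_self, hF, neg_mul,
    sum_neg_distrib] at hflip
  linarith

theorem sum_vertexSign_mul_vertexSign (i j : ι) :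
    ∑ t : Finset ι, vertexSign t i * vertexSign t j
      = if i = j then (Fintype.card (Finset ι) : ℝ) else 0 := by
  split_ifs with h
  · subst h
    have hsq : ∀ t : Finset ι, vertexSign t i * vertexSign t i = 1 := fun t => by
      by_cases h : i ∈ t <;> simp [vertexSign, h]
    simp [hsq]
  · exact sum_vertexSign_mul_eq_zero i fun t => vertexSign_symmDiff_of_ne t (Ne.symm h)

theorem sum_sq_sum_mul_vertexSign (c : ι → ℝ) :
    ∑ t : Finset ι, (∑ i, c i * vertexSign t i) ^ 2
      = Fintype.card (Finset ι) * ∑ i, c i ^ 2 := by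
  have := sum_mul_sum_sq_of_orthogonal (fun _ => 1) (fun i t => vertexSign t i) _
    (fun i j => by simpa only [one_mul] using sum_vertexSign_mul_vertexSign i j) c
  simpa only [one_mul, mul_sum, mul_comm] using this

theorem sum_vertexSign_mul_sum_mul_vertexSign (c : ι → ℝ) (i : ι) :
    ∑ t : Finset ι, vertexSign t i * ∑ j, c j * vertexSign t j
      = Fintype.card (Finset ι) * c i := by
  simp_rw [mul_sum, mul_left_comm (vertexSign _ i)]
  rw [sum_comm]
  simp_rw [← mul_sum, sum_vertexSign_mul_vertexSign, mul_ite, mul_zero, sum_ite_eq,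
    if_pos (mem_univ i)]
  ring

theorem two_mul_sum_mul_sum_vertexSign_mul_sub_le_sum_sq (H : Finset ι → ℝ) (c : ι → ℝ) :
    2 * ∑ i, c i * ∑ t, vertexSign t i * H t - Fintype.card (Finset ι) * ∑ i, c i ^ 2
      ≤ ∑ t, H t ^ 2 := by
  have hcross : ∑ t, H t * ∑ i, c i * vertexSign t i = ∑ i, c i * ∑ t, vertexSign t i * H t := by
    simp_rw [mul_sum]
    rw [sum_comm]
    exact sum_congr rfl fun i _ => sum_congr rfl fun t _ => by ring
  have hnonneg : 0 ≤ ∑ t, (H t - ∑ i, c i * vertexSign t i) ^ 2 :=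
    sum_nonneg fun t _ => sq_nonneg _
  simp_rw [sub_sq, sum_add_distrib, sum_sub_distrib, mul_assoc, ← mul_sum, hcross,
    sum_sq_sum_mul_vertexSign] at hnonneg
  linarith

variable (p : Finset ι → ℝ)

def inclProb (i : ι) : ℝ := ∑ s, if i ∈ s then p s else 0

def jointInclProb (i j : ι) : ℝ := ∑ s, if i ∈ s ∧ j ∈ s then p s else 0

noncomputable def htWeight (s : Finset ι) (i : ι) : ℝ :=
  (if i ∈ s then (inclProb p i)⁻¹ else 0) - 1

noncomputable def htEstimator (m π : ι → ℝ) (s : Finset ι) (y : ι → ℝ) : ℝ :=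
  (∑ i, m i) + ∑ i ∈ s, (y i - m i) / π i

variable {p}

lemma jointInclProb_self (i : ι) : jointInclProb p i i = inclProb p i := by
  simp [jointInclProb, inclProb]

lemma inclProb_le_one (hp0 : ∀ s, 0 ≤ p s) (hp1 : ∑ s, p s = 1) (i : ι) : inclProb p i ≤ 1 :=
  hp1 ▸ sum_le_sum fun s _ => by split_ifs <;> simp [hp0 s]

lemma sum_ite_notMem (hp1 : ∑ s, p s = 1) (i : ι) :
    ∑ s, (if i ∈ s then 0 else p s) = 1 - inclProb p i := by
  rw [inclProb, ← hp1, ← sum_sub_distrib]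
  exact sum_congr rfl fun s _ => by split_ifs <;> ring

lemma sum_mul_htWeight (hp1 : ∑ s, p s = 1) {i : ι} (hi : inclProb p i ≠ 0) :
    ∑ s, p s * htWeight p s i = 0 := by
  have hmem : ∀ s, p s * (if i ∈ s then (inclProb p i)⁻¹ else 0)
      = (if i ∈ s then p s else 0) * (inclProb p i)⁻¹ := fun s => by split_ifs <;> simp
  simp_rw [htWeight, mul_sub, mul_one, sum_sub_distrib, hmem, ← sum_mul]
  rw [← inclProb, mul_inv_cancel₀ hi, hp1, sub_self]

lemma sum_mul_htWeight_mul_htWeight (hp1 : ∑ s, p s = 1) {i j : ι}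
    (hi : inclProb p i ≠ 0) (hj : inclProb p j ≠ 0) :
    ∑ s, p s * (htWeight p s i * htWeight p s j)
      = jointInclProb p i j / (inclProb p i * inclProb p j) - 1 := by
  have hprod : ∀ s, p s * ((if i ∈ s then (inclProb p i)⁻¹ else 0)
      * (if j ∈ s then (inclProb p j)⁻¹ else 0))
      = (if i ∈ s ∧ j ∈ s then p s else 0) / (inclProb p i * inclProb p j) := fun s => by
    by_cases hi : i ∈ s <;> by_cases hj : j ∈ s <;> simp [hi, hj, div_eq_mul_inv, mul_comm]
  have expand : ∀ s, p s * (htWeight p s i * htWeight p s j)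
      = p s * ((if i ∈ s then (inclProb p i)⁻¹ else 0) * (if j ∈ s then (inclProb p j)⁻¹ else 0))
        - p s * htWeight p s i - p s * htWeight p s j - p s := fun s => by
    simp only [htWeight]; ring
  simp_rw [expand, sum_sub_distrib, hprod, ← sum_div, sum_mul_htWeight hp1 hi,
    sum_mul_htWeight hp1 hj, hp1, jointInclProb]
  ring

lemma sum_mul_htWeight_mul_self (hp1 : ∑ s, p s = 1) {i : ι} (hi : inclProb p i ≠ 0) :
    ∑ s, p s * (htWeight p s i * htWeight p s i) = (1 - inclProb p i) / inclProb p i := by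
  rw [sum_mul_htWeight_mul_htWeight hp1 hi hi, jointInclProb_self]
  field_simp

lemma sum_mul_htWeight_mul_htWeight_of_indep (hp1 : ∑ s, p s = 1)
    (hpos : ∀ i, inclProb p i ≠ 0)
    (hind : ∀ i j, i ≠ j → jointInclProb p i j = inclProb p i * inclProb p j) (i j : ι) :
    ∑ s, p s * (htWeight p s i * htWeight p s j)
      = if i = j then (1 - inclProb p i) / inclProb p i else 0 := by
  split_ifs with h
  · exact h ▸ sum_mul_htWeight_mul_self hp1 (hpos i)
  · rw [sum_mul_htWeight_mul_htWeight hp1 (hpos i) (hpos j), hind i j h,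
      div_self (mul_ne_zero (hpos i) (hpos j)), sub_self]

theorem htEstimator_sub_sum (m y : ι → ℝ) (s : Finset ι) :
    htEstimator m (inclProb p) s y - ∑ i, y i = ∑ i, (y i - m i) * htWeight p s i := by
  have hmem : ∑ i ∈ s, (y i - m i) / inclProb p i
      = ∑ i, (y i - m i) * (if i ∈ s then (inclProb p i)⁻¹ else 0) := by
    simp_rw [mul_ite, mul_zero, sum_ite_mem, univ_inter, div_eq_mul_inv]
  simp only [htEstimator, hmem, htWeight, mul_sub, mul_one, sum_sub_distrib]
  ring

theorem sum_mul_htEstimator (hp1 : ∑ s, p s = 1) (hpos : ∀ i, inclProb p i ≠ 0)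
    (m y : ι → ℝ) : ∑ s, p s * htEstimator m (inclProb p) s y = ∑ i, y i := by
  have herr : ∑ s, p s * (htEstimator m (inclProb p) s y - ∑ i, y i) = 0 := by
    simp_rw [htEstimator_sub_sum, mul_sum, mul_left_comm (p _)]
    rw [sum_comm]
    simp_rw [← mul_sum, sum_mul_htWeight hp1 (hpos _), mul_zero, sum_const_zero]
  simp_rw [mul_sub, sum_sub_distrib, ← sum_mul, hp1, one_mul, sub_eq_zero] at herr
  exact herr

theorem sum_mul_htEstimator_sub_sq (hp1 : ∑ s, p s = 1) (hpos : ∀ i, inclProb p i ≠ 0)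
    (hind : ∀ i j, i ≠ j → jointInclProb p i j = inclProb p i * inclProb p j) (m y : ι → ℝ) :
    ∑ s, p s * (htEstimator m (inclProb p) s y - ∑ i, y i) ^ 2
      = ∑ i, (y i - m i) ^ 2 * ((1 - inclProb p i) / inclProb p i) := by
  simp_rw [htEstimator_sub_sum]
  exact sum_mul_sum_sq_of_orthogonal p (fun i s => htWeight p s i) _
    (sum_mul_htWeight_mul_htWeight_of_indep hp1 hpos hind) _

theorem isLUB_risk_htEstimator (hp0 : ∀ s, 0 ≤ p s) (hp1 : ∑ s, p s = 1)
    (hpos : ∀ i, 0 < inclProb p i)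
    (hind : ∀ i j, i ≠ j → jointInclProb p i j = inclProb p i * inclProb p j)
    {m r : ι → ℝ} (hr : ∀ i, 0 ≤ r i) :
    IsLUB ((fun y => ∑ s, p s * (htEstimator m (inclProb p) s y - ∑ i, y i) ^ 2) ''
      {y | ∀ i, y i ∈ Set.Icc (m i - r i) (m i + r i)})
      (∑ i, r i ^ 2 * ((1 - inclProb p i) / inclProb p i)) := by
  simp_rw [sum_mul_htEstimator_sub_sq hp1 (fun i => (hpos i).ne') hind m]
  refine ⟨?_, fun M hM => hM ⟨m + r, fun i => ⟨by simp; linarith [hr i], by simp⟩, by simp⟩⟩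
  rintro _ ⟨y, hy, rfl⟩
  refine sum_le_sum fun i _ => mul_le_mul_of_nonneg_right ?_ <|
    div_nonneg (sub_nonneg.2 (inclProb_le_one hp0 hp1 i)) (hpos i).le
  exact sq_le_sq' (by linarith [(hy i).1]) (by linarith [(hy i).2])

lemma sum_mul_htWeight_mul_of_notMem (hp1 : ∑ s, p s = 1) {i : ι}
    {C : Finset ι → ℝ} (hC : ∑ s, p s * C s = 0) {c : ℝ} (hc : ∀ s, i ∉ s → C s = c) :
    ∑ s, p s * (htWeight p s i * C s) = -c * ((1 - inclProb p i) / inclProb p i) := by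
  have split : ∀ s, p s * (htWeight p s i * C s)
      = (p s * C s - (if i ∈ s then 0 else p s) * c) / inclProb p i - p s * C s := fun s => by
    by_cases h : i ∈ s
    · simp [htWeight, h, div_eq_mul_inv]; ring
    · simp [htWeight, h, hc s h]
  simp_rw [split, sum_sub_distrib, ← sum_div, sum_sub_distrib, ← sum_mul, hC,
    sum_ite_notMem hp1]
  ring

lemma sum_vertexSign_mul_error_of_notMem {δ : Finset ι → (ι → ℝ) → ℝ}
    (hδ : ∀ s (y y' : ι → ℝ), (∀ i ∈ s, y i = y' i) → δ s y = δ s y') (m r : ι → ℝ)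
    {s : Finset ι} {i : ι} (hi : i ∉ s) :
    ∑ t, vertexSign t i * (δ s (vertex m r t) - ∑ j, vertex m r t j)
      = -(Fintype.card (Finset ι) * r i) := by
  have hδ_flip : ∑ t, vertexSign t i * δ s (vertex m r t) = 0 :=
    sum_vertexSign_mul_eq_zero i fun t => hδ s _ _ fun j hj => by
      simp only [vertex, vertexSign_symmDiff_of_ne t (ne_of_mem_of_not_mem hj hi)]
  have hconst : ∑ t : Finset ι, vertexSign t i * ∑ j, m j = 0 :=
    sum_vertexSign_mul_eq_zero i fun _ => rfl
  simp_rw [vertex, sum_add_distrib, mul_sub, mul_add, sum_sub_distrib, sum_add_distrib, hδ_flip,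
    hconst, sum_vertexSign_mul_sum_mul_vertexSign]
  ring

theorem card_mul_le_sum_risk_vertex (hp0 : ∀ s, 0 ≤ p s) (hp1 : ∑ s, p s = 1)
    (hpos : ∀ i, inclProb p i ≠ 0) (m r : ι → ℝ) {δ : Finset ι → (ι → ℝ) → ℝ}
    (hδ : ∀ s (y y' : ι → ℝ), (∀ i ∈ s, y i = y' i) → δ s y = δ s y')
    (hunb : ∀ t, ∑ s, p s * δ s (vertex m r t) = ∑ i, vertex m r t i) :
    Fintype.card (Finset ι) * ∑ i, r i ^ 2 * ((1 - inclProb p i) / inclProb p i)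
      ≤ ∑ t, ∑ s, p s * (δ s (vertex m r t) - ∑ i, vertex m r t i) ^ 2 := by
  set K : ℝ := (Fintype.card (Finset ι) : ℝ)
  set q : ι → ℝ := fun i => (1 - inclProb p i) / inclProb p i
  set err : Finset ι → Finset ι → ℝ := fun s t => δ s (vertex m r t) - ∑ i, vertex m r t i
  set C : Finset ι → ι → ℝ := fun s i => ∑ t, vertexSign t i * err s t
  have hcoef : ∀ i, ∑ s, p s * (htWeight p s i * C s i) = K * r i * q i := by
    intro i
    have hC : ∑ s, p s * C s i = 0 := by
      simp_rw [C, mul_sum]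
      rw [sum_comm]
      simp_rw [mul_left_comm (p _), ← mul_sum, err, mul_sub, sum_sub_distrib, ← sum_mul, hunb,
        hp1, one_mul, sub_self, mul_zero, sum_const_zero]
    rw [sum_mul_htWeight_mul_of_notMem hp1 hC (c := -(K * r i))
      fun s hs => sum_vertexSign_mul_error_of_notMem hδ m r hs]
    ring
  -- the test coefficients are those of the error `∑ i, htWeight p s i * r i * ε i` of `T̂`
  have hbessel : ∀ s, 2 * ∑ i, htWeight p s i * r i * C s i
      - K * ∑ i, (htWeight p s i * r i) ^ 2 ≤ ∑ t, err s t ^ 2 :=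
    fun s => two_mul_sum_mul_sum_vertexSign_mul_sub_le_sum_sq (err s) _
  calc K * ∑ i, r i ^ 2 * q i
      = ∑ i, (2 * r i * (K * r i * q i) - K * r i ^ 2 * q i) := by
        rw [mul_sum]; exact sum_congr rfl fun i _ => by ring
    _ = ∑ i, (2 * r i * ∑ s, p s * (htWeight p s i * C s i)
          - K * r i ^ 2 * ∑ s, p s * (htWeight p s i * htWeight p s i)) := by
        simp_rw [hcoef, q, sum_mul_htWeight_mul_self hp1 (hpos _)]
    _ = ∑ s, p s * (2 * ∑ i, htWeight p s i * r i * C s i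
          - K * ∑ i, (htWeight p s i * r i) ^ 2) := by
        simp only [mul_sum, ← sum_sub_distrib]
        rw [sum_comm]
        exact sum_congr rfl fun s _ => sum_congr rfl fun i _ => by ring
    _ ≤ ∑ s, p s * ∑ t, err s t ^ 2 :=
        sum_le_sum fun s _ => mul_le_mul_of_nonneg_left (hbessel s) (hp0 s)
    _ = ∑ t, ∑ s, p s * err s t ^ 2 := by simp_rw [mul_sum]; exact sum_comm

end SamplingDesign

open SamplingDesign

/-- Proposition: minimax risk under pairwise independence.
If the inclusion indicators of the design `p` are pairwise independent
(`π_{ij} = π i * π j` for `i ≠ j`) with `π i > 0`, then the minimax risk among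
all unbiased estimators equals `∑ i, r i ^ 2 * (1 - π i)/π i`:
* (lower bound) for every unbiased estimator `δ`, every upper bound `M` of the
  risk of `δ` over `Θ` satisfies `∑ i, r i ^ 2 * (1 - π i)/π i ≤ M`;
* (attainment) the midpoint-differenced Horvitz–Thompson estimator `T̂` is
  unbiased, and `∑ i, r i ^ 2 * (1 - π i)/π i` is the least upper bound of its
  risk over `Θ`. -/
theorem minimax_pairwise_independent
    (N : ℕ) (a b : Fin N → ℝ) (hab : ∀ i, a i ≤ b i)
    (m r : Fin N → ℝ)
    (hm : ∀ i, m i = (a i + b i) / 2)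
    (hr : ∀ i, r i = (b i - a i) / 2)
    (p : Finset (Fin N) → ℝ) (hp0 : ∀ s, 0 ≤ p s)
    (hp1 : ∑ s : Finset (Fin N), p s = 1)
    (π : Fin N → ℝ)
    (hπ : ∀ i, π i = ∑ s : Finset (Fin N), if i ∈ s then p s else 0)
    (hπpos : ∀ i, 0 < π i)
    (πij : Fin N → Fin N → ℝ)
    (hπij : ∀ i j, πij i j = ∑ s : Finset (Fin N), if i ∈ s ∧ j ∈ s then p s else 0)
    (hpind : ∀ i j, i ≠ j → πij i j = π i * π j) :
    -- lower bound: no unbiased estimator has worst-case risk below the value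
    (∀ δ : Finset (Fin N) → (Fin N → ℝ) → ℝ,
      (∀ s (y y' : Fin N → ℝ), (∀ i ∈ s, y i = y' i) → δ s y = δ s y') →
      (∀ y : Fin N → ℝ, (∀ i, y i ∈ Set.Icc (a i) (b i)) →
        ∑ s : Finset (Fin N), p s * δ s y = ∑ i, y i) →
      ∀ M : ℝ,
        (∀ y : Fin N → ℝ, (∀ i, y i ∈ Set.Icc (a i) (b i)) →
          ∑ s : Finset (Fin N), p s * (δ s y - ∑ i, y i) ^ 2 ≤ M) →
        ∑ i, r i ^ 2 * ((1 - π i) / π i) ≤ M) ∧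
    -- the midpoint-differenced HT estimator is unbiased ...
    (∀ y : Fin N → ℝ, (∀ i, y i ∈ Set.Icc (a i) (b i)) →
      ∑ s : Finset (Fin N),
        p s * ((∑ i, m i) + ∑ i ∈ s, (y i - m i) / π i) = ∑ i, y i) ∧
    -- ... and attains the minimax value: its worst-case risk over Θ equals it
    IsLUB ((fun y : Fin N → ℝ =>
        ∑ s : Finset (Fin N),
          p s * (((∑ i, m i) + ∑ i ∈ s, (y i - m i) / π i) - ∑ i, y i) ^ 2) ''
      {y : Fin N → ℝ | ∀ i, y i ∈ Set.Icc (a i) (b i)})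
      (∑ i, r i ^ 2 * ((1 - π i) / π i)) := by
  obtain rfl : π = inclProb p := funext hπ
  obtain rfl : πij = jointInclProb p := funext fun i => funext (hπij i)
  have hr0 i : 0 ≤ r i := by linarith [hab i, hr i]
  obtain rfl : a = m - r := funext fun i => by simp only [Pi.sub_apply]; linarith [hm i, hr i]
  obtain rfl : b = m + r := funext fun i => by simp only [Pi.add_apply]; linarith [hm i, hr i]
  refine ⟨fun δ hδ hunb M hM => ?_, fun y _ => sum_mul_htEstimator hp1 (fun i => (hπpos i).ne') m y,
    isLUB_risk_htEstimator hp0 hp1 hπpos hpind hr0⟩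
  have hvertex t : ∀ i, vertex m r t i ∈ Set.Icc (m i - r i) (m i + r i) :=
    fun i => vertex_mem_Icc (hr0 i) t
  have hK : (0 : ℝ) < Fintype.card (Finset (Fin N)) := by exact_mod_cast Fintype.card_pos
  refine le_of_mul_le_mul_left ?_ hK
  calc _ ≤ _ := card_mul_le_sum_risk_vertex hp0 hp1 (fun i => (hπpos i).ne') m r hδ
        fun t => hunb _ (hvertex t)
    _ ≤ ∑ _t : Finset (Fin N), M := sum_le_sum fun t _ => hM _ (hvertex t)
    _ = _ := by simp
end

section
/- Let 0 < n < N and suppose r_i > 0 for all i. Define V_n as the minimum of Σ_{i=1}^N r_i²(1−π_i)/π_i over all vectors π with 0 < π_i ≤ 1 and Σ_{i=1}^N π_i ≤ n. Then among all pairs (p,δ) where p is a sampling design with π_i > 0 for all i and expected sample size E_p[|S|] ≤ n, and δ is an unbiased estimator, inf_{p,δ} sup_{y∈Θ} R(δ,p;y) = V_n. Moreover V_n is attained by sampling each unit independently with inclusion probabilities π_i* = min(1, c r_i), where c > 0 is chosen so that Σ_{i=1}^N π_i* = n, together with the midpoint-differenced Horvitz–Thompson estimator T̂. -/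
/-!
Lower bound: put the uniform prior on the `2 ^ N` vertices `m ± r` of `Θ`. For a fixed sample `s`,
let `d i s` be the first-order Walsh coefficient of `δ s` in the direction of unit `i`. It vanishes
for `i ∉ s`, since `δ s` does not see `y i`, and unbiasedness makes its `p`-average equal to `r i`.
By Bessel's inequality the Bayes risk dominates `∑ i, ∑ s, p s * (d i s - r i) ^ 2`, and
Cauchy–Schwarz over the samples containing `i` bounds the `i`-th term below by
`r i ^ 2 * (1 - π i) / π i`. So the worst-case risk is at least `V(π) ≥ V_n`.

Upper bound: under independent Bernoulli sampling the Horvitz–Thompson error is a sum of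
independent centred terms `(y i - m i) * (1(i ∈ S) / π i - 1)`, so its risk is
`∑ i, (y i - m i) ^ 2 * (1 - π i) / π i`, maximal at `y = b` where it equals `V(π*)`; and `π*`
minimizes `V` by a pointwise Lagrangian argument with multiplier `1 / c ^ 2`.
-/

open Finset
open scoped BigOperators

namespace MinimaxSampling

section Hypercube

variable {ι : Type*}

def rademacher (σ : ι → Bool) (i : ι) : ℝ := if σ i then 1 else -1

lemma rademacher_mul_self (σ : ι → Bool) (i : ι) : rademacher σ i * rademacher σ i = 1 := by
  unfold rademacher; split_ifs <;> norm_num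

def vertex (m r : ι → ℝ) (σ : ι → Bool) (i : ι) : ℝ := m i + r i * rademacher σ i

lemma vertex_mem_Icc {m r : ι → ℝ} (hr : ∀ i, 0 ≤ r i) (σ : ι → Bool) (i : ι) :
    vertex m r σ i ∈ Set.Icc (m i - r i) (m i + r i) := by
  unfold vertex rademacher
  constructor <;> split_ifs <;> linarith [hr i]

variable [DecidableEq ι]

lemma rademacher_update_self (σ : ι → Bool) (i : ι) :
    rademacher (Function.update σ i (!σ i)) i = -rademacher σ i := by
  unfold rademacher; cases σ i <;> simp

lemma rademacher_update_of_ne (σ : ι → Bool) {i j : ι} (b : Bool) (h : j ≠ i) :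
    rademacher (Function.update σ i b) j = rademacher σ j := by
  simp [rademacher, Function.update_of_ne h]

variable [Fintype ι]

lemma expect_mul_sum_rademacher (f : (ι → Bool) → ℝ) (w : ι → ℝ) :
    𝔼 σ, f σ * ∑ i, w i * rademacher σ i = ∑ i, w i * 𝔼 σ, f σ * rademacher σ i := by
  simp_rw [mul_sum, expect_sum_comm, mul_expect]
  exact sum_congr rfl fun i _ => expect_congr rfl fun σ _ => by ring

lemma expect_eq_zero_of_flip (i : ι) {F : (ι → Bool) → ℝ}
    (hF : ∀ σ, F (Function.update σ i (!σ i)) = -F σ) : 𝔼 σ, F σ = 0 := by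
  have hflip : Function.Involutive fun σ : ι → Bool => Function.update σ i (!σ i) := by
    intro σ; simp
  have h := Fintype.expect_bijective _ hflip.bijective (fun σ => F (Function.update σ i (!σ i))) F
    fun _ => rfl
  simp_rw [hF, expect_neg_distrib] at h
  linarith

lemma expect_rademacher_mul_rademacher (i j : ι) :
    𝔼 σ, rademacher σ i * rademacher σ j = if i = j then 1 else 0 := by
  split_ifs with h
  · subst h; simp_rw [rademacher_mul_self]; exact Fintype.expect_const 1
  · refine expect_eq_zero_of_flip i fun σ => ?_
    rw [rademacher_update_self, rademacher_update_of_ne σ _ (Ne.symm h), neg_mul]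

lemma expect_affine_mul_rademacher (c : ℝ) (w : ι → ℝ) (j : ι) :
    𝔼 σ, (c + ∑ i, w i * rademacher σ i) * rademacher σ j = w j := by
  have hmean : 𝔼 σ, rademacher σ j = 0 :=
    expect_eq_zero_of_flip j fun σ => rademacher_update_self σ j
  simp_rw [add_mul, expect_add_distrib, ← mul_expect, hmean, mul_zero, zero_add,
    mul_comm _ (rademacher _ j), expect_mul_sum_rademacher, mul_comm (rademacher _ j),
    expect_rademacher_mul_rademacher]
  simp

lemma sum_sq_expect_mul_rademacher_le (f : (ι → Bool) → ℝ) :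
    ∑ i, (𝔼 σ, f σ * rademacher σ i) ^ 2 ≤ 𝔼 σ, f σ ^ 2 := by
  set c : ι → ℝ := fun i => 𝔼 σ, f σ * rademacher σ i
  set g : (ι → Bool) → ℝ := fun σ => ∑ i, c i * rademacher σ i
  have hfg : 𝔼 σ, f σ * g σ = ∑ i, c i ^ 2 := by
    simp only [g, expect_mul_sum_rademacher, sq, c]
  have hgg : 𝔼 σ, g σ * g σ = ∑ i, c i ^ 2 := by
    rw [expect_mul_sum_rademacher]
    refine sum_congr rfl fun i _ => ?_
    rw [sq, ← expect_affine_mul_rademacher 0 c i]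
    simp [g]
  have hnonneg : 0 ≤ 𝔼 σ, (f σ - g σ) ^ 2 := expect_nonneg fun σ _ => sq_nonneg _
  have hexpand : 𝔼 σ, (f σ - g σ) ^ 2 = 𝔼 σ, f σ ^ 2 - 2 * 𝔼 σ, f σ * g σ + 𝔼 σ, g σ * g σ := by
    rw [mul_expect, ← expect_sub_distrib, ← expect_add_distrib]
    exact expect_congr rfl fun σ _ => by ring
  linarith

lemma expect_mul_rademacher_eq_zero_of_notMem {s : Finset ι} {F : (ι → Bool) → ℝ}
    (hF : ∀ σ σ', (∀ j ∈ s, σ j = σ' j) → F σ = F σ') {i : ι} (hi : i ∉ s) :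
    𝔼 σ, F σ * rademacher σ i = 0 := by
  refine expect_eq_zero_of_flip i fun σ => ?_
  rw [hF _ σ fun j hj => Function.update_of_ne (ne_of_mem_of_not_mem hj hi) _ _,
    rademacher_update_self, mul_neg]

end Hypercube

lemma sq_mul_one_sub_div_le_sum_mul_sq {α : Type*} [Fintype α] (p : α → ℝ)
    (hp0 : ∀ s, 0 ≤ p s) (hp1 : ∑ s, p s = 1) (P : α → Prop) [DecidablePred P] {π : ℝ}
    (hπ : π = ∑ s, if P s then p s else 0) (hπpos : 0 < π) (d : α → ℝ)
    (hd : ∀ s, ¬P s → d s = 0) {r : ℝ} (hdr : ∑ s, p s * d s = r) :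
    r ^ 2 * ((1 - π) / π) ≤ ∑ s, p s * (d s - r) ^ 2 := by
  rw [← sum_filter] at hπ
  have hsplit (f : α → ℝ) : ∑ s, f s = ∑ s with P s, f s + ∑ s with ¬P s, f s :=
    (sum_filter_add_sum_filter_not _ _ _).symm
  have hmass : ∑ s with ¬P s, p s = 1 - π := by linarith [hsplit p]
  have hmean : ∑ s with P s, p s * (d s - r) = r * (1 - π) := by
    have hzero : ∑ s, p s * (d s - r) = 0 := by
      simp_rw [mul_sub, sum_sub_distrib, ← sum_mul, hdr, hp1, one_mul, sub_self]
    have hoff : ∑ s with ¬P s, p s * (d s - r) = -(r * (1 - π)) := by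
      rw [← hmass, sum_congr rfl fun s hs => by rw [hd s (mem_filter.1 hs).2], mul_sum]
      simp_rw [← sum_neg_distrib]
      exact sum_congr rfl fun s _ => by ring
    linarith [hsplit fun s => p s * (d s - r)]
  have hcs : (r * (1 - π)) ^ 2 ≤ π * ∑ s with P s, p s * (d s - r) ^ 2 := by
    rw [← hmean, hπ]
    exact sum_sq_le_sum_mul_sum_of_sq_le_mul _ (fun s _ => hp0 s)
      (fun s _ => mul_nonneg (hp0 s) (sq_nonneg _)) fun s _ => le_of_eq (by ring)
  have hoff : ∑ s with ¬P s, p s * (d s - r) ^ 2 = r ^ 2 * (1 - π) := by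
    rw [← hmass, mul_sum]
    exact sum_congr rfl fun s hs => by rw [hd s (mem_filter.1 hs).2]; ring
  have hon : r ^ 2 * (1 - π) ^ 2 / π ≤ ∑ s with P s, p s * (d s - r) ^ 2 := by
    rw [div_le_iff₀ hπpos]; linarith
  have hgoal : r ^ 2 * ((1 - π) / π) = r ^ 2 * (1 - π) ^ 2 / π + r ^ 2 * (1 - π) := by
    field_simp; ring
  linarith [hsplit fun s => p s * (d s - r) ^ 2]

section Variance

variable {ι : Type*} [Fintype ι]

noncomputable def designVariance (r π : ι → ℝ) : ℝ := ∑ i, r i ^ 2 * ((1 - π i) / π i)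

lemma isGreatest_designVariance_sub {m r π : ι → ℝ} (hr : ∀ i, 0 ≤ r i)
    (hπ : ∀ i, 0 < π i ∧ π i ≤ 1) :
    IsGreatest ((fun y : ι → ℝ => designVariance (fun i => y i - m i) π) ''
      {y | ∀ i, y i ∈ Set.Icc (m i - r i) (m i + r i)}) (designVariance r π) := by
  refine ⟨⟨fun i => m i + r i, fun i => ⟨by linarith [hr i], le_rfl⟩, by simp [designVariance]⟩, ?_⟩
  rintro _ ⟨y, hy, rfl⟩
  exact sum_le_sum fun i _ => mul_le_mul_of_nonneg_right
    (sq_le_sq' (by linarith [(hy i).1]) (by linarith [(hy i).2]))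
    (div_nonneg (by linarith [hπ i]) (hπ i).1.le)

/-- `p ↦ A ^ 2 / p + p / c ^ 2` is minimized over `(0, 1]` at `min 1 (c * A)`. -/
lemma lagrangian_min_le {A c p : ℝ} (hc : 0 < c) (hp : 0 < p) (hp1 : p ≤ 1) :
    A ^ 2 * ((1 - min 1 (c * A)) / min 1 (c * A)) + min 1 (c * A) / c ^ 2
      ≤ A ^ 2 * ((1 - p) / p) + p / c ^ 2 := by
  rcases min_cases 1 (c * A) with ⟨hmin, hcA⟩ | ⟨hmin, hcA⟩
  · have hgap : A ^ 2 * ((1 - p) / p) + p / c ^ 2 - (A ^ 2 * ((1 - 1) / 1) + 1 / c ^ 2)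
        = (1 - p) * ((c * A) ^ 2 - p) / (p * c ^ 2) := by
      field_simp; ring
    have : 0 ≤ (1 - p) * ((c * A) ^ 2 - p) / (p * c ^ 2) :=
      div_nonneg (mul_nonneg (by linarith) (by nlinarith)) (by positivity)
    rw [hmin]; linarith
  · have hgap : A ^ 2 * ((1 - p) / p) + p / c ^ 2
        - (A ^ 2 * ((1 - c * A) / (c * A)) + c * A / c ^ 2) = (c * A - p) ^ 2 / (p * c ^ 2) := by
      field_simp; ring
    have : 0 ≤ (c * A - p) ^ 2 / (p * c ^ 2) := by positivity
    rw [hmin]; linarith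

lemma designVariance_min_le {r π : ι → ℝ} {c : ℝ} (hc : 0 < c) (hπ : ∀ i, 0 < π i ∧ π i ≤ 1)
    (hsum : ∑ i, π i ≤ ∑ i, min 1 (c * r i)) :
    designVariance r (fun i => min 1 (c * r i)) ≤ designVariance r π := by
  have h := sum_le_sum fun i (_ : i ∈ univ) => lagrangian_min_le (A := r i) hc (hπ i).1 (hπ i).2
  rw [sum_add_distrib, sum_add_distrib, ← sum_div, ← sum_div] at h
  have : (∑ i, π i) / c ^ 2 ≤ (∑ i, min 1 (c * r i)) / c ^ 2 :=
    div_le_div_of_nonneg_right hsum (by positivity)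
  unfold designVariance
  linarith

end Variance

variable {ι : Type*} [Fintype ι] [DecidableEq ι]

theorem designVariance_le_of_unbiased (m r : ι → ℝ) (p : Finset ι → ℝ) (hp0 : ∀ s, 0 ≤ p s)
    (hp1 : ∑ s, p s = 1) (π : ι → ℝ) (hπ : ∀ i, π i = ∑ s, if i ∈ s then p s else 0)
    (hπpos : ∀ i, 0 < π i) (δ : Finset ι → (ι → ℝ) → ℝ)
    (hδ : ∀ s (y y' : ι → ℝ), (∀ i ∈ s, y i = y' i) → δ s y = δ s y')
    (hunb : ∀ σ, ∑ s, p s * δ s (vertex m r σ) = ∑ i, vertex m r σ i) {M : ℝ}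
    (hM : ∀ σ, ∑ s, p s * (δ s (vertex m r σ) - ∑ i, vertex m r σ i) ^ 2 ≤ M) :
    designVariance r π ≤ M := by
  set d : ι → Finset ι → ℝ := fun i s => 𝔼 σ, δ s (vertex m r σ) * rademacher σ i
  have htotal (σ : ι → Bool) : ∑ i, vertex m r σ i = ∑ i, m i + ∑ i, r i * rademacher σ i :=
    sum_add_distrib
  have hcoef (s : Finset ι) (i : ι) :
      𝔼 σ, (δ s (vertex m r σ) - ∑ j, vertex m r σ j) * rademacher σ i = d i s - r i := by
    simp_rw [sub_mul, expect_sub_distrib, htotal, expect_affine_mul_rademacher]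
    rfl
  have hlocal (i : ι) (s : Finset ι) (hi : i ∉ s) : d i s = 0 :=
    expect_mul_rademacher_eq_zero_of_notMem (fun σ σ' h => hδ s _ _ fun j hj => by
      simp [vertex, rademacher, h j hj]) hi
  have hmean (i : ι) : ∑ s, p s * d i s = r i := by
    simp_rw [d, mul_expect, ← expect_sum_comm, ← mul_assoc, ← sum_mul, hunb, htotal]
    exact expect_affine_mul_rademacher _ _ i
  calc designVariance r π
      ≤ ∑ i, ∑ s, p s * (d i s - r i) ^ 2 := sum_le_sum fun i _ =>
        sq_mul_one_sub_div_le_sum_mul_sq p hp0 hp1 (i ∈ ·) (hπ i) (hπpos i) (d i)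
          (hlocal i) (hmean i)
    _ = ∑ s, p s * ∑ i, (d i s - r i) ^ 2 := by rw [sum_comm]; simp_rw [mul_sum]
    _ ≤ ∑ s, p s * 𝔼 σ, (δ s (vertex m r σ) - ∑ j, vertex m r σ j) ^ 2 := by
        refine sum_le_sum fun s _ => mul_le_mul_of_nonneg_left ?_ (hp0 s)
        simpa only [hcoef] using sum_sq_expect_mul_rademacher_le fun σ =>
          δ s (vertex m r σ) - ∑ j, vertex m r σ j
    _ = 𝔼 σ, ∑ s, p s * (δ s (vertex m r σ) - ∑ j, vertex m r σ j) ^ 2 := by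
        simp_rw [mul_expect, expect_sum_comm]
    _ ≤ M := (expect_le_expect fun σ _ => hM σ).trans (Fintype.expect_const M).le

section BernoulliDesign

def bernoulliDesign (π : ι → ℝ) (s : Finset ι) : ℝ := ∏ i, if i ∈ s then π i else 1 - π i

lemma sum_prod_ite_mem {R : Type*} [CommSemiring R] (u v : ι → R) :
    ∑ s : Finset ι, ∏ i, (if i ∈ s then u i else v i) = ∏ i, (u i + v i) := by
  rw [prod_add, powerset_univ]
  refine sum_congr rfl fun t _ => ?_
  rw [← prod_mul_prod_compl t, compl_eq_univ_sdiff]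
  congr 1
  · exact prod_congr rfl fun i hi => if_pos hi
  · exact prod_congr rfl fun i hi => if_neg (mem_sdiff.1 hi).2

lemma sum_bernoulliDesign_mul_prod (π : ι → ℝ) (A : Finset ι) (x y : ι → ℝ) :
    ∑ s, bernoulliDesign π s * ∏ i ∈ A, (if i ∈ s then x i else y i)
      = ∏ i ∈ A, (π i * x i + (1 - π i) * y i) := by
  have hA (f : ι → ℝ) : ∏ i ∈ A, f i = ∏ i, if i ∈ A then f i else 1 := by
    rw [prod_ite_mem, univ_inter]
  have hfactor (s : Finset ι) : bernoulliDesign π s * ∏ i ∈ A, (if i ∈ s then x i else y i)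
      = ∏ i, if i ∈ s then π i * (if i ∈ A then x i else 1)
        else (1 - π i) * (if i ∈ A then y i else 1) := by
    rw [bernoulliDesign, hA, ← prod_mul_distrib]
    refine prod_congr rfl fun i _ => ?_
    split_ifs <;> simp
  rw [sum_congr rfl fun s _ => hfactor s, sum_prod_ite_mem, hA]
  refine prod_congr rfl fun i _ => ?_
  split_ifs <;> ring

lemma sum_bernoulliDesign (π : ι → ℝ) : ∑ s, bernoulliDesign π s = 1 := by
  simpa using sum_bernoulliDesign_mul_prod π ∅ 1 1

lemma sum_bernoulliDesign_mul_ite (π : ι → ℝ) (i : ι) (x y : ℝ) :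
    ∑ s, bernoulliDesign π s * (if i ∈ s then x else y) = π i * x + (1 - π i) * y := by
  simpa using sum_bernoulliDesign_mul_prod π {i} (fun _ => x) (fun _ => y)

lemma sum_bernoulliDesign_mul_ite_mul_ite (π : ι → ℝ) {i j : ι} (hij : i ≠ j) (x y x' y' : ℝ) :
    ∑ s, bernoulliDesign π s * ((if i ∈ s then x else y) * (if j ∈ s then x' else y'))
      = (π i * x + (1 - π i) * y) * (π j * x' + (1 - π j) * y') := by
  have h := sum_bernoulliDesign_mul_prod π {i, j} (Function.update (fun _ => x') i x)
    (Function.update (fun _ => y') i y)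
  simpa [prod_pair hij, Function.update_of_ne hij.symm] using h

lemma sum_ite_mem_bernoulliDesign (π : ι → ℝ) (i : ι) :
    ∑ s, (if i ∈ s then bernoulliDesign π s else 0) = π i := by
  simpa [mul_ite] using sum_bernoulliDesign_mul_ite π i 1 0

lemma bernoulliDesign_nonneg {π : ι → ℝ} (hπ : ∀ i, 0 ≤ π i ∧ π i ≤ 1) (s : Finset ι) :
    0 ≤ bernoulliDesign π s :=
  prod_nonneg fun i _ => by split_ifs <;> linarith [hπ i]

noncomputable def centeredWeight (π : ι → ℝ) (i : ι) (s : Finset ι) : ℝ :=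
  if i ∈ s then (π i)⁻¹ - 1 else -1

lemma sum_bernoulliDesign_mul_centeredWeight_mul {π : ι → ℝ} (hπ : ∀ i, π i ≠ 0) (i j : ι) :
    ∑ s, bernoulliDesign π s * (centeredWeight π i s * centeredWeight π j s)
      = if i = j then (1 - π i) / π i else 0 := by
  split_ifs with hij
  · subst hij
    have hsq (s : Finset ι) : centeredWeight π i s * centeredWeight π i s
        = if i ∈ s then ((π i)⁻¹ - 1) ^ 2 else 1 := by
      unfold centeredWeight; split_ifs <;> ring
    simp_rw [hsq, sum_bernoulliDesign_mul_ite]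
    field_simp [hπ i]
    ring
  · simp only [centeredWeight]
    rw [sum_bernoulliDesign_mul_ite_mul_ite π hij]
    field_simp [hπ i]
    ring

lemma sum_bernoulliDesign_mul_sq_sum_centeredWeight {π : ι → ℝ} (hπ : ∀ i, π i ≠ 0)
    (w : ι → ℝ) :
    ∑ s, bernoulliDesign π s * (∑ i, w i * centeredWeight π i s) ^ 2 = designVariance w π := by
  have hexpand (s : Finset ι) : bernoulliDesign π s * (∑ i, w i * centeredWeight π i s) ^ 2
      = ∑ i, ∑ j, w i * w j *
          (bernoulliDesign π s * (centeredWeight π i s * centeredWeight π j s)) := by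
    rw [sq, sum_mul_sum, mul_sum]
    exact sum_congr rfl fun i _ => by rw [mul_sum]; exact sum_congr rfl fun j _ => by ring
  simp_rw [hexpand]
  rw [sum_comm]
  simp_rw [sum_comm (γ := Finset ι), ← mul_sum, sum_bernoulliDesign_mul_centeredWeight_mul hπ]
  simp [designVariance, sq]

end BernoulliDesign

section HorvitzThompson

noncomputable def htEstimator (m π : ι → ℝ) (s : Finset ι) (y : ι → ℝ) : ℝ :=
  ∑ i, m i + ∑ i ∈ s, (y i - m i) / π i

lemma htEstimator_sub_sum (m π y : ι → ℝ) (s : Finset ι) :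
    htEstimator m π s y - ∑ i, y i = ∑ i, (y i - m i) * centeredWeight π i s := by
  have hs : ∑ i ∈ s, (y i - m i) / π i = ∑ i, if i ∈ s then (y i - m i) / π i else 0 := by
    rw [sum_ite_mem, univ_inter]
  rw [htEstimator, hs, ← sum_add_distrib, ← sum_sub_distrib]
  refine sum_congr rfl fun i _ => ?_
  unfold centeredWeight
  split_ifs <;> ring

lemma sum_mul_centeredWeight {p : Finset ι → ℝ} (hp1 : ∑ s, p s = 1) {π : ι → ℝ}
    (hπ : ∀ i, ∑ s, (if i ∈ s then p s else 0) = π i) (hπ0 : ∀ i, π i ≠ 0) (i : ι) :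
    ∑ s, p s * centeredWeight π i s = 0 := by
  have h (s : Finset ι) :
      p s * centeredWeight π i s = (if i ∈ s then p s else 0) * (π i)⁻¹ - p s := by
    unfold centeredWeight; split_ifs <;> ring
  rw [sum_congr rfl fun s _ => h s, sum_sub_distrib, ← sum_mul, hπ, hp1, mul_inv_cancel₀ (hπ0 i),
    sub_self]

lemma sum_mul_htEstimator {p : Finset ι → ℝ} (hp1 : ∑ s, p s = 1) {π : ι → ℝ}
    (hπ : ∀ i, ∑ s, (if i ∈ s then p s else 0) = π i) (hπ0 : ∀ i, π i ≠ 0) (m y : ι → ℝ) :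
    ∑ s, p s * htEstimator m π s y = ∑ i, y i := by
  have h (s : Finset ι) : p s * htEstimator m π s y
      = ∑ i, (y i - m i) * (p s * centeredWeight π i s) + p s * ∑ i, y i := by
    rw [← sub_add_cancel (htEstimator m π s y) (∑ i, y i), htEstimator_sub_sum, mul_add, mul_sum]
    exact congrArg (· + _) (sum_congr rfl fun i _ => by ring)
  rw [sum_congr rfl fun s _ => h s, sum_add_distrib, ← sum_mul, hp1, one_mul, sum_comm]
  simp_rw [← mul_sum, sum_mul_centeredWeight hp1 hπ hπ0, mul_zero, sum_const_zero, zero_add]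

lemma sum_bernoulliDesign_mul_htEstimator_sub_sq {π : ι → ℝ} (hπ : ∀ i, π i ≠ 0)
    (m y : ι → ℝ) :
    ∑ s, bernoulliDesign π s * (htEstimator m π s y - ∑ i, y i) ^ 2
      = designVariance (fun i => y i - m i) π := by
  simp_rw [htEstimator_sub_sum, sum_bernoulliDesign_mul_sq_sum_centeredWeight hπ]

end HorvitzThompson

end MinimaxSampling

open MinimaxSampling in
theorem minimax_design_and_estimator_general
    (N : ℕ) (a b : Fin N → ℝ)
    (m r : Fin N → ℝ)
    (hm : ∀ i, m i = (a i + b i) / 2)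
    (hr : ∀ i, r i = (b i - a i) / 2) (hrpos : ∀ i, 0 < r i)
    (n : ℝ)
    (Vn : ℝ)
    (hVn : IsLeast {v : ℝ | ∃ π : Fin N → ℝ, (∀ i, 0 < π i ∧ π i ≤ 1) ∧
      (∑ i, π i) ≤ n ∧ v = ∑ i, r i ^ 2 * ((1 - π i) / π i)} Vn)
    (c : ℝ) (hc : 0 < c) (hcsum : ∑ i, min 1 (c * r i) = n)
    (πs : Fin N → ℝ) (hπs : ∀ i, πs i = min 1 (c * r i))
    (ps : Finset (Fin N) → ℝ)
    (hps : ∀ s, ps s = ∏ i, if i ∈ s then πs i else 1 - πs i) :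
    -- lower bound over all admissible design–estimator pairs
    (∀ p : Finset (Fin N) → ℝ, (∀ s, 0 ≤ p s) →
      (∑ s : Finset (Fin N), p s) = 1 →
      ∀ π : Fin N → ℝ,
        (∀ i, π i = ∑ s : Finset (Fin N), if i ∈ s then p s else 0) →
        (∀ i, 0 < π i) → (∑ i, π i) ≤ n →
        ∀ δ : Finset (Fin N) → (Fin N → ℝ) → ℝ,
          (∀ s (y y' : Fin N → ℝ), (∀ i ∈ s, y i = y' i) → δ s y = δ s y') →
          (∀ y : Fin N → ℝ, (∀ i, y i ∈ Set.Icc (a i) (b i)) →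
            ∑ s : Finset (Fin N), p s * δ s y = ∑ i, y i) →
          ∀ M : ℝ,
            (∀ y : Fin N → ℝ, (∀ i, y i ∈ Set.Icc (a i) (b i)) →
              ∑ s : Finset (Fin N), p s * (δ s y - ∑ i, y i) ^ 2 ≤ M) →
            Vn ≤ M) ∧
    -- ps is a sampling design with inclusion probabilities πs, expected size n
    ((∀ s, 0 ≤ ps s) ∧ (∑ s : Finset (Fin N), ps s) = 1 ∧
      (∀ i, (∑ s : Finset (Fin N), if i ∈ s then ps s else 0) = πs i) ∧
      (∑ i, πs i) = n) ∧
    -- the midpoint-differenced HT estimator is unbiased under ps ...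
    (∀ y : Fin N → ℝ, (∀ i, y i ∈ Set.Icc (a i) (b i)) →
      ∑ s : Finset (Fin N),
        ps s * ((∑ i, m i) + ∑ i ∈ s, (y i - m i) / πs i) = ∑ i, y i) ∧
    -- ... and its worst-case risk over Θ under ps is exactly Vn
    IsLUB ((fun y : Fin N → ℝ =>
        ∑ s : Finset (Fin N),
          ps s * (((∑ i, m i) + ∑ i ∈ s, (y i - m i) / πs i) - ∑ i, y i) ^ 2) ''
      {y : Fin N → ℝ | ∀ i, y i ∈ Set.Icc (a i) (b i)}) Vn := by
  obtain rfl : πs = fun i => min 1 (c * r i) := funext hπs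
  obtain rfl : ps = bernoulliDesign fun i => min 1 (c * r i) := funext hps
  obtain rfl : a = fun i => m i - r i := funext fun i => by rw [hm, hr]; ring
  obtain rfl : b = fun i => m i + r i := funext fun i => by rw [hm, hr]; ring
  set π₀ : Fin N → ℝ := fun i => min 1 (c * r i)
  have hπ₀ (i : Fin N) : 0 < π₀ i ∧ π₀ i ≤ 1 :=
    ⟨lt_min one_pos (mul_pos hc (hrpos i)), min_le_left _ _⟩
  have hπ₀_ne (i : Fin N) : π₀ i ≠ 0 := (hπ₀ i).1.ne'
  have hVn_eq : designVariance r π₀ = Vn := by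
    obtain ⟨π, hπ, hsum, rfl⟩ := hVn.1
    exact le_antisymm (designVariance_min_le hc hπ (hsum.trans hcsum.ge))
      (hVn.2 ⟨π₀, hπ₀, hcsum.le, rfl⟩)
  have hr0 (i : Fin N) : 0 ≤ r i := (hrpos i).le
  refine ⟨?_, ⟨bernoulliDesign_nonneg fun i => ⟨(hπ₀ i).1.le, (hπ₀ i).2⟩, sum_bernoulliDesign π₀,
    sum_ite_mem_bernoulliDesign π₀, hcsum⟩, ?_, ?_⟩
  · intro p hp0 hp1 π hπ hπpos hπn δ hδ hunb M hM
    have hπ1 (i : Fin N) : π i ≤ 1 := by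
      rw [hπ i, ← hp1]
      exact sum_le_sum fun s _ => by split_ifs <;> simp [hp0 s]
    calc Vn ≤ designVariance r π := hVn.2 ⟨π, fun i => ⟨hπpos i, hπ1 i⟩, hπn, rfl⟩
      _ ≤ M := designVariance_le_of_unbiased m r p hp0 hp1 π hπ hπpos δ hδ
          (fun σ => hunb _ (vertex_mem_Icc hr0 σ)) fun σ => hM _ (vertex_mem_Icc hr0 σ)
  · exact fun y _ => sum_mul_htEstimator (sum_bernoulliDesign π₀)
      (sum_ite_mem_bernoulliDesign π₀) hπ₀_ne m y
  · have hrisk : (fun y => ∑ s, bernoulliDesign π₀ s * (htEstimator m π₀ s y - ∑ i, y i) ^ 2)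
        = fun y => designVariance (fun i => y i - m i) π₀ :=
      funext fun y => sum_bernoulliDesign_mul_htEstimator_sub_sq hπ₀_ne m y
    rw [← hVn_eq]
    exact hrisk ▸ (isGreatest_designVariance_sub hr0 hπ₀).isLUB

/-- Theorem 3: minimax design and estimator under an expected
sample-size constraint. Let `0 < n < N`, `r i > 0`, and let `Vn` be the minimum
of `∑ i, r i ^ 2 * (1 - π i)/π i` over all vectors `π` with `0 < π i ≤ 1` and
`∑ i, π i ≤ n`. Let `c > 0` satisfy `∑ i, min 1 (c * r i) = n`, set
`πs i = min 1 (c * r i)`, and let `ps` be the design sampling each unit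
independently with probabilities `πs` (product Bernoulli design). Then:
* (lower bound) for every design `p` with inclusion probabilities `π i > 0` and
  expected sample size `∑ i, π i ≤ n`, and every unbiased estimator `δ`, every
  upper bound of the risk of `δ` over `Θ` is at least `Vn`;
* `ps` is a sampling design whose inclusion probabilities are `πs`, with
  expected sample size `n`;
* under `ps`, the midpoint-differenced Horvitz–Thompson estimator is
  unbiased and its worst-case risk over `Θ` is exactly `Vn`. -/
theorem minimax_design_and_estimator
    (N : ℕ) (a b : Fin N → ℝ)
    (m r : Fin N → ℝ)
    (hm : ∀ i, m i = (a i + b i) / 2)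
    (hr : ∀ i, r i = (b i - a i) / 2) (hrpos : ∀ i, 0 < r i)
    (n : ℝ) (hn0 : 0 < n) (hnN : n < (N : ℝ))
    (Vn : ℝ)
    (hVn : IsLeast {v : ℝ | ∃ π : Fin N → ℝ, (∀ i, 0 < π i ∧ π i ≤ 1) ∧
      (∑ i, π i) ≤ n ∧ v = ∑ i, r i ^ 2 * ((1 - π i) / π i)} Vn)
    (c : ℝ) (hc : 0 < c) (hcsum : ∑ i, min 1 (c * r i) = n)
    (πs : Fin N → ℝ) (hπs : ∀ i, πs i = min 1 (c * r i))
    (ps : Finset (Fin N) → ℝ)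
    (hps : ∀ s, ps s = ∏ i, if i ∈ s then πs i else 1 - πs i) :
    -- lower bound over all admissible design–estimator pairs
    (∀ p : Finset (Fin N) → ℝ, (∀ s, 0 ≤ p s) →
      (∑ s : Finset (Fin N), p s) = 1 →
      ∀ π : Fin N → ℝ,
        (∀ i, π i = ∑ s : Finset (Fin N), if i ∈ s then p s else 0) →
        (∀ i, 0 < π i) → (∑ i, π i) ≤ n →
        ∀ δ : Finset (Fin N) → (Fin N → ℝ) → ℝ,
          (∀ s (y y' : Fin N → ℝ), (∀ i ∈ s, y i = y' i) → δ s y = δ s y') →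
          (∀ y : Fin N → ℝ, (∀ i, y i ∈ Set.Icc (a i) (b i)) →
            ∑ s : Finset (Fin N), p s * δ s y = ∑ i, y i) →
          ∀ M : ℝ,
            (∀ y : Fin N → ℝ, (∀ i, y i ∈ Set.Icc (a i) (b i)) →
              ∑ s : Finset (Fin N), p s * (δ s y - ∑ i, y i) ^ 2 ≤ M) →
            Vn ≤ M) ∧
    -- ps is a sampling design with inclusion probabilities πs, expected size n
    ((∀ s, 0 ≤ ps s) ∧ (∑ s : Finset (Fin N), ps s) = 1 ∧
      (∀ i, (∑ s : Finset (Fin N), if i ∈ s then ps s else 0) = πs i) ∧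
      (∑ i, πs i) = n) ∧
    -- the midpoint-differenced HT estimator is unbiased under ps ...
    (∀ y : Fin N → ℝ, (∀ i, y i ∈ Set.Icc (a i) (b i)) →
      ∑ s : Finset (Fin N),
        ps s * ((∑ i, m i) + ∑ i ∈ s, (y i - m i) / πs i) = ∑ i, y i) ∧
    -- ... and its worst-case risk over Θ under ps is exactly Vn
    IsLUB ((fun y : Fin N → ℝ =>
        ∑ s : Finset (Fin N),
          ps s * (((∑ i, m i) + ∑ i ∈ s, (y i - m i) / πs i) - ∑ i, y i) ^ 2) ''
      {y : Fin N → ℝ | ∀ i, y i ∈ Set.Icc (a i) (b i)}) Vn :=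
  minimax_design_and_estimator_general N a b m r hm hr hrpos n Vn hVn c hc hcsum πs hπs ps hps
end

section
/- Fix a sampling design p on subsets of {1,…,N} with π_i > 0 for all i, and suppose a_i < b_i for all i. The midpoint-differenced Horvitz–Thompson estimator T̂ is admissible among unbiased estimators under squared-error loss: there is no unbiased estimator δ with R(δ,p;y) ≤ R(T̂,p;y) for all y ∈ Θ and R(δ,p;y⁰) < R(T̂,p;y⁰) for some y⁰ ∈ Θ. -/
/-- Proposition 1: admissibility of the midpoint-differenced
Horvitz–Thompson estimator among unbiased estimators. Fix a design `p` with
`π i > 0` and suppose `a i < b i` for all `i`. There is no unbiased estimator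
`δ` whose risk is at most that of `T̂` everywhere on `Θ` and strictly smaller
at some point of `Θ`. -/
theorem HT_admissible_among_unbiased
    (N : ℕ) (a b : Fin N → ℝ) (hab : ∀ i, a i < b i)
    (m : Fin N → ℝ) (hm : ∀ i, m i = (a i + b i) / 2)
    (p : Finset (Fin N) → ℝ) (hp0 : ∀ s, 0 ≤ p s)
    (hp1 : ∑ s : Finset (Fin N), p s = 1)
    (π : Fin N → ℝ)
    (hπ : ∀ i, π i = ∑ s : Finset (Fin N), if i ∈ s then p s else 0)
    (hπpos : ∀ i, 0 < π i) :
    ¬ ∃ δ : Finset (Fin N) → (Fin N → ℝ) → ℝ,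
      (∀ s (y y' : Fin N → ℝ), (∀ i ∈ s, y i = y' i) → δ s y = δ s y') ∧
      (∀ y : Fin N → ℝ, (∀ i, y i ∈ Set.Icc (a i) (b i)) →
        ∑ s : Finset (Fin N), p s * δ s y = ∑ i, y i) ∧
      (∀ y : Fin N → ℝ, (∀ i, y i ∈ Set.Icc (a i) (b i)) →
        ∑ s : Finset (Fin N), p s * (δ s y - ∑ i, y i) ^ 2 ≤
          ∑ s : Finset (Fin N),
            p s * (((∑ i, m i) + ∑ i ∈ s, (y i - m i) / π i) - ∑ i, y i) ^ 2) ∧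
      (∃ y0 : Fin N → ℝ, (∀ i, y0 i ∈ Set.Icc (a i) (b i)) ∧
        ∑ s : Finset (Fin N), p s * (δ s y0 - ∑ i, y0 i) ^ 2 <
          ∑ s : Finset (Fin N),
            p s * (((∑ i, m i) + ∑ i ∈ s, (y0 i - m i) / π i) - ∑ i, y0 i) ^ 2) := by
  classical
  rintro ⟨δ, hdep, hunb, hrisk, y0, hy0, hlt⟩
  set T : Finset (Fin N) → (Fin N → ℝ) → ℝ :=
    fun s y => (∑ i, m i) + ∑ i ∈ s, (y i - m i) / π i with hT
  -- T is unbiased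
  have hTunb : ∀ y : Fin N → ℝ, ∑ s : Finset (Fin N), p s * T s y = ∑ i, y i := by
    intro y
    have h1 : ∀ s : Finset (Fin N),
        p s * T s y
          = p s * (∑ i, m i) + ∑ i : Fin N, (if i ∈ s then p s * ((y i - m i) / π i) else 0) := by
      intro s
      have : (∑ i ∈ s, p s * ((y i - m i) / π i))
          = ∑ i : Fin N, (if i ∈ s then p s * ((y i - m i) / π i) else 0) := by
        rw [Finset.sum_ite_mem, Finset.univ_inter]
      rw [hT]
      simp only [mul_add, Finset.mul_sum]
      rw [this]
    calc ∑ s : Finset (Fin N), p s * T s y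
        = ∑ s : Finset (Fin N), (p s * (∑ i, m i)
            + ∑ i : Fin N, (if i ∈ s then p s * ((y i - m i) / π i) else 0)) := by
          exact Finset.sum_congr rfl fun s _ => h1 s
      _ = (∑ s : Finset (Fin N), p s * (∑ i, m i))
            + ∑ s : Finset (Fin N), ∑ i : Fin N,
              (if i ∈ s then p s * ((y i - m i) / π i) else 0) := by
          rw [Finset.sum_add_distrib]
      _ = (∑ i, m i) + ∑ i : Fin N, (y i - m i) := by
          congr 1
          · rw [← Finset.sum_mul, hp1, one_mul]
          · rw [Finset.sum_comm]
            refine Finset.sum_congr rfl fun i _ => ?_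
            have : ∀ s : Finset (Fin N),
                (if i ∈ s then p s * ((y i - m i) / π i) else 0)
                  = ((y i - m i) / π i) * (if i ∈ s then p s else 0) := by
              intro s; split <;> ring
            rw [Finset.sum_congr rfl fun s _ => this s, ← Finset.mul_sum, ← hπ i]
            field_simp [ne_of_gt (hπpos i)]
      _ = ∑ i, y i := by rw [← Finset.sum_add_distrib]; exact Finset.sum_congr rfl fun i _ => by ring
  -- key lemma: δ agrees with T on the support of p, for every y in Θ
  have key : ∀ n : ℕ, ∀ y : Fin N → ℝ, (∀ i, y i ∈ Set.Icc (a i) (b i)) →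
      (Finset.univ.filter (fun i => y i ≠ m i)).card = n →
      ∀ s, 0 < p s → δ s y = T s y := by
    intro n
    induction n using Nat.strong_induction_on with
    | _ n IH =>
      intro y hy hcard s₀ hps₀
      set D := Finset.univ.filter (fun i => y i ≠ m i) with hD
      -- claim 1 : δ = T (on support) for samples not containing all of D
      have claim1 : ∀ s', 0 < p s' → ¬ D ⊆ s' → δ s' y = T s' y := by
        intro s' hps' hns
        obtain ⟨j, hjD, hjs⟩ := Finset.not_subset.mp hns
        set y' := Function.update y j (m j) with hy'
        have hagree : ∀ i ∈ s', y i = y' i := by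
          intro i hi
          rw [hy', Function.update_of_ne]
          rintro rfl; exact hjs hi
        have hy'mem : ∀ i, y' i ∈ Set.Icc (a i) (b i) := by
          intro i
          by_cases h : i = j
          · subst h
            rw [hy', Function.update_self, hm]
            constructor
            · nlinarith [(hab i).le]
            · nlinarith [(hab i).le]
          · rw [hy', Function.update_of_ne h]; exact hy i
        have hD' : Finset.univ.filter (fun i => y' i ≠ m i) = D.erase j := by
          ext i
          simp only [Finset.mem_filter, Finset.mem_univ, true_and, Finset.mem_erase, hD]
          by_cases h : i = j
          · subst h; simp [hy', Function.update_self]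
          · simp [hy', Function.update_of_ne h, h]
        have hjD' : j ∈ D := hjD
        have hcardlt : (Finset.univ.filter (fun i => y' i ≠ m i)).card < n := by
          rw [hD', ← hcard]
          exact Finset.card_erase_lt_of_mem hjD'
        have h1 : δ s' y = δ s' y' := hdep s' y y' hagree
        have h2 : δ s' y' = T s' y' :=
          IH _ hcardlt y' hy'mem rfl s' hps'
        have h3 : T s' y' = T s' y := by
          rw [hT]
          simp only
          congr 1
          refine Finset.sum_congr rfl fun i hi => ?_
          rw [hagree i hi]
        rw [h1, h2, h3]
      -- claim 2 : on samples containing D, T − total is the constant c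
      set c : ℝ := ∑ i ∈ D, (y i - m i) * (1 / π i - 1) with hc
      have claim2 : ∀ s', D ⊆ s' → T s' y - (∑ i, y i) = c := by
        intro s' hsub
        have e1 : ∑ i ∈ s', (y i - m i) / π i = ∑ i ∈ D, (y i - m i) / π i := by
          refine (Finset.sum_subset hsub fun i _ hni => ?_).symm
          have : y i = m i := by
            by_contra h
            exact hni (by simp [hD, h])
          simp [this]
        have e2 : ∑ i : Fin N, (y i - m i) = ∑ i ∈ D, (y i - m i) := by
          refine (Finset.sum_subset (Finset.subset_univ D) fun i _ hni => ?_).symm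
          have : y i = m i := by
            by_contra h
            exact hni (by simp [hD, h])
          simp [this]
        have e3 : T s' y - (∑ i, y i)
            = (∑ i ∈ s', (y i - m i) / π i) - ∑ i : Fin N, (y i - m i) := by
          rw [hT]
          simp only
          rw [Finset.sum_sub_distrib]
          ring
        rw [e3, e1, e2, hc, ← Finset.sum_sub_distrib]
        refine Finset.sum_congr rfl fun i _ => ?_
        ring
      -- unbiasedness difference
      have hg0 : ∑ s : Finset (Fin N), p s * (δ s y - T s y) = 0 := by
        have := hunb y hy
        have h2 := hTunb y
        calc ∑ s : Finset (Fin N), p s * (δ s y - T s y)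
            = (∑ s : Finset (Fin N), p s * δ s y)
              - ∑ s : Finset (Fin N), p s * T s y := by
              rw [← Finset.sum_sub_distrib]
              exact Finset.sum_congr rfl fun s _ => by ring
          _ = 0 := by rw [this, h2]; ring
      -- cross term vanishes
      have hcross : ∑ s : Finset (Fin N),
          p s * (δ s y - T s y) * (T s y - ∑ i, y i) = 0 := by
        have he : ∀ s : Finset (Fin N),
            p s * (δ s y - T s y) * (T s y - ∑ i, y i)
              = (p s * (δ s y - T s y)) * c := by
          intro s
          rcases (hp0 s).lt_or_eq with hps | hps
          · by_cases hsub : D ⊆ s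
            · rw [claim2 s hsub]
            · rw [claim1 s hps hsub]; ring
          · rw [← hps]; ring
        rw [Finset.sum_congr rfl fun s _ => he s, ← Finset.sum_mul, hg0, zero_mul]
      -- risk inequality gives sum of squares ≤ 0
      have hsq : ∑ s : Finset (Fin N), p s * (δ s y - T s y) ^ 2 ≤ 0 := by
        have hr := hrisk y hy
        have hexp : ∀ s : Finset (Fin N),
            p s * (δ s y - ∑ i, y i) ^ 2
              = p s * (T s y - ∑ i, y i) ^ 2
                + p s * (δ s y - T s y) ^ 2
                + 2 * (p s * (δ s y - T s y) * (T s y - ∑ i, y i)) := by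
          intro s; ring
        have hr' : ∑ s : Finset (Fin N),
            (p s * (T s y - ∑ i, y i) ^ 2
              + p s * (δ s y - T s y) ^ 2
              + 2 * (p s * (δ s y - T s y) * (T s y - ∑ i, y i)))
            ≤ ∑ s : Finset (Fin N), p s * (T s y - ∑ i, y i) ^ 2 := by
          rw [← Finset.sum_congr rfl fun s _ => hexp s]
          exact hr
        rw [Finset.sum_add_distrib, Finset.sum_add_distrib, ← Finset.mul_sum, hcross,
          mul_zero, add_zero] at hr'
        linarith
      -- conclude each term is zero
      have hzero : ∀ s : Finset (Fin N), p s * (δ s y - T s y) ^ 2 = 0 := by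
        have hnn : ∀ s ∈ Finset.univ (α := Finset (Fin N)),
            0 ≤ p s * (δ s y - T s y) ^ 2 :=
          fun s _ => mul_nonneg (hp0 s) (sq_nonneg _)
        have hsum0 : ∑ s : Finset (Fin N), p s * (δ s y - T s y) ^ 2 = 0 :=
          le_antisymm hsq (Finset.sum_nonneg hnn)
        intro s
        exact (Finset.sum_eq_zero_iff_of_nonneg hnn).mp hsum0 s (Finset.mem_univ s)
      have := hzero s₀
      have h2 : (δ s₀ y - T s₀ y) ^ 2 = 0 := by
        rcases mul_eq_zero.mp this with h | h
        · exact absurd h (ne_of_gt hps₀)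
        · exact h
      have h3 : δ s₀ y - T s₀ y = 0 := by
        exact pow_eq_zero_iff (n := 2) (by norm_num) |>.mp h2
      linarith
  -- apply the key lemma at y0 to contradict the strict inequality
  have heq : ∀ s : Finset (Fin N),
      p s * (δ s y0 - ∑ i, y0 i) ^ 2
        = p s * (((∑ i, m i) + ∑ i ∈ s, (y0 i - m i) / π i) - ∑ i, y0 i) ^ 2 := by
    intro s
    rcases (hp0 s).lt_or_eq with hps | hps
    · have := key _ y0 hy0 rfl s hps
      rw [this, hT]
    · rw [← hps]; ring
  rw [Finset.sum_congr rfl fun s _ => heq s] at hlt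
  exact lt_irrefl _ hlt
end

section
/- Let p be a sampling design with π_i > 0 and let δ be an unbiased estimator on Θ = ∏_{i=1}^N [a_i,b_i] with r_i = (b_i−a_i)/2. Let ε be uniformly distributed on {−1,1}^N, independent of the sample S, let F(ε) = Σ_{i=1}^N r_i ε_i, and let D = δ_S((m_i + r_i ε_i)_{i∈S}) − Σ_{i=1}^N m_i. Then the Bayes risk under the uniform prior on the vertices of Θ satisfies E_{ε,S}[(D − F(ε))²] = E_{ε,S}[D²] − Σ_{i=1}^N r_i². -/
lemma cross_zero (N : ℕ) (i j : Fin N) (hij : i ≠ j) :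
    ∑ ε : Fin N → Bool, (if ε i then (1:ℝ) else -1) * (if ε j then 1 else -1) = 0 := by
  set f : (Fin N → Bool) → ℝ :=
    fun ε => (if ε i then (1:ℝ) else -1) * (if ε j then 1 else -1) with hf
  have hinv : Function.Involutive (fun ε : Fin N → Bool => Function.update ε i (!ε i)) := by
    intro ε; funext k
    by_cases hk : k = i
    · subst hk; simp [Function.update_self]
    · simp [Function.update_of_ne hk]
  have h1 : ∑ ε : Fin N → Bool, f ε
      = ∑ ε : Fin N → Bool, f (Function.update ε i (!ε i)) := by
    exact (Equiv.sum_comp hinv.toPerm f).symm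
  have h2 : ∀ ε : Fin N → Bool, f (Function.update ε i (!ε i)) = - f ε := by
    intro ε
    have hji : j ≠ i := fun h => hij h.symm
    simp only [hf, Function.update_self, Function.update_of_ne hji]
    cases ε i <;> cases ε j <;> norm_num
  have hS : ∑ ε : Fin N → Bool, f ε = - ∑ ε : Fin N → Bool, f ε := by
    calc ∑ ε : Fin N → Bool, f ε
        = ∑ ε : Fin N → Bool, f (Function.update ε i (!ε i)) :=
          (Equiv.sum_comp hinv.toPerm f).symm
      _ = ∑ ε : Fin N → Bool, - f ε := by
          exact Finset.sum_congr rfl (fun ε _ => h2 ε)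
      _ = - ∑ ε : Fin N → Bool, f ε := by rw [Finset.sum_neg_distrib]
  linarith

/-- Bayes-risk decomposition under the uniform vertex prior.
With `ε` uniform on `{−1,1}^N` (encoded by `Fin N → Bool`, where `true ↦ 1` and
`false ↦ -1`) independent of the sample `S`, `F(ε) = ∑ i, r i * ε i`, and
`D = δ_S((m i + r i ε i)_{i∈S}) − ∑ i, m i`, any unbiased estimator `δ`
satisfies `E_{ε,S}[(D − F(ε))²] = E_{ε,S}[D²] − ∑ i, r i ^ 2`. -/
theorem bayes_risk_decomposition
    (N : ℕ) (a b : Fin N → ℝ) (hab : ∀ i, a i ≤ b i)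
    (m r : Fin N → ℝ)
    (hm : ∀ i, m i = (a i + b i) / 2)
    (hr : ∀ i, r i = (b i - a i) / 2)
    (p : Finset (Fin N) → ℝ) (hp0 : ∀ s, 0 ≤ p s)
    (hp1 : ∑ s : Finset (Fin N), p s = 1)
    (π : Fin N → ℝ)
    (hπ : ∀ i, π i = ∑ s : Finset (Fin N), if i ∈ s then p s else 0)
    (hπpos : ∀ i, 0 < π i)
    (δ : Finset (Fin N) → (Fin N → ℝ) → ℝ)
    (hloc : ∀ s (y y' : Fin N → ℝ), (∀ i ∈ s, y i = y' i) → δ s y = δ s y')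
    (hunb : ∀ y : Fin N → ℝ, (∀ i, y i ∈ Set.Icc (a i) (b i)) →
      ∑ s : Finset (Fin N), p s * δ s y = ∑ i, y i) :
    ((2 : ℝ) ^ N)⁻¹ *
        ∑ ε : Fin N → Bool, ∑ s : Finset (Fin N),
          p s * ((δ s (fun i => m i + r i * (if ε i then 1 else -1)) - ∑ i, m i)
            - ∑ i, r i * (if ε i then 1 else -1)) ^ 2
      = ((2 : ℝ) ^ N)⁻¹ *
          (∑ ε : Fin N → Bool, ∑ s : Finset (Fin N),
            p s * (δ s (fun i => m i + r i * (if ε i then 1 else -1))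
              - ∑ i, m i) ^ 2)
        - ∑ i, r i ^ 2 := by
  set c : Bool → ℝ := fun b => if b then 1 else -1 with hc
  set D : Finset (Fin N) → (Fin N → Bool) → ℝ :=
    fun s ε => δ s (fun i => m i + r i * c (ε i)) - ∑ i, m i with hD
  set F : (Fin N → Bool) → ℝ := fun ε => ∑ i, r i * c (ε i) with hF
  -- Step 1: unbiasedness at vertices
  have step1 : ∀ ε : Fin N → Bool, ∑ s : Finset (Fin N), p s * D s ε = F ε := by
    intro ε
    have hy : ∀ i, m i + r i * c (ε i) ∈ Set.Icc (a i) (b i) := by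
      intro i
      rw [hm, hr, Set.mem_Icc]
      cases h : ε i <;> simp [hc, h] <;> constructor <;> linarith [hab i]
    have := hunb (fun i => m i + r i * c (ε i)) hy
    have hsum : ∑ i, (m i + r i * c (ε i)) = (∑ i, m i) + F ε := by
      rw [hF]; rw [Finset.sum_add_distrib]
    calc ∑ s : Finset (Fin N), p s * D s ε
        = (∑ s : Finset (Fin N), p s * δ s (fun i => m i + r i * c (ε i)))
          - (∑ s : Finset (Fin N), p s) * (∑ i, m i) := by
          rw [hD]; simp only [mul_sub]
          rw [Finset.sum_sub_distrib, Finset.sum_mul]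
      _ = ((∑ i, m i) + F ε) - 1 * (∑ i, m i) := by rw [this, hp1, hsum]
      _ = F ε := by ring
  -- Step 2: per-ε decomposition
  have step2 : ∀ ε : Fin N → Bool,
      ∑ s : Finset (Fin N), p s * (D s ε - F ε) ^ 2
        = (∑ s : Finset (Fin N), p s * (D s ε) ^ 2) - (F ε) ^ 2 := by
    intro ε
    have expand : ∀ s, p s * (D s ε - F ε) ^ 2
        = p s * (D s ε) ^ 2 - 2 * F ε * (p s * D s ε) + (F ε) ^ 2 * p s := by
      intro s; ring
    rw [Finset.sum_congr rfl (fun s _ => expand s)]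
    rw [Finset.sum_add_distrib, Finset.sum_sub_distrib,
        ← Finset.mul_sum, ← Finset.mul_sum, step1 ε, hp1]
    ring
  -- Step 3: second moment of F
  have step3 : ∑ ε : Fin N → Bool, (F ε) ^ 2 = 2 ^ N * ∑ i, r i ^ 2 := by
    have expand : ∀ ε : Fin N → Bool, (F ε) ^ 2
        = ∑ i, ∑ j, (r i * r j) * (c (ε i) * c (ε j)) := by
      intro ε
      rw [hF, sq, Finset.sum_mul_sum]
      apply Finset.sum_congr rfl; intro i _
      apply Finset.sum_congr rfl; intro j _
      ring
    rw [Finset.sum_congr rfl (fun ε _ => expand ε)]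
    rw [Finset.sum_comm]
    have : ∀ i : Fin N,
        ∑ ε : Fin N → Bool, ∑ j, (r i * r j) * (c (ε i) * c (ε j))
          = 2 ^ N * r i ^ 2 := by
      intro i
      rw [Finset.sum_comm]
      have hterm : ∀ j : Fin N,
          ∑ ε : Fin N → Bool, (r i * r j) * (c (ε i) * c (ε j))
            = if j = i then 2 ^ N * r i ^ 2 else 0 := by
        intro j
        by_cases hij : j = i
        · subst hij
          have h1 : ∀ ε : Fin N → Bool, (r j * r j) * (c (ε j) * c (ε j)) = r j ^ 2 := by
            intro ε; cases h : ε j <;> simp [hc, h] <;> ring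
          rw [Finset.sum_congr rfl (fun ε _ => h1 ε), Finset.sum_const,
              Finset.card_univ, if_pos rfl]
          simp [Fintype.card_fun, nsmul_eq_mul]
        · have h2 : ∑ ε : Fin N → Bool, c (ε i) * c (ε j) = 0 := by
            simpa [hc] using cross_zero N i j (fun h => hij h.symm)
          rw [if_neg hij, ← Finset.mul_sum, h2, mul_zero]
      rw [Finset.sum_congr rfl (fun j _ => hterm j)]
      simp
    rw [Finset.sum_congr rfl (fun i _ => this i), ← Finset.mul_sum]
  -- Combine
  have lhs_eq : ∑ ε : Fin N → Bool, ∑ s : Finset (Fin N),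
      p s * ((δ s (fun i => m i + r i * (if ε i then 1 else -1)) - ∑ i, m i)
        - ∑ i, r i * (if ε i then 1 else -1)) ^ 2
      = (∑ ε : Fin N → Bool, ∑ s : Finset (Fin N), p s * (D s ε) ^ 2)
        - 2 ^ N * ∑ i, r i ^ 2 := by
    have : ∀ ε : Fin N → Bool, ∑ s : Finset (Fin N),
        p s * ((δ s (fun i => m i + r i * (if ε i then 1 else -1)) - ∑ i, m i)
          - ∑ i, r i * (if ε i then 1 else -1)) ^ 2
        = (∑ s : Finset (Fin N), p s * (D s ε) ^ 2) - (F ε) ^ 2 := by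
      intro ε
      have := step2 ε
      simpa [hD, hF, hc] using this
    rw [Finset.sum_congr rfl (fun ε _ => this ε), Finset.sum_sub_distrib, step3]
  rw [lhs_eq, mul_sub]
  have h2N : ((2:ℝ) ^ N)⁻¹ * (2 ^ N * ∑ i, r i ^ 2) = ∑ i, r i ^ 2 := by
    rw [← mul_assoc, inv_mul_cancel₀ (by positivity), one_mul]
  rw [h2N]
end

section
/- Let p be a sampling design with π_i > 0 and let δ be an unbiased estimator on Θ = ∏_{i=1}^N [a_i,b_i]. Let ε be uniformly distributed on {−1,1}^N, independent of S, let I_i = 1(i ∈ S), U_i = I_i ε_i, and D = δ_S((m_j + r_j ε_j)_{j∈S}) − Σ_{j=1}^N m_j. Then for each i, E[D U_i] = r_i, and consequently (by Bessel's inequality for the orthogonal family U_1,…,U_N with E[U_i²] = π_i) E[D²] ≥ Σ_{i=1}^N r_i²/π_i. -/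
namespace Stmt10Aux

variable {N : ℕ}

def flip (i : Fin N) (ε : Fin N → Bool) : Fin N → Bool := Function.update ε i (!(ε i))

lemma flip_apply_self (i : Fin N) (ε : Fin N → Bool) : flip i ε i = !(ε i) :=
  Function.update_self _ _ _

lemma flip_apply_ne (i j : Fin N) (ε : Fin N → Bool) (h : j ≠ i) : flip i ε j = ε j :=
  Function.update_of_ne h _ _

lemma flip_involutive (i : Fin N) : Function.Involutive (flip i) := by
  intro ε
  funext j
  by_cases h : j = i
  · subst h
    simp [flip]
  · simp [flip, Function.update_of_ne h]

lemma flip_sum (i : Fin N) (f : (Fin N → Bool) → ℝ)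
    (hf : ∀ ε, f (flip i ε) = f ε) :
    ∑ ε : Fin N → Bool, f ε * (if ε i then (1:ℝ) else -1) = 0 := by
  have h1 : ∑ ε : Fin N → Bool, f (flip i ε) * (if (flip i ε) i then (1:ℝ) else -1)
      = ∑ ε : Fin N → Bool, f ε * (if ε i then (1:ℝ) else -1) :=
    Fintype.sum_bijective (flip i) (flip_involutive i).bijective _ _ (fun ε => rfl)
  have h2 : ∀ ε : Fin N → Bool,
      f (flip i ε) * (if (flip i ε) i then (1:ℝ) else -1)
        = -(f ε * (if ε i then (1:ℝ) else -1)) := by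
    intro ε
    rw [hf, flip_apply_self]
    cases h : ε i <;> simp
  rw [Finset.sum_congr rfl (fun ε _ => h2 ε), Finset.sum_neg_distrib] at h1
  linarith

lemma sum_sgn_mul_sgn_ne (i j : Fin N) (hij : j ≠ i) :
    ∑ ε : Fin N → Bool, (if ε i then (1:ℝ) else -1) * (if ε j then (1:ℝ) else -1) = 0 := by
  have := flip_sum i (fun ε => (if ε j then (1:ℝ) else -1))
    (fun ε => by simp only [flip_apply_ne i j ε hij])
  calc ∑ ε : Fin N → Bool, (if ε i then (1:ℝ) else -1) * (if ε j then (1:ℝ) else -1)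
      = ∑ ε : Fin N → Bool, (if ε j then (1:ℝ) else -1) * (if ε i then (1:ℝ) else -1) := by
        exact Finset.sum_congr rfl (fun ε _ => mul_comm _ _)
    _ = 0 := this

lemma card_eps : Fintype.card (Fin N → Bool) = 2 ^ N := by
  simp [Fintype.card_fun]

lemma sum_sgn_sq (i : Fin N) :
    ∑ ε : Fin N → Bool, (if ε i then (1:ℝ) else -1) * (if ε i then (1:ℝ) else -1)
      = 2 ^ N := by
  have : ∀ ε : Fin N → Bool,
      (if ε i then (1:ℝ) else -1) * (if ε i then (1:ℝ) else -1) = 1 := by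
    intro ε; cases h : ε i <;> simp
  rw [Finset.sum_congr rfl (fun ε _ => this ε), Finset.sum_const, Finset.card_univ, card_eps]
  simp

lemma corr
    (a b : Fin N → ℝ) (hab : ∀ i, a i ≤ b i)
    (m r : Fin N → ℝ)
    (hm : ∀ i, m i = (a i + b i) / 2)
    (hr : ∀ i, r i = (b i - a i) / 2)
    (p : Finset (Fin N) → ℝ)
    (hp1 : ∑ s : Finset (Fin N), p s = 1)
    (δ : Finset (Fin N) → (Fin N → ℝ) → ℝ)
    (hloc : ∀ s (y y' : Fin N → ℝ), (∀ i ∈ s, y i = y' i) → δ s y = δ s y')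
    (hunb : ∀ y : Fin N → ℝ, (∀ i, y i ∈ Set.Icc (a i) (b i)) →
      ∑ s : Finset (Fin N), p s * δ s y = ∑ i, y i)
    (i : Fin N) :
    ∑ ε : Fin N → Bool, ∑ s : Finset (Fin N),
        p s * ((δ s (fun j => m j + r j * (if ε j then (1:ℝ) else -1)) - ∑ j, m j)
          * ((if i ∈ s then (1:ℝ) else 0) * (if ε i then (1:ℝ) else -1)))
      = 2 ^ N * r i := by
  have hmem : ∀ (ε : Fin N → Bool) (j : Fin N),
      m j + r j * (if ε j then (1:ℝ) else -1) ∈ Set.Icc (a j) (b j) := by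
    intro ε j
    have := hab j
    constructor <;> (rw [hm j, hr j]; split <;> linarith)
  -- unbiasedness consequence
  have hD : ∀ ε : Fin N → Bool,
      ∑ s : Finset (Fin N),
          p s * (δ s (fun j => m j + r j * (if ε j then (1:ℝ) else -1)) - ∑ j, m j)
        = ∑ j, r j * (if ε j then (1:ℝ) else -1) := by
    intro ε
    have h1 := hunb (fun j => m j + r j * (if ε j then (1:ℝ) else -1)) (hmem ε)
    calc ∑ s : Finset (Fin N),
            p s * (δ s (fun j => m j + r j * (if ε j then (1:ℝ) else -1)) - ∑ j, m j)
        = ∑ s : Finset (Fin N),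
            (p s * δ s (fun j => m j + r j * (if ε j then (1:ℝ) else -1))
              - p s * ∑ j, m j) := Finset.sum_congr rfl (fun s _ => by ring)
      _ = (∑ s : Finset (Fin N),
            p s * δ s (fun j => m j + r j * (if ε j then (1:ℝ) else -1)))
            - (∑ s : Finset (Fin N), p s) * ∑ j, m j := by
          rw [Finset.sum_sub_distrib, Finset.sum_mul]
      _ = (∑ j, (m j + r j * (if ε j then (1:ℝ) else -1))) - ∑ j, m j := by
          rw [h1, hp1, one_mul]
      _ = ∑ j, r j * (if ε j then (1:ℝ) else -1) := by
          rw [← Finset.sum_sub_distrib]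
          exact Finset.sum_congr rfl (fun j _ => by ring)
  -- step 1: drop the indicator
  have step1 : ∑ ε : Fin N → Bool, ∑ s : Finset (Fin N),
        p s * ((δ s (fun j => m j + r j * (if ε j then (1:ℝ) else -1)) - ∑ j, m j)
          * ((if i ∈ s then (1:ℝ) else 0) * (if ε i then (1:ℝ) else -1)))
      = ∑ ε : Fin N → Bool, ∑ s : Finset (Fin N),
        p s * ((δ s (fun j => m j + r j * (if ε j then (1:ℝ) else -1)) - ∑ j, m j)
          * (if ε i then (1:ℝ) else -1)) := by
    rw [Finset.sum_comm]
    rw [show (∑ ε : Fin N → Bool, ∑ s : Finset (Fin N),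
        p s * ((δ s (fun j => m j + r j * (if ε j then (1:ℝ) else -1)) - ∑ j, m j)
          * (if ε i then (1:ℝ) else -1)))
      = ∑ s : Finset (Fin N), ∑ ε : Fin N → Bool,
        p s * ((δ s (fun j => m j + r j * (if ε j then (1:ℝ) else -1)) - ∑ j, m j)
          * (if ε i then (1:ℝ) else -1)) from Finset.sum_comm]
    refine Finset.sum_congr rfl (fun s _ => ?_)
    by_cases hi : i ∈ s
    · exact Finset.sum_congr rfl (fun ε _ => by rw [if_pos hi]; ring)
    · have hL : ∑ ε : Fin N → Bool,
          p s * ((δ s (fun j => m j + r j * (if ε j then (1:ℝ) else -1)) - ∑ j, m j)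
            * ((if i ∈ s then (1:ℝ) else 0) * (if ε i then (1:ℝ) else -1))) = 0 :=
        Finset.sum_eq_zero (fun ε _ => by rw [if_neg hi]; ring)
      have hinv : ∀ ε : Fin N → Bool,
          (fun ε : Fin N → Bool =>
            p s * (δ s (fun j => m j + r j * (if ε j then (1:ℝ) else -1)) - ∑ j, m j))
            (flip i ε)
          = p s * (δ s (fun j => m j + r j * (if ε j then (1:ℝ) else -1)) - ∑ j, m j) := by
        intro ε
        simp only
        congr 2
        apply hloc
        intro j hj
        have hji : j ≠ i := fun h => hi (h ▸ hj)
        rw [flip_apply_ne i j ε hji]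
      have hR : ∑ ε : Fin N → Bool,
          p s * ((δ s (fun j => m j + r j * (if ε j then (1:ℝ) else -1)) - ∑ j, m j)
            * (if ε i then (1:ℝ) else -1)) = 0 := by
        have h0 := flip_sum i
          (fun ε : Fin N → Bool =>
            p s * (δ s (fun j => m j + r j * (if ε j then (1:ℝ) else -1)) - ∑ j, m j)) hinv
        calc ∑ ε : Fin N → Bool,
            p s * ((δ s (fun j => m j + r j * (if ε j then (1:ℝ) else -1)) - ∑ j, m j)
              * (if ε i then (1:ℝ) else -1))
            = ∑ ε : Fin N → Bool,
              (p s * (δ s (fun j => m j + r j * (if ε j then (1:ℝ) else -1)) - ∑ j, m j))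
                * (if ε i then (1:ℝ) else -1) :=
              Finset.sum_congr rfl (fun ε _ => by ring)
          _ = 0 := h0
      rw [hL, hR]
  -- step 2: compute
  rw [step1]
  have step2 : ∀ ε : Fin N → Bool,
      ∑ s : Finset (Fin N),
          p s * ((δ s (fun j => m j + r j * (if ε j then (1:ℝ) else -1)) - ∑ j, m j)
            * (if ε i then (1:ℝ) else -1))
        = (∑ j, r j * (if ε j then (1:ℝ) else -1)) * (if ε i then (1:ℝ) else -1) := by
    intro ε
    rw [← hD ε, Finset.sum_mul]
    exact Finset.sum_congr rfl (fun s _ => by ring)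
  rw [Finset.sum_congr rfl (fun ε _ => step2 ε)]
  have step3 : ∑ ε : Fin N → Bool,
      (∑ j, r j * (if ε j then (1:ℝ) else -1)) * (if ε i then (1:ℝ) else -1)
      = ∑ j, ∑ ε : Fin N → Bool, r j * ((if ε j then (1:ℝ) else -1) * (if ε i then (1:ℝ) else -1)) := by
    rw [Finset.sum_comm]
    exact Finset.sum_congr rfl (fun ε _ => by rw [Finset.sum_mul]; exact Finset.sum_congr rfl (fun j _ => by ring))
  rw [step3]
  rw [Finset.sum_eq_single i
    (fun j _ hji => by
      rw [← Finset.mul_sum, sum_sgn_mul_sgn_ne j i (Ne.symm hji), mul_zero])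
    (fun h => absurd (Finset.mem_univ i) h)]
  rw [← Finset.mul_sum, sum_sgn_sq i, mul_comm]

lemma sq_expand {α : Type*} [Fintype α] (w : α → ℝ) (hw : ∀ x, 0 ≤ w x) (f g : α → ℝ) :
    2 * (∑ x, w x * (f x * g x)) - ∑ x, w x * (g x) ^ 2 ≤ ∑ x, w x * (f x) ^ 2 := by
  have h : 0 ≤ ∑ x, w x * (f x - g x) ^ 2 :=
    Finset.sum_nonneg fun x _ => mul_nonneg (hw x) (sq_nonneg _)
  have expand : ∑ x, w x * (f x - g x) ^ 2
      = ∑ x, w x * (f x) ^ 2 - 2 * (∑ x, w x * (f x * g x)) + ∑ x, w x * (g x) ^ 2 := by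
    rw [Finset.mul_sum, ← Finset.sum_sub_distrib, ← Finset.sum_add_distrib]
    exact Finset.sum_congr rfl fun x _ => by ring
  linarith

lemma bessel (p : Finset (Fin N) → ℝ) (hp0 : ∀ s, 0 ≤ p s)
    (π r : Fin N → ℝ)
    (hπ : ∀ i, π i = ∑ s : Finset (Fin N), if i ∈ s then p s else 0)
    (hπpos : ∀ i, 0 < π i)
    (D : (Fin N → Bool) → Finset (Fin N) → ℝ)
    (hcorr : ∀ i : Fin N, ∑ ε : Fin N → Bool, ∑ s : Finset (Fin N),
        p s * (D ε s * ((if i ∈ s then (1:ℝ) else 0) * (if ε i then (1:ℝ) else -1)))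
      = 2 ^ N * r i) :
    2 ^ N * ∑ i, r i ^ 2 / π i
      ≤ ∑ ε : Fin N → Bool, ∑ s : Finset (Fin N), p s * (D ε s) ^ 2 := by
  classical
  set α := (Fin N → Bool) × Finset (Fin N)
  set w : α → ℝ := fun x => p x.2 with hw
  set U : Fin N → α → ℝ :=
    fun j x => (if j ∈ x.2 then (1:ℝ) else 0) * (if x.1 j then (1:ℝ) else -1) with hU
  set c : Fin N → ℝ := fun j => r j / π j with hc
  set f : α → ℝ := fun x => D x.1 x.2 with hf
  set g : α → ℝ := fun x => ∑ j, c j * U j x with hg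
  -- cross moments of U
  have hUU : ∀ j k : Fin N, j ≠ k → (∑ x : α, w x * (U j x * U k x)) = 0 := by
    intro j k hjk
    rw [Fintype.sum_prod_type]
    rw [Finset.sum_comm]
    refine Finset.sum_eq_zero fun s _ => ?_
    have : ∀ ε : Fin N → Bool,
        w (ε, s) * (U j (ε, s) * U k (ε, s))
          = (p s * ((if j ∈ s then (1:ℝ) else 0) * (if k ∈ s then (1:ℝ) else 0)))
            * ((if ε j then (1:ℝ) else -1) * (if ε k then (1:ℝ) else -1)) := by
      intro ε; simp only [hw, hU]; ring
    rw [Finset.sum_congr rfl fun ε _ => this ε, ← Finset.mul_sum,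
      sum_sgn_mul_sgn_ne j k (Ne.symm hjk), mul_zero]
  have hUsq : ∀ j : Fin N, (∑ x : α, w x * (U j x) ^ 2) = 2 ^ N * π j := by
    intro j
    rw [Fintype.sum_prod_type]
    have hinner : ∀ ε : Fin N → Bool,
        (∑ s : Finset (Fin N), w (ε, s) * (U j (ε, s)) ^ 2) = π j := by
      intro ε
      rw [hπ j]
      refine Finset.sum_congr rfl fun s _ => ?_
      simp only [hw, hU]
      by_cases hj : j ∈ s
      · rw [if_pos hj, if_pos hj]
        split <;> norm_num
      · rw [if_neg hj, if_neg hj]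
        ring
    rw [Finset.sum_congr rfl fun ε _ => hinner ε, Finset.sum_const, Finset.card_univ,
      card_eps, nsmul_eq_mul]
    push_cast
    ring
  -- E[f g]
  have hfg : (∑ x : α, w x * (f x * g x)) = 2 ^ N * ∑ j, c j * r j := by
    have h1 : ∀ x : α, w x * (f x * g x) = ∑ j, c j * (w x * (f x * U j x)) := by
      intro x
      simp only [hg, Finset.mul_sum]
      exact Finset.sum_congr rfl fun j _ => by ring
    rw [Finset.sum_congr rfl fun x _ => h1 x, Finset.sum_comm]
    rw [Finset.mul_sum]
    refine Finset.sum_congr rfl fun j _ => ?_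
    rw [← Finset.mul_sum]
    have h2 : (∑ x : α, w x * (f x * U j x)) = 2 ^ N * r j := by
      rw [Fintype.sum_prod_type]
      exact hcorr j
    rw [h2]; ring
  -- E[g^2]
  have hgg : (∑ x : α, w x * (g x) ^ 2) = 2 ^ N * ∑ j, c j ^ 2 * π j := by
    have h1 : ∀ x : α, w x * (g x) ^ 2
        = ∑ j, ∑ k, (c j * c k) * (w x * (U j x * U k x)) := by
      intro x
      calc w x * (g x) ^ 2
          = w x * ((∑ j, c j * U j x) * (∑ k, c k * U k x)) := by
            rw [sq]
        _ = ∑ j, ∑ k, w x * ((c j * U j x) * (c k * U k x)) := by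
            rw [Finset.sum_mul_sum, Finset.mul_sum]
            exact Finset.sum_congr rfl fun j _ => Finset.mul_sum _ _ _
        _ = ∑ j, ∑ k, (c j * c k) * (w x * (U j x * U k x)) :=
            Finset.sum_congr rfl fun j _ => Finset.sum_congr rfl fun k _ => by ring
    rw [Finset.sum_congr rfl fun x _ => h1 x, Finset.sum_comm]
    have h2 : ∀ j : Fin N,
        (∑ x : α, ∑ k, (c j * c k) * (w x * (U j x * U k x)))
          = 2 ^ N * (c j ^ 2 * π j) := by
      intro j
      rw [Finset.sum_comm]
      rw [Finset.sum_eq_single j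
        (fun k _ hkj => by rw [← Finset.mul_sum, hUU j k (Ne.symm hkj), mul_zero])
        (fun h => absurd (Finset.mem_univ j) h)]
      rw [← Finset.mul_sum]
      have : (∑ x : α, w x * (U j x * U j x)) = ∑ x : α, w x * (U j x) ^ 2 :=
        Finset.sum_congr rfl fun x _ => by ring
      rw [this, hUsq j]; ring
    rw [Finset.sum_congr rfl fun j _ => h2 j, ← Finset.mul_sum]
  -- assemble
  have key := sq_expand w (fun x => hp0 x.2) f g
  rw [hfg, hgg] at key
  have hrw : (∑ ε : Fin N → Bool, ∑ s : Finset (Fin N), p s * (D ε s) ^ 2)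
      = ∑ x : α, w x * (f x) ^ 2 := (Fintype.sum_prod_type (fun x : α => w x * (f x) ^ 2)).symm
  rw [hrw]
  have hval : ∀ j : Fin N, 2 * (c j * r j) - c j ^ 2 * π j = r j ^ 2 / π j := by
    intro j
    have hπj := (hπpos j).ne'
    simp only [hc]
    field_simp
    ring
  have hsum : 2 * (2 ^ N * ∑ j, c j * r j) - 2 ^ N * ∑ j, c j ^ 2 * π j
      = 2 ^ N * ∑ j, r j ^ 2 / π j := by
    have h3 : (∑ j, r j ^ 2 / π j) = ∑ j, (2 * (c j * r j) - c j ^ 2 * π j) :=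
      Finset.sum_congr rfl fun j _ => (hval j).symm
    rw [h3, Finset.sum_sub_distrib, mul_sub, ← Finset.mul_sum]
    ring
  linarith

end Stmt10Aux

open Stmt10Aux in
/-- Correlations with the observed sign directions and the
Bessel lower bound. With `ε` uniform on `{−1,1}^N` (encoded by `Fin N → Bool`,
`true ↦ 1`, `false ↦ -1`) independent of `S`, `U i = 1(i ∈ S) * ε i` and
`D = δ_S((m j + r j ε j)_{j∈S}) − ∑ j, m j`, any unbiased estimator `δ`
satisfies `E[D * U i] = r i` for each `i`, and consequently
`E[D²] ≥ ∑ i, r i ^ 2 / π i`. -/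
theorem correlation_and_bessel_bound
    (N : ℕ) (a b : Fin N → ℝ) (hab : ∀ i, a i ≤ b i)
    (m r : Fin N → ℝ)
    (hm : ∀ i, m i = (a i + b i) / 2)
    (hr : ∀ i, r i = (b i - a i) / 2)
    (p : Finset (Fin N) → ℝ) (hp0 : ∀ s, 0 ≤ p s)
    (hp1 : ∑ s : Finset (Fin N), p s = 1)
    (π : Fin N → ℝ)
    (hπ : ∀ i, π i = ∑ s : Finset (Fin N), if i ∈ s then p s else 0)
    (hπpos : ∀ i, 0 < π i)
    (δ : Finset (Fin N) → (Fin N → ℝ) → ℝ)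
    (hloc : ∀ s (y y' : Fin N → ℝ), (∀ i ∈ s, y i = y' i) → δ s y = δ s y')
    (hunb : ∀ y : Fin N → ℝ, (∀ i, y i ∈ Set.Icc (a i) (b i)) →
      ∑ s : Finset (Fin N), p s * δ s y = ∑ i, y i) :
    (∀ i : Fin N,
      ((2 : ℝ) ^ N)⁻¹ *
          ∑ ε : Fin N → Bool, ∑ s : Finset (Fin N),
            p s * ((δ s (fun j => m j + r j * (if ε j then 1 else -1)) - ∑ j, m j)
              * ((if i ∈ s then 1 else 0) * (if ε i then 1 else -1)))
        = r i) ∧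
    ((2 : ℝ) ^ N)⁻¹ *
        ∑ ε : Fin N → Bool, ∑ s : Finset (Fin N),
          p s * (δ s (fun j => m j + r j * (if ε j then 1 else -1))
            - ∑ j, m j) ^ 2
      ≥ ∑ i, r i ^ 2 / π i := by
  constructor
  · intro i
    rw [corr a b hab m r hm hr p hp1 δ hloc hunb i, ← mul_assoc,
      inv_mul_cancel₀ (by positivity : ((2:ℝ) ^ N) ≠ 0), one_mul]
  · have hb := bessel p hp0 π r hπ hπpos
      (fun ε s => δ s (fun j => m j + r j * (if ε j then (1:ℝ) else -1)) - ∑ j, m j)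
      (fun i => corr a b hab m r hm hr p hp1 δ hloc hunb i)
    have h2 : (0:ℝ) ≤ ((2:ℝ) ^ N)⁻¹ := by positivity
    have h3 := mul_le_mul_of_nonneg_left hb h2
    have h4 : ((2:ℝ) ^ N)⁻¹ * (2 ^ N * ∑ i, r i ^ 2 / π i) = ∑ i, r i ^ 2 / π i := by
      rw [← mul_assoc, inv_mul_cancel₀ (by positivity : ((2:ℝ) ^ N) ≠ 0), one_mul]
    rw [ge_iff_le, ← h4]
    exact h3
end

section
/- Let p be a sampling design with inclusion probabilities π_i > 0 and suppose r_i > 0 for all i. If at every vertex y = m + rε of Θ (ε ∈ {−1,1}^N) the risk of the midpoint-differenced Horvitz–Thompson estimator equals D_π = Σ_{i=1}^N r_i²(1−π_i)/π_i, then Δ_{ij} = π_{ij} − π_i π_j = 0 for every pair i ≠ j. -/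
/-- Constant vertex risk forces pairwise independence. If at
every vertex `y = (m i + r i ε i)_i` of `Θ` (with `ε ∈ {−1,1}^N`, encoded by
`Fin N → Bool`, `true ↦ 1`, `false ↦ -1`) the risk of the midpoint-differenced
Horvitz–Thompson estimator equals `Dπ = ∑ i, r i ^ 2 * (1 − π i)/π i`, then
`π_{ij} − π i * π j = 0` for every `i ≠ j`. -/
theorem constant_vertex_risk_forces_pairwise_independence
    (N : ℕ) (a b : Fin N → ℝ) (hab : ∀ i, a i < b i)
    (m r : Fin N → ℝ)
    (hm : ∀ i, m i = (a i + b i) / 2)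
    (hr : ∀ i, r i = (b i - a i) / 2) (hrpos : ∀ i, 0 < r i)
    (p : Finset (Fin N) → ℝ) (hp0 : ∀ s, 0 ≤ p s)
    (hp1 : ∑ s : Finset (Fin N), p s = 1)
    (π : Fin N → ℝ)
    (hπ : ∀ i, π i = ∑ s : Finset (Fin N), if i ∈ s then p s else 0)
    (hπpos : ∀ i, 0 < π i)
    (πij : Fin N → Fin N → ℝ)
    (hπij : ∀ i j, πij i j = ∑ s : Finset (Fin N), if i ∈ s ∧ j ∈ s then p s else 0)
    (hvert : ∀ ε : Fin N → Bool,
      ∑ s : Finset (Fin N),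
          p s * (((∑ i, m i) +
              ∑ i ∈ s, ((m i + r i * (if ε i then 1 else -1)) - m i) / π i)
            - ∑ i, (m i + r i * (if ε i then 1 else -1))) ^ 2
        = ∑ i, r i ^ 2 * ((1 - π i) / π i)) :
    ∀ i j, i ≠ j → πij i j - π i * π j = 0 := by
  intro i j hij
  have hπne : ∀ k, π k ≠ 0 := fun k => (hπpos k).ne'
  set φ : Fin N → Finset (Fin N) → ℝ :=
    fun k s => r k * (((if k ∈ s then (1:ℝ) else 0) - π k) / π k) with hφ
  -- Step 1: rewrite the vertex risk as ∑ s, p s * (∑ k, e k * φ k s)^2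
  have key : ∀ ε : Fin N → Bool,
      ∑ s : Finset (Fin N),
        p s * (∑ k, (if ε k then (1:ℝ) else -1) * φ k s) ^ 2
      = ∑ k, r k ^ 2 * ((1 - π k) / π k) := by
    intro ε
    rw [← hvert ε]
    refine Finset.sum_congr rfl fun s _ => ?_
    have hs : ∑ k ∈ s, ((m k + r k * (if ε k then (1:ℝ) else -1)) - m k) / π k
        = ∑ k, if k ∈ s then (r k * (if ε k then (1:ℝ) else -1)) / π k else 0 := by
      have hsub := Finset.sum_subset
        (f := fun k => if k ∈ s then (r k * (if ε k then (1:ℝ) else -1)) / π k else 0)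
        (Finset.subset_univ s) (fun k _ hk => if_neg hk)
      rw [← hsub]
      exact Finset.sum_congr rfl fun k hk => by simp only [hk, if_true]; ring
    have hinner : ((∑ k, m k) +
          ∑ k ∈ s, ((m k + r k * (if ε k then (1:ℝ) else -1)) - m k) / π k)
        - ∑ k, (m k + r k * (if ε k then (1:ℝ) else -1))
        = ∑ k, (if ε k then (1:ℝ) else -1) * φ k s := by
      rw [hs, ← Finset.sum_add_distrib, ← Finset.sum_sub_distrib]
      refine Finset.sum_congr rfl fun k _ => ?_
      by_cases hk : k ∈ s <;> by_cases hε : ε k <;>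
          simp only [hφ, hk, hε, if_true, if_false] <;>
        field_simp [hπne k] <;> ring
    rw [hinner]
  -- The four sign vectors
  have hF1 : ∀ s : Finset (Fin N),
      (∑ k, (if (fun _ : Fin N => true) k then (1:ℝ) else -1) * φ k s)
        = ∑ k, φ k s := by
    intro s; exact Finset.sum_congr rfl fun k _ => by simp
  have hflip : ∀ (t : Fin N) (s : Finset (Fin N)),
      (∑ k, (if (if k = t then false else true) then (1:ℝ) else -1) * φ k s)
        = (∑ k, φ k s) - 2 * φ t s := by
    intro t s
    have : ∀ k, (if (if k = t then false else true) then (1:ℝ) else -1) * φ k s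
        = φ k s - (if k = t then 2 * φ k s else 0) := by
      intro k; by_cases hk : k = t <;> simp [hk] <;> ring
    rw [Finset.sum_congr rfl fun k _ => this k, Finset.sum_sub_distrib,
      Finset.sum_ite_eq' Finset.univ t (fun k => 2 * φ k s)]
    simp
  have hflip2 : ∀ s : Finset (Fin N),
      (∑ k, (if (if k = i ∨ k = j then false else true) then (1:ℝ) else -1) * φ k s)
        = (∑ k, φ k s) - 2 * φ i s - 2 * φ j s := by
    intro s
    have : ∀ k, (if (if k = i ∨ k = j then false else true) then (1:ℝ) else -1) * φ k s
        = φ k s - (if k = i then 2 * φ k s else 0) - (if k = j then 2 * φ k s else 0) := by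
      intro k
      by_cases hki : k = i
      · subst hki; simp [hij]; ring
      · by_cases hkj : k = j
        · subst hkj; simp [hki, (Ne.symm hij : ¬ k = i)]; ring
        · simp [hki, hkj]
    rw [Finset.sum_congr rfl fun k _ => this k, Finset.sum_sub_distrib,
      Finset.sum_sub_distrib, Finset.sum_ite_eq' Finset.univ i (fun k => 2 * φ k s),
      Finset.sum_ite_eq' Finset.univ j (fun k => 2 * φ k s)]
    simp
  -- Combine the four instances of `key`
  have e1 := key (fun _ => true)
  have e2 := key (fun k => if k = i then false else true)
  have e3 := key (fun k => if k = j then false else true)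
  have e4 := key (fun k => if k = i ∨ k = j then false else true)
  simp only [eq_self_iff_true, if_true, one_mul] at e1
  simp only [hflip i] at e2
  simp only [hflip j] at e3
  simp only [hflip2] at e4
  have h8 : ∑ s : Finset (Fin N), p s * (8 * (φ i s * φ j s)) = 0 := by
    have hsplit : ∑ s : Finset (Fin N), p s * (8 * (φ i s * φ j s))
        = ((∑ s : Finset (Fin N), p s * (∑ k, φ k s) ^ 2)
            + ∑ s : Finset (Fin N), p s * ((∑ k, φ k s) - 2 * φ i s - 2 * φ j s) ^ 2)
          - (∑ s : Finset (Fin N), p s * ((∑ k, φ k s) - 2 * φ i s) ^ 2)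
          - (∑ s : Finset (Fin N), p s * ((∑ k, φ k s) - 2 * φ j s) ^ 2) := by
      rw [← Finset.sum_add_distrib, ← Finset.sum_sub_distrib, ← Finset.sum_sub_distrib]
      exact Finset.sum_congr rfl fun s _ => by ring
    rw [hsplit, e1, e2, e3, e4]
    ring
  -- Evaluate ∑ s, p s * φ i s * φ j s
  have hXi : ∀ k, ∑ s : Finset (Fin N), p s * (if k ∈ s then (1:ℝ) else 0) = π k := by
    intro k
    rw [hπ k]
    exact Finset.sum_congr rfl fun s _ => by by_cases h : k ∈ s <;> simp [h]
  have hXij : ∑ s : Finset (Fin N),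
      p s * ((if i ∈ s then (1:ℝ) else 0) * (if j ∈ s then (1:ℝ) else 0)) = πij i j := by
    rw [hπij]
    refine Finset.sum_congr rfl fun s _ => ?_
    by_cases h1 : i ∈ s <;> by_cases h2 : j ∈ s <;> simp [h1, h2]
  have hC : ∑ s : Finset (Fin N),
      p s * (((if i ∈ s then (1:ℝ) else 0) - π i) * ((if j ∈ s then (1:ℝ) else 0) - π j))
      = πij i j - π i * π j := by
    have expand : ∀ s : Finset (Fin N),
        p s * (((if i ∈ s then (1:ℝ) else 0) - π i) * ((if j ∈ s then (1:ℝ) else 0) - π j))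
        = p s * ((if i ∈ s then (1:ℝ) else 0) * (if j ∈ s then (1:ℝ) else 0))
          - π i * (p s * (if j ∈ s then (1:ℝ) else 0))
          - π j * (p s * (if i ∈ s then (1:ℝ) else 0))
          + (π i * π j) * p s := fun s => by ring
    rw [Finset.sum_congr rfl fun s _ => expand s, Finset.sum_add_distrib,
      Finset.sum_sub_distrib, Finset.sum_sub_distrib, hXij,
      ← Finset.mul_sum, ← Finset.mul_sum, ← Finset.mul_sum, hXi i, hXi j, hp1]
    ring
  have heq : ∑ s : Finset (Fin N), p s * (8 * (φ i s * φ j s))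
      = (8 * (r i * r j) / (π i * π j)) * (πij i j - π i * π j) := by
    rw [← hC, Finset.mul_sum]
    refine Finset.sum_congr rfl fun s _ => ?_
    simp only [hφ]
    field_simp
  have hmain : (8 * (r i * r j) / (π i * π j)) * (πij i j - π i * π j) = 0 :=
    heq.symm.trans h8
  have hne : (8 * (r i * r j) / (π i * π j)) ≠ 0 := by
    apply div_ne_zero
    · exact mul_ne_zero (by norm_num) (mul_ne_zero (hrpos i).ne' (hrpos j).ne')
    · exact mul_ne_zero (hπne i) (hπne j)
  exact (mul_eq_zero.mp hmain).resolve_left hne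
end

section
/- Let r_1,…,r_N > 0, 0 < n < N, let c > 0 satisfy Σ_{i=1}^N min(1, c r_i) = n, and set π_i* = min(1, c r_i) and λ = c^{−2}. Then for every vector π with 0 < π_i ≤ 1 for all i and Σ_{i=1}^N π_i ≤ n, one has Σ_{i=1}^N r_i²/π_i ≥ Σ_{i=1}^N r_i²/π_i*, with equality only if π = π*; hence π* is the unique minimizer of f(π) = Σ_{i=1}^N r_i²/π_i over the feasible set. -/
/-- Optimality and uniqueness of the water-filling inclusion
probabilities. Let `r i > 0`, `0 < n < N`, let `c > 0` satisfy
`∑ i, min 1 (c * r i) = n`, and set `πs i = min 1 (c * r i)`. Then every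
feasible `π` (i.e. `0 < π i ≤ 1` and `∑ i, π i ≤ n`) satisfies
`∑ i, r i ^ 2 / π i ≥ ∑ i, r i ^ 2 / πs i`, with equality only if `π = πs`;
hence `πs` is the unique minimizer of `f(π) = ∑ i, r i ^ 2 / π i` over the
feasible set. -/
theorem waterfilling_unique_minimizer
    (N : ℕ) (r : Fin N → ℝ) (hr : ∀ i, 0 < r i)
    (n : ℝ) (hn0 : 0 < n) (hnN : n < (N : ℝ))
    (c : ℝ) (hc : 0 < c) (hcsum : ∑ i, min 1 (c * r i) = n)
    (πs : Fin N → ℝ) (hπs : ∀ i, πs i = min 1 (c * r i))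
    (π : Fin N → ℝ) (hπ : ∀ i, 0 < π i ∧ π i ≤ 1) (hsum : ∑ i, π i ≤ n) :
    (∑ i, r i ^ 2 / πs i ≤ ∑ i, r i ^ 2 / π i) ∧
    (∑ i, r i ^ 2 / π i = ∑ i, r i ^ 2 / πs i → π = πs) := by
  have hπs0 : ∀ i, 0 < πs i := by
    intro i; rw [hπs i]; exact lt_min one_pos (mul_pos hc (hr i))
  have hc2 : (0:ℝ) < c ^ 2 := by positivity
  set lam : ℝ := 1 / c ^ 2 with hlam
  have hlam0 : 0 < lam := by positivity
  -- termwise key inequality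
  have hkey : ∀ i, r i ^ 2 / π i - r i ^ 2 / πs i - lam * (πs i - π i)
      ≥ r i ^ 2 * (πs i - π i) ^ 2 / (π i * (πs i) ^ 2) := by
    intro i
    have hx := (hπ i).1
    have hx1 := (hπ i).2
    have hy := hπs0 i
    have hid : r i ^ 2 / π i - r i ^ 2 / πs i
        = r i ^ 2 * (πs i - π i) ^ 2 / (π i * (πs i) ^ 2)
          + (r i ^ 2 / (πs i) ^ 2) * (πs i - π i) := by
      field_simp
      ring
    have hB : (r i ^ 2 / (πs i) ^ 2) * (πs i - π i) ≥ lam * (πs i - π i) := by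
      rcases le_total (c * r i) 1 with h | h
      · have hys : πs i = c * r i := by rw [hπs i, min_eq_right h]
        have heq : r i ^ 2 / (πs i) ^ 2 = lam := by
          rw [hys, hlam]
          have hri := hr i
          field_simp
        rw [heq]
      · have hys : πs i = 1 := by rw [hπs i, min_eq_left h]
        have hr2 : lam ≤ r i ^ 2 / (πs i) ^ 2 := by
          rw [hys, hlam, one_pow, div_one, div_le_iff₀ hc2]
          nlinarith [hr i]
        have hnn : 0 ≤ πs i - π i := by rw [hys]; linarith
        nlinarith
    linarith [hid, hB]
  have hA : ∀ i, (0:ℝ) ≤ r i ^ 2 * (πs i - π i) ^ 2 / (π i * (πs i) ^ 2) := by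
    intro i
    have hx := (hπ i).1
    have hy := hπs0 i
    positivity
  have hπssum : ∑ i, πs i = n := by simp_rw [hπs]; exact hcsum
  have hsum1 : ∑ i, (r i ^ 2 / π i - r i ^ 2 / πs i - lam * (πs i - π i))
      ≥ ∑ i, r i ^ 2 * (πs i - π i) ^ 2 / (π i * (πs i) ^ 2) :=
    Finset.sum_le_sum (fun i _ => hkey i)
  have hexp : ∑ i, (r i ^ 2 / π i - r i ^ 2 / πs i - lam * (πs i - π i))
      = (∑ i, r i ^ 2 / π i) - (∑ i, r i ^ 2 / πs i)
        - lam * ((∑ i, πs i) - ∑ i, π i) := by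
    rw [mul_sub, Finset.mul_sum, Finset.mul_sum, ← Finset.sum_sub_distrib,
      ← Finset.sum_sub_distrib, ← Finset.sum_sub_distrib]
    exact Finset.sum_congr rfl (fun i _ => by ring)
  have hAsum : (0:ℝ) ≤ ∑ i, r i ^ 2 * (πs i - π i) ^ 2 / (π i * (πs i) ^ 2) :=
    Finset.sum_nonneg (fun i _ => hA i)
  have hslack : 0 ≤ lam * ((∑ i, πs i) - ∑ i, π i) := by
    apply mul_nonneg hlam0.le
    rw [hπssum]; linarith
  constructor
  · nlinarith [hsum1, hexp, hAsum, hslack]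
  · intro heq
    have hdiffnn : ∀ i ∈ Finset.univ,
        (0:ℝ) ≤ r i ^ 2 / π i - r i ^ 2 / πs i - lam * (πs i - π i) := by
      intro i _
      have := hkey i
      have := hA i
      linarith
    have hzero : ∑ i, (r i ^ 2 / π i - r i ^ 2 / πs i - lam * (πs i - π i)) = 0 := by
      have hle : ∑ i, (r i ^ 2 / π i - r i ^ 2 / πs i - lam * (πs i - π i)) ≤ 0 := by
        rw [hexp, heq]; linarith
      have hge : 0 ≤ ∑ i, (r i ^ 2 / π i - r i ^ 2 / πs i - lam * (πs i - π i)) :=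
        Finset.sum_nonneg hdiffnn
      linarith
    have hterm := (Finset.sum_eq_zero_iff_of_nonneg hdiffnn).mp hzero
    funext i
    have hdi := hterm i (Finset.mem_univ i)
    have hAle : r i ^ 2 * (πs i - π i) ^ 2 / (π i * (πs i) ^ 2) ≤ 0 := by
      have := hkey i; linarith
    have hx := (hπ i).1
    have hy := hπs0 i
    have hden : 0 < π i * (πs i) ^ 2 := by positivity
    have hnum : r i ^ 2 * (πs i - π i) ^ 2 ≤ 0 * (π i * (πs i) ^ 2) :=
      (div_le_iff₀ hden).mp hAle
    have hsq : (πs i - π i) ^ 2 = 0 := by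
      have hr2 : 0 < r i ^ 2 := pow_pos (hr i) 2
      nlinarith [sq_nonneg (πs i - π i)]
    have : πs i - π i = 0 := by
      exact pow_eq_zero_iff two_ne_zero |>.mp hsq
    linarith
end

section
/- Fix a sampling design p with π_i > 0 for all i. Let μ = μ_1 ⊗ ⋯ ⊗ μ_N be a product probability measure on Θ = ∏_{i=1}^N [a_i,b_i] such that each μ_i has mean m_i = (a_i+b_i)/2 and positive variance σ_i². Then every unbiased estimator δ satisfies ∫_Θ R(δ,p;y) dμ(y) ≥ Σ_{i=1}^N σ_i² (1/π_i − 1), and the midpoint-differenced Horvitz–Thompson estimator T̂ attains this bound: ∫_Θ R(T̂,p;y) dμ(y) = Σ_{i=1}^N σ_i² (1/π_i − 1). -/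
/-!
Let `w_s = T̂_s - ∑ y` be the error of the Horvitz–Thompson estimator on the sample `s` and
`g_s = δ_s - T̂_s`. Since `w_s = ∑ i, (1{i ∈ s} / π_i - 1) (y_i - m_i)` is a linear combination of
independent centred coordinates, its prior mean square is `∑ i, (1{i ∈ s} / π_i - 1)² σ_i²`, and
averaging over the design gives `∑ i, σ_i² (1 / π_i - 1)`.

For an unbiased `δ` the cross term `∑ s, p_s E[g_s w_s]` vanishes: the coefficient
`1 / π_i - 1` of a sampled unit does not depend on the sample, so by unbiasedness
(`∑ s, p_s g_s = 0` on `Θ`) only the units outside `s` contribute to `∑ s, p_s g_s w_s`, and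
`g_s` does not depend on them while they have mean zero. Hence the Bayes risk of `δ` exceeds
that of `T̂` by `∑ s, p_s E[g_s²] ≥ 0`.
-/

open MeasureTheory Finset
open scoped ENNReal

theorem integral_mul_comp_eval_eq_zero {N : ℕ} {α : Fin N → Type*} [∀ i, MeasurableSpace (α i)]
    (μ : ∀ i, Measure (α i)) [∀ i, SigmaFinite (μ i)] {i : Fin N} {f : (∀ j, α j) → ℝ}
    (hf : ∀ y y', (∀ j, j ≠ i → y j = y' j) → f y = f y') {h : α i → ℝ}
    (hh : ∫ x, h x ∂μ i = 0) :
    ∫ y, f y * h (y i) ∂Measure.pi μ = 0 := by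
  obtain ⟨n, rfl⟩ : ∃ n, N = n + 1 := Nat.exists_eq_add_one_of_ne_zero i.pos.ne'
  rcases isEmpty_or_nonempty (α i) with hα | ⟨⟨x₀⟩⟩
  · have : IsEmpty (∀ j, α j) := ⟨fun y => hα.false (y i)⟩
    simp [integral_of_isEmpty]
  set e := MeasurableEquiv.piFinSuccAbove α i
  -- Freezing coordinate `i` at `x₀` does not change `f`, so in the coordinates `e y = (y i, _)`
  -- the integrand splits as a product.
  have hsplit : ∀ y, h (e y).1 * f (e.symm (x₀, (e y).2)) = f y * h (y i) := fun y => by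
    rw [mul_comm, hf _ y]
    · rfl
    intro j hj
    obtain ⟨k, rfl⟩ := Fin.exists_succAbove_eq hj
    simp [e, MeasurableEquiv.piFinSuccAbove, Fin.insertNthEquiv, Fin.removeNth]
  simp_rw [← hsplit]
  rw [(measurePreserving_piFinSuccAbove μ i).integral_comp'
      (fun z => h z.1 * f (e.symm (x₀, z.2))),
    integral_prod_mul h (fun u => f (e.symm (x₀, u))), hh, zero_mul]

theorem integral_sq_sum_mul_of_orthogonal {Ω ι : Type*} [MeasurableSpace Ω] {P : Measure Ω}
    [Fintype ι] {z : ι → Ω → ℝ} (hz : ∀ i, MemLp (z i) 2 P)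
    (horth : Pairwise fun i j => ∫ ω, z i ω * z j ω ∂P = 0) (c : ι → ℝ) :
    ∫ ω, (∑ i, c i * z i ω) ^ 2 ∂P = ∑ i, c i ^ 2 * ∫ ω, z i ω ^ 2 ∂P := by
  classical
  have hint : ∀ i j, Integrable (fun ω => c i * c j * (z i ω * z j ω)) P := fun i j =>
    ((hz i).integrable_mul (hz j)).const_mul _
  have hexp : ∀ ω, (∑ i, c i * z i ω) ^ 2 = ∑ i, ∑ j, c i * c j * (z i ω * z j ω) := fun ω => by
    rw [sq, sum_mul_sum]
    exact sum_congr rfl fun i _ => sum_congr rfl fun j _ => by ring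
  simp_rw [hexp]
  rw [integral_finsetSum _ fun i _ => integrable_finsetSum _ fun j _ => hint i j]
  refine sum_congr rfl fun i _ => ?_
  rw [integral_finsetSum _ fun j _ => hint i j, sum_eq_single i]
  · rw [integral_const_mul]
    simp_rw [← sq]
  · exact fun j _ hji => by rw [integral_const_mul, horth hji.symm, mul_zero]
  · exact fun hi => absurd (mem_univ i) hi

theorem integrable_mul_of_integrable_sum_mul_sq {Ω ι : Type*} [MeasurableSpace Ω]
    {P : Measure Ω} [IsFiniteMeasure P] [Fintype ι] {p : ι → ℝ} (hp0 : ∀ s, 0 ≤ p s)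
    {D : ι → Ω → ℝ} (hD : ∀ s, AEStronglyMeasurable (D s) P)
    (h : Integrable (fun ω => ∑ s, p s * D s ω ^ 2) P) (s : ι) :
    Integrable (fun ω => p s * D s ω) P := by
  have hterm : Integrable (fun ω => p s * D s ω ^ 2) P :=
    h.mono' (aestronglyMeasurable_const.mul ((hD s).pow 2)) <| ae_of_all _ fun ω => by
      rw [Real.norm_of_nonneg (mul_nonneg (hp0 s) (sq_nonneg _))]
      exact single_le_sum (f := fun t => p t * D t ω ^ 2)
        (fun t _ => mul_nonneg (hp0 t) (sq_nonneg _)) (mem_univ s)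
  have hL2 : MemLp (fun ω => p s * D s ω) 2 P := by
    refine (memLp_two_iff_integrable_sq ((hD s).const_mul (p s))).2 ?_
    simpa only [mul_pow, sq (p s), mul_assoc] using hterm.const_mul (p s)
  exact hL2.integrable one_le_two

noncomputable def htEstimator {ι : Type*} [Fintype ι] (m π : ι → ℝ) (s : Finset ι)
    (y : ι → ℝ) : ℝ :=
  ∑ i, m i + ∑ i ∈ s, (y i - m i) / π i

theorem htEstimator_congr {ι : Type*} [Fintype ι] {m π : ι → ℝ} {s : Finset ι} {y y' : ι → ℝ}
    (hyy : ∀ i ∈ s, y i = y' i) : htEstimator m π s y = htEstimator m π s y' := by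
  unfold htEstimator
  congr 1
  exact sum_congr rfl fun i hi => by rw [hyy i hi]

noncomputable def risk {ι : Type*} [Fintype ι] (p : Finset ι → ℝ)
    (δ : Finset ι → (ι → ℝ) → ℝ) (y : ι → ℝ) : ℝ :=
  ∑ s, p s * (δ s y - ∑ i, y i) ^ 2

theorem risk_nonneg {ι : Type*} [Fintype ι] {p : Finset ι → ℝ} (hp0 : ∀ s, 0 ≤ p s)
    (δ : Finset ι → (ι → ℝ) → ℝ) (y : ι → ℝ) : 0 ≤ risk p δ y :=
  sum_nonneg fun s _ => mul_nonneg (hp0 s) (sq_nonneg _)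

section Design

variable {ι : Type*} [Fintype ι] [DecidableEq ι] {p : Finset ι → ℝ} {π : ι → ℝ}

theorem sum_mul_ite_mem (hp1 : ∑ s, p s = 1)
    (hπ : ∀ i, π i = ∑ s, if i ∈ s then p s else 0) (i : ι) (A B : ℝ) :
    ∑ s, p s * (if i ∈ s then A else B) = π i * A + (1 - π i) * B := by
  have hsplit : ∀ s, p s * (if i ∈ s then A else B)
      = (if i ∈ s then p s else 0) * A + (p s - if i ∈ s then p s else 0) * B := fun s => by
    split_ifs <;> ring
  rw [sum_congr rfl fun s _ => hsplit s, sum_add_distrib, ← sum_mul, ← sum_mul,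
    sum_sub_distrib, hp1, ← hπ]

theorem sum_mul_sum_mem (hπ : ∀ i, π i = ∑ s, if i ∈ s then p s else 0) (x : ι → ℝ) :
    ∑ s, p s * ∑ i ∈ s, x i = ∑ i, π i * x i := by
  simp_rw [hπ, sum_mul, ite_mul, zero_mul, mul_sum]
  rw [sum_comm]
  simp_rw [sum_ite_mem, univ_inter]

theorem sum_mul_htEstimator (hp1 : ∑ s, p s = 1)
    (hπ : ∀ i, π i = ∑ s, if i ∈ s then p s else 0) (hπ0 : ∀ i, π i ≠ 0) (m y : ι → ℝ) :
    ∑ s, p s * htEstimator m π s y = ∑ i, y i := by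
  simp_rw [htEstimator, mul_add, sum_add_distrib, ← sum_mul, hp1, sum_mul_sum_mem hπ,
    mul_div_cancel₀ _ (hπ0 _), sum_sub_distrib]
  ring

theorem htEstimator_sub_sum (m : ι → ℝ) (s : Finset ι) (y : ι → ℝ) :
    htEstimator m π s y - ∑ i, y i
      = ∑ i, ((if i ∈ s then (π i)⁻¹ else 0) - 1) * (y i - m i) := by
  have hterm : ∀ i, ((if i ∈ s then (π i)⁻¹ else 0) - 1) * (y i - m i)
      = (if i ∈ s then (y i - m i) / π i else 0) - (y i - m i) := fun i => by
    split_ifs <;> ring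
  rw [sum_congr rfl fun i _ => hterm i, sum_sub_distrib, sum_ite_mem, univ_inter,
    sum_sub_distrib, htEstimator]
  ring

end Design

section ProductPrior

variable {N : ℕ} (μ : Fin N → Measure ℝ) [∀ i, IsProbabilityMeasure (μ i)] {m : Fin N → ℝ}
  {p : Finset (Fin N) → ℝ} {π : Fin N → ℝ}

theorem memLp_top_coord_sub (hbdd : ∀ i, MemLp (fun x : ℝ => x) ∞ (μ i)) (m : Fin N → ℝ)
    (i : Fin N) : MemLp (fun y : Fin N → ℝ => y i - m i) ∞ (Measure.pi μ) :=
  ((hbdd i).sub (memLp_const (m i))).comp_measurePreserving (measurePreserving_eval μ i)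

theorem integral_sub_mean (hbdd : ∀ i, MemLp (fun x : ℝ => x) ∞ (μ i))
    (hmean : ∀ i, ∫ x, x ∂μ i = m i) (i : Fin N) : ∫ x, (x - m i) ∂μ i = 0 := by
  rw [integral_sub ((hbdd i).integrable le_top) (integrable_const _), hmean, integral_const,
    probReal_univ, one_smul, sub_self]

theorem integral_coord_sub_mul_coord_sub_eq_zero (hbdd : ∀ i, MemLp (fun x : ℝ => x) ∞ (μ i))
    (hmean : ∀ i, ∫ x, x ∂μ i = m i) {i j : Fin N} (hij : i ≠ j) :
    ∫ y : Fin N → ℝ, (y i - m i) * (y j - m j) ∂Measure.pi μ = 0 :=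
  integral_mul_comp_eval_eq_zero μ (f := fun y => y i - m i) (h := fun x => x - m j)
    (fun y y' hyy => by rw [hyy i hij]) (integral_sub_mean μ hbdd hmean j)

theorem memLp_top_htEstimator_sub_sum (hbdd : ∀ i, MemLp (fun x : ℝ => x) ∞ (μ i))
    (m π : Fin N → ℝ) (s : Finset (Fin N)) :
    MemLp (fun y => htEstimator m π s y - ∑ i, y i) ∞ (Measure.pi μ) := by
  simp_rw [htEstimator_sub_sum]
  exact memLp_finsetSum _ fun i _ => (memLp_top_coord_sub μ hbdd m i).const_mul _

theorem integrable_htEstimator_sub_sum_sq (hbdd : ∀ i, MemLp (fun x : ℝ => x) ∞ (μ i))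
    (m π : Fin N → ℝ) (s : Finset (Fin N)) :
    Integrable (fun y => (htEstimator m π s y - ∑ i, y i) ^ 2) (Measure.pi μ) :=
  ((memLp_top_htEstimator_sub_sum μ hbdd m π s).mono_exponent le_top).integrable_sq

theorem integrable_risk_htEstimator (hbdd : ∀ i, MemLp (fun x : ℝ => x) ∞ (μ i))
    (m π : Fin N → ℝ) : Integrable (risk p (htEstimator m π)) (Measure.pi μ) :=
  integrable_finsetSum _ fun s _ => (integrable_htEstimator_sub_sum_sq μ hbdd m π s).const_mul _

theorem integral_risk_htEstimator (hbdd : ∀ i, MemLp (fun x : ℝ => x) ∞ (μ i))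
    (hmean : ∀ i, ∫ x, x ∂μ i = m i) (hp1 : ∑ s, p s = 1)
    (hπ : ∀ i, π i = ∑ s, if i ∈ s then p s else 0) (hπ0 : ∀ i, π i ≠ 0) :
    ∫ y, risk p (htEstimator m π) y ∂Measure.pi μ
      = ∑ i, (∫ x, (x - m i) ^ 2 ∂μ i) * (1 / π i - 1) := by
  have hz : ∀ i, MemLp (fun y : Fin N → ℝ => y i - m i) 2 (Measure.pi μ) := fun i =>
    (memLp_top_coord_sub μ hbdd m i).mono_exponent le_top
  have hcoeff : ∀ i (s : Finset (Fin N)), ((if i ∈ s then (π i)⁻¹ else 0) - 1) ^ 2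
      = if i ∈ s then ((π i)⁻¹ - 1) ^ 2 else 1 := fun i s => by
    split_ifs <;> ring
  simp only [risk]
  rw [integral_finsetSum _ fun s _ =>
    (integrable_htEstimator_sub_sum_sq μ hbdd m π s).const_mul _]
  simp_rw [integral_const_mul, htEstimator_sub_sum,
    integral_sq_sum_mul_of_orthogonal hz fun i j hij =>
      integral_coord_sub_mul_coord_sub_eq_zero μ hbdd hmean hij,
    mul_sum]
  rw [sum_comm]
  refine sum_congr rfl fun i _ => ?_
  simp_rw [← mul_assoc, ← sum_mul, hcoeff, sum_mul_ite_mem hp1 hπ,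
    integral_comp_eval (μ := μ) (f := fun x => (x - m i) ^ 2) (by fun_prop)]
  field_simp [hπ0 i]
  ring

theorem integral_sum_mul_mul_htEstimator_sub_sum_eq_zero
    (hbdd : ∀ i, MemLp (fun x : ℝ => x) ∞ (μ i)) (hmean : ∀ i, ∫ x, x ∂μ i = m i)
    {g : Finset (Fin N) → (Fin N → ℝ) → ℝ}
    (hg : ∀ s (y y' : Fin N → ℝ), (∀ i ∈ s, y i = y' i) → g s y = g s y')
    (hsum : ∀ᵐ y ∂Measure.pi μ, ∑ s, p s * g s y = 0)
    (hint : ∀ s, Integrable (fun y => p s * g s y) (Measure.pi μ)) :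
    ∫ y, ∑ s, p s * g s y * (htEstimator m π s y - ∑ i, y i) ∂Measure.pi μ = 0 := by
  set e : Finset (Fin N) → Fin N → ℝ := fun s i => if i ∈ s then 0 else (π i)⁻¹
  have hint' : ∀ s i, Integrable (fun y => e s i * (p s * g s y * (y i - m i))) (Measure.pi μ) :=
    fun s i => ((hint s).mul_of_top_left (memLp_top_coord_sub μ hbdd m i)).const_mul _
  -- The coefficient `(π i)⁻¹ - 1` of a sampled unit does not depend on `s`, so its contribution
  -- factors through `∑ s, p s * g s y`, which vanishes; only the unsampled units remain.
  have hae : (fun y => ∑ s, p s * g s y * (htEstimator m π s y - ∑ i, y i))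
      =ᵐ[Measure.pi μ] fun y => -∑ s, ∑ i, e s i * (p s * g s y * (y i - m i)) := by
    filter_upwards [hsum] with y hy
    have hcoeff : ∀ s i, (if i ∈ s then (π i)⁻¹ else 0) - 1 = ((π i)⁻¹ - 1) - e s i :=
      fun s i => by by_cases hi : i ∈ s <;> simp [e, hi]
    have hterm : ∀ s, p s * g s y * (htEstimator m π s y - ∑ i, y i)
        = p s * g s y * ∑ i, ((π i)⁻¹ - 1) * (y i - m i)
          - ∑ i, e s i * (p s * g s y * (y i - m i)) := fun s => by
      rw [htEstimator_sub_sum, mul_sum, mul_sum, ← sum_sub_distrib]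
      exact sum_congr rfl fun i _ => by rw [hcoeff]; ring
    calc ∑ s, p s * g s y * (htEstimator m π s y - ∑ i, y i)
        = (∑ s, p s * g s y) * ∑ i, ((π i)⁻¹ - 1) * (y i - m i)
          - ∑ s, ∑ i, e s i * (p s * g s y * (y i - m i)) := by
          rw [sum_congr rfl fun s _ => hterm s, sum_sub_distrib, sum_mul]
      _ = _ := by rw [hy, zero_mul, zero_sub]
  rw [integral_congr_ae hae, integral_neg, neg_eq_zero,
    integral_finsetSum _ fun s _ => integrable_finsetSum _ fun i _ => hint' s i]
  refine sum_eq_zero fun s _ => ?_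
  rw [integral_finsetSum _ fun i _ => hint' s i]
  refine sum_eq_zero fun i _ => ?_
  rw [integral_const_mul]
  by_cases hi : i ∈ s
  · simp [e, hi]
  · rw [integral_mul_comp_eval_eq_zero μ (f := fun y => p s * g s y) (h := fun x => x - m i)
      (fun y y' hyy => by rw [hg s y y' fun j hj => hyy j (ne_of_mem_of_not_mem hj hi)])
      (integral_sub_mean μ hbdd hmean i), mul_zero]

theorem integral_risk_htEstimator_le (hbdd : ∀ i, MemLp (fun x : ℝ => x) ∞ (μ i))
    (hmean : ∀ i, ∫ x, x ∂μ i = m i) (hp0 : ∀ s, 0 ≤ p s) (hp1 : ∑ s, p s = 1)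
    (hπ : ∀ i, π i = ∑ s, if i ∈ s then p s else 0) (hπ0 : ∀ i, π i ≠ 0)
    {δ : Finset (Fin N) → (Fin N → ℝ) → ℝ} (hδ : ∀ s, Measurable (δ s))
    (hloc : ∀ s (y y' : Fin N → ℝ), (∀ i ∈ s, y i = y' i) → δ s y = δ s y')
    (hunb : ∀ᵐ y ∂Measure.pi μ, ∑ s, p s * δ s y = ∑ i, y i)
    (hint : Integrable (risk p δ) (Measure.pi μ)) :
    ∫ y, risk p (htEstimator m π) y ∂Measure.pi μ ≤ ∫ y, risk p δ y ∂Measure.pi μ := by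
  set g := fun s y => δ s y - htEstimator m π s y
  have hHT := memLp_top_htEstimator_sub_sum μ hbdd m π
  have hg : ∀ s, Integrable (fun y => p s * g s y) (Measure.pi μ) := fun s => by
    have hD := integrable_mul_of_integrable_sum_mul_sq hp0 (D := fun s y => δ s y - ∑ i, y i)
      (fun s => by fun_prop) hint s
    convert hD.sub (((hHT s).integrable le_top).const_mul (p s)) using 2
    simp only [g, Pi.sub_apply]
    ring
  have hcross : ∫ y, ∑ s, p s * g s y * (htEstimator m π s y - ∑ i, y i) ∂Measure.pi μ = 0 := by
    refine integral_sum_mul_mul_htEstimator_sub_sum_eq_zero μ hbdd hmean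
      (fun s y y' hyy => ?_) ?_ hg
    · simp only [g, hloc s y y' hyy, htEstimator_congr hyy]
    · filter_upwards [hunb] with y hy
      simp_rw [g, mul_sub, sum_sub_distrib, hy, sum_mul_htEstimator hp1 hπ hπ0, sub_self]
  have hcross_int : Integrable
      (fun y => ∑ s, p s * g s y * (htEstimator m π s y - ∑ i, y i)) (Measure.pi μ) :=
    integrable_finsetSum _ fun s _ => (hg s).mul_of_top_left (hHT s)
  calc ∫ y, risk p (htEstimator m π) y ∂Measure.pi μ
      = ∫ y, risk p (htEstimator m π) y
          + 2 * ∑ s, p s * g s y * (htEstimator m π s y - ∑ i, y i) ∂Measure.pi μ := by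
        rw [integral_add (integrable_risk_htEstimator μ hbdd m π) (hcross_int.const_mul 2),
          integral_const_mul, hcross, mul_zero, add_zero]
    _ ≤ ∫ y, risk p δ y ∂Measure.pi μ := by
      refine integral_mono ?_ hint fun y => ?_
      · exact (integrable_risk_htEstimator μ hbdd m π).add (hcross_int.const_mul 2)
      simp only [risk, mul_sum, ← sum_add_distrib]
      refine sum_le_sum fun s _ => ?_
      nlinarith [mul_nonneg (hp0 s) (sq_nonneg (g s y))]

theorem lintegral_risk_htEstimator_le (hbdd : ∀ i, MemLp (fun x : ℝ => x) ∞ (μ i))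
    (hmean : ∀ i, ∫ x, x ∂μ i = m i) (hp0 : ∀ s, 0 ≤ p s) (hp1 : ∑ s, p s = 1)
    (hπ : ∀ i, π i = ∑ s, if i ∈ s then p s else 0) (hπ0 : ∀ i, π i ≠ 0)
    {δ : Finset (Fin N) → (Fin N → ℝ) → ℝ} (hδ : ∀ s, Measurable (δ s))
    (hloc : ∀ s (y y' : Fin N → ℝ), (∀ i ∈ s, y i = y' i) → δ s y = δ s y')
    (hunb : ∀ᵐ y ∂Measure.pi μ, ∑ s, p s * δ s y = ∑ i, y i) :
    ∫⁻ y, ENNReal.ofReal (risk p (htEstimator m π) y) ∂Measure.pi μ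
      ≤ ∫⁻ y, ENNReal.ofReal (risk p δ y) ∂Measure.pi μ := by
  by_cases htop : ∫⁻ y, ENNReal.ofReal (risk p δ y) ∂Measure.pi μ = ∞
  · exact htop ▸ le_top
  have hnn : ∀ δ', 0 ≤ᵐ[Measure.pi μ] risk p δ' := fun δ' => ae_of_all _ (risk_nonneg hp0 δ')
  have hint : Integrable (risk p δ) (Measure.pi μ) :=
    ⟨(by unfold risk; fun_prop : Measurable (risk p δ)).aestronglyMeasurable,
      (hasFiniteIntegral_iff_ofReal (hnn δ)).2 (lt_top_iff_ne_top.2 htop)⟩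
  rw [← ofReal_integral_eq_lintegral_ofReal (integrable_risk_htEstimator μ hbdd m π) (hnn _),
    ← ofReal_integral_eq_lintegral_ofReal hint (hnn δ)]
  exact ENNReal.ofReal_le_ofReal
    (integral_risk_htEstimator_le μ hbdd hmean hp0 hp1 hπ hπ0 hδ hloc hunb hint)

end ProductPrior

theorem HT_bayes_optimal_product_prior_general
    (N : ℕ) (a b : Fin N → ℝ)
    (m : Fin N → ℝ)
    (p : Finset (Fin N) → ℝ) (hp0 : ∀ s, 0 ≤ p s)
    (hp1 : ∑ s : Finset (Fin N), p s = 1)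
    (π : Fin N → ℝ)
    (hπ : ∀ i, π i = ∑ s : Finset (Fin N), if i ∈ s then p s else 0)
    (hπpos : ∀ i, 0 < π i)
    (μ : Fin N → Measure ℝ) [∀ i, IsProbabilityMeasure (μ i)]
    (hμsupp : ∀ i, μ i (Set.Icc (a i) (b i))ᶜ = 0)
    (hμmean : ∀ i, ∫ x, x ∂(μ i) = m i)
    (σ2 : Fin N → ℝ) (hσ2 : ∀ i, σ2 i = ∫ x, (x - m i) ^ 2 ∂(μ i))
    (δ : Finset (Fin N) → (Fin N → ℝ) → ℝ)
    (hmeas : ∀ s, Measurable (δ s))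
    (hloc : ∀ s (y y' : Fin N → ℝ), (∀ i ∈ s, y i = y' i) → δ s y = δ s y')
    (hunb : ∀ y : Fin N → ℝ, (∀ i, y i ∈ Set.Icc (a i) (b i)) →
      ∑ s : Finset (Fin N), p s * δ s y = ∑ i, y i) :
    (ENNReal.ofReal (∑ i, σ2 i * (1 / π i - 1)) ≤
      ∫⁻ y, ENNReal.ofReal
        (∑ s : Finset (Fin N), p s * (δ s y - ∑ i, y i) ^ 2)
        ∂(Measure.pi μ)) ∧
    (∫⁻ y, ENNReal.ofReal
        (∑ s : Finset (Fin N),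
          p s * (((∑ i, m i) + ∑ i ∈ s, (y i - m i) / π i) - ∑ i, y i) ^ 2)
        ∂(Measure.pi μ)
      = ENNReal.ofReal (∑ i, σ2 i * (1 / π i - 1))) := by
  have hbdd : ∀ i, MemLp (fun x : ℝ => x) ∞ (μ i) := fun i =>
    memLp_of_bounded (mem_ae_iff.2 (hμsupp i)) aestronglyMeasurable_id ∞
  have hπ0 : ∀ i, π i ≠ 0 := fun i => (hπpos i).ne'
  have hΘ : ∀ᵐ y ∂Measure.pi μ, ∀ i, y i ∈ Set.Icc (a i) (b i) :=
    ae_all_iff.2 fun i => mem_ae_iff.2 (Measure.pi_eval_preimage_null μ (hμsupp i))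
  have hHT : ∫⁻ y, ENNReal.ofReal (risk p (htEstimator m π) y) ∂Measure.pi μ
      = ENNReal.ofReal (∑ i, σ2 i * (1 / π i - 1)) := by
    rw [← ofReal_integral_eq_lintegral_ofReal (integrable_risk_htEstimator μ hbdd m π)
      (ae_of_all _ (risk_nonneg hp0 _)), integral_risk_htEstimator μ hbdd hμmean hp1 hπ hπ0]
    simp_rw [hσ2]
  exact ⟨hHT.symm.trans_le (lintegral_risk_htEstimator_le μ hbdd hμmean hp0 hp1 hπ hπ0 hmeas hloc
    (hΘ.mono fun y hy => hunb y hy)), hHT⟩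

/-- Bayes optimality of the midpoint-differenced
Horvitz–Thompson estimator under centered product priors. Let `μ = ⊗ μ i` be a
product probability measure on `Θ = ∏ [a i, b i]` whose factors have mean
`m i = (a i + b i)/2` and positive variance `σ2 i`. Then every (measurable)
unbiased estimator `δ` has Bayes risk
`∫ R(δ,p;y) dμ(y) ≥ ∑ i, σ2 i * (1/π i − 1)`, and the midpoint-differenced
Horvitz–Thompson estimator attains this bound with equality. (Integrals of the
nonnegative risks are taken as lower Lebesgue integrals.) -/
theorem HT_bayes_optimal_product_prior
    (N : ℕ) (a b : Fin N → ℝ) (hab : ∀ i, a i < b i)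
    (m : Fin N → ℝ) (hm : ∀ i, m i = (a i + b i) / 2)
    (p : Finset (Fin N) → ℝ) (hp0 : ∀ s, 0 ≤ p s)
    (hp1 : ∑ s : Finset (Fin N), p s = 1)
    (π : Fin N → ℝ)
    (hπ : ∀ i, π i = ∑ s : Finset (Fin N), if i ∈ s then p s else 0)
    (hπpos : ∀ i, 0 < π i)
    (μ : Fin N → Measure ℝ) [∀ i, IsProbabilityMeasure (μ i)]
    (hμsupp : ∀ i, μ i (Set.Icc (a i) (b i))ᶜ = 0)
    (hμmean : ∀ i, ∫ x, x ∂(μ i) = m i)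
    (σ2 : Fin N → ℝ) (hσ2 : ∀ i, σ2 i = ∫ x, (x - m i) ^ 2 ∂(μ i))
    (hσpos : ∀ i, 0 < σ2 i)
    (δ : Finset (Fin N) → (Fin N → ℝ) → ℝ)
    (hmeas : ∀ s, Measurable (δ s))
    (hloc : ∀ s (y y' : Fin N → ℝ), (∀ i ∈ s, y i = y' i) → δ s y = δ s y')
    (hunb : ∀ y : Fin N → ℝ, (∀ i, y i ∈ Set.Icc (a i) (b i)) →
      ∑ s : Finset (Fin N), p s * δ s y = ∑ i, y i) :
    (ENNReal.ofReal (∑ i, σ2 i * (1 / π i - 1)) ≤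
      ∫⁻ y, ENNReal.ofReal
        (∑ s : Finset (Fin N), p s * (δ s y - ∑ i, y i) ^ 2)
        ∂(Measure.pi μ)) ∧
    (∫⁻ y, ENNReal.ofReal
        (∑ s : Finset (Fin N),
          p s * (((∑ i, m i) + ∑ i ∈ s, (y i - m i) / π i) - ∑ i, y i) ^ 2)
        ∂(Measure.pi μ)
      = ENNReal.ofReal (∑ i, σ2 i * (1 / π i - 1))) :=
  HT_bayes_optimal_product_prior_general N a b m p hp0 hp1 π hπ hπpos μ hμsupp hμmean σ2 hσ2 δ hmeas
    hloc hunb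
end
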